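/- arXiv:2601.20775 — 5 statements merged into one kernel-verified Lean document; each statement's English description precedes it below -/
import Mathlib

section
/- Let dim ≥ 1 and let X be a finite set of n ≥ 1 points in ℝ^dim. Let H be the hypothesis class on X consisting of the all-zero classifier h₀ together with every classifier of the form x ↦ (s ≤ x_a ≤ t) for a coordinate a ∈ {1, …, dim} and reals s ≤ t (each such classifier is realized by a height-2 decision tree whose two internal nodes both query coordinate a). Then with r = 2 · n^{−1/dim}: |DIS_X(B_H(h₀, r))| ≥ (1 − 2^{−dim}) · n, and hence the disagreement coefficient of h₀ satisfies θ_{h₀} ≥ ((2^dim − 1)/2^{dim+1}) · n^{1/dim}. -/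
open scoped Classical

noncomputable section

/-- Distance between two hypotheses on the dataset `X`. -/
def hypDist {α : Type*} (X : Finset α) (h h' : α → Bool) : ℝ :=
  ((X.filter fun x => h x ≠ h' x).card : ℝ) / X.card

/-- Ball of radius `r` around `h` inside the class `H`. -/
def hypBall {α : Type*} (X : Finset α) (H : Set (α → Bool))
    (h : α → Bool) (r : ℝ) : Set (α → Bool) :=
  {h' ∈ H | hypDist X h h' ≤ r}

/-- Disagreement region (as a finite subset of `X`) of a set `V` of hypotheses. -/
def DIS {α : Type*} (X : Finset α) (V : Set (α → Bool)) : Finset α :=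
  X.filter fun x => ∃ h₁ ∈ V, ∃ h₂ ∈ V, h₁ x ≠ h₂ x

/-- The hypothesis class consisting of the all-zero classifier together with every
classifier of the form `x ↦ (s ≤ x_a ≤ t)` for a coordinate `a` and reals `s ≤ t`
(each realized by a height-2 decision tree querying coordinate `a` twice). -/
def intervalClass (dim : ℕ) : Set ((Fin dim → ℝ) → Bool) :=
  insert (fun _ => false)
    {h | ∃ (a : Fin dim) (s t : ℝ), s ≤ t ∧ h = fun x => decide (s ≤ x a ∧ x a ≤ t)}

/-- With `r = 2·n^{−1/dim}`, the disagreement region of `B_H(h₀, r)` for the interval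
class contains at least `(1 − 2^{−dim})·n` points; hence the disagreement coefficient
of the all-zero classifier is at least `((2^dim − 1)/2^{dim+1})·n^{1/dim}`. -/
theorem stmt13 (dim : ℕ) (hdim : 1 ≤ dim)
    (X : Finset (Fin dim → ℝ)) (hX : 1 ≤ X.card) :
    (1 - ((2 : ℝ) ^ dim)⁻¹) * X.card
      ≤ ((DIS X (hypBall X (intervalClass dim) (fun _ => false)
            (2 * (X.card : ℝ) ^ (-(1 / (dim : ℝ)))))).card : ℝ) ∧
    ((2 : ℝ) ^ dim - 1) / 2 ^ (dim + 1) * (X.card : ℝ) ^ (1 / (dim : ℝ))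
      ≤ ⨆ (r : ℝ) (_ : 0 < r),
          ((DIS X (hypBall X (intervalClass dim) (fun _ => false) r)).card : ℝ)
            / (r * X.card) := by
  classical
  have hdim0 : (dim : ℝ) ≠ 0 := Nat.cast_ne_zero.mpr (by omega)
  have hn0 : (0:ℝ) < (X.card : ℝ) := by exact_mod_cast hX
  set n : ℕ := X.card with hn
  set p : ℝ := (n : ℝ) ^ (1 / (dim : ℝ)) with hp
  have hppos : 0 < p := Real.rpow_pos_of_pos hn0 _
  have hpdim : p ^ dim = (n : ℝ) := by
    rw [hp, ← Real.rpow_natCast ((n:ℝ) ^ (1/(dim:ℝ))) dim, ← Real.rpow_mul hn0.le]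
    rw [one_div, inv_mul_cancel₀ hdim0, Real.rpow_one]
  have hρ : (n : ℝ) ^ (-(1 / (dim:ℝ))) = p⁻¹ := by
    rw [Real.rpow_neg hn0.le, hp]
  set r₀ : ℝ := 2 * (n:ℝ) ^ (-(1/(dim:ℝ))) with hr₀
  have hr₀' : r₀ = 2 * p⁻¹ := by rw [hr₀, hρ]
  have hr₀pos : 0 < r₀ := by rw [hr₀']; positivity
  set h₀ : (Fin dim → ℝ) → Bool := fun _ => false with hh₀
  have hball0 : ∀ r : ℝ, 0 ≤ r → h₀ ∈ hypBall X (intervalClass dim) h₀ r := by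
    intro r hr
    refine ⟨Set.mem_insert _ _, ?_⟩
    have : hypDist X h₀ h₀ = 0 := by simp [hypDist, hh₀]
    rw [this]; exact hr
  set D : Finset (Fin dim → ℝ) := DIS X (hypBall X (intervalClass dim) h₀ r₀) with hD
  have hDsub : D ⊆ X := Finset.filter_subset _ _
  -- Step A: small fiber in some coordinate ⇒ in disagreement region
  have stepA : ∀ x ∈ X, ∀ a : Fin dim,
      ((X.filter fun y => y a = x a).card : ℝ) ≤ r₀ * n → x ∈ D := by
    intro x hx a hcard
    set h : (Fin dim → ℝ) → Bool := fun y => decide (x a ≤ y a ∧ y a ≤ x a) with hh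
    have hmem : h ∈ intervalClass dim :=
      Set.mem_insert_of_mem _ ⟨a, x a, x a, le_refl _, rfl⟩
    have hfilter : (X.filter fun y => h₀ y ≠ h y) = X.filter fun y => y a = x a := by
      apply Finset.filter_congr
      intro y _
      simp only [hh, hh₀, ne_eq, Bool.false_eq, eq_comm (a := false), Bool.not_eq_false,
        decide_eq_true_eq]
      constructor
      · rintro ⟨h1, h2⟩; exact le_antisymm h2 h1
      · intro he; exact ⟨le_of_eq he.symm, le_of_eq he⟩
    have hdist : hypDist X h₀ h ≤ r₀ := by
      rw [hypDist, hfilter, div_le_iff₀ hn0]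
      calc ((X.filter fun y => y a = x a).card : ℝ) ≤ r₀ * n := hcard
        _ = r₀ * X.card := by rw [hn]
    refine Finset.mem_filter.mpr ⟨hx, h₀, hball0 r₀ hr₀pos.le, h, ⟨hmem, hdist⟩, ?_⟩
    simp [hh, hh₀]
  set B : Finset (Fin dim → ℝ) := X \ D with hB
  have stepB : ∀ x ∈ B, ∀ a, r₀ * n < ((X.filter fun y => y a = x a).card : ℝ) := by
    intro x hx a
    by_contra hle
    push_neg at hle
    exact (Finset.mem_sdiff.mp hx).2 (stepA x (Finset.mem_sdiff.mp hx).1 a hle)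
  -- Step D : each coordinate image of B is small
  have stepD : ∀ a : Fin dim, ((B.image fun x => x a).card : ℝ) ≤ p / 2 := by
    intro a
    set V := B.image fun x => x a with hV
    have hdisj : ∀ u ∈ V, ∀ v ∈ V, u ≠ v →
        Disjoint (X.filter fun y => y a = u) (X.filter fun y => y a = v) := by
      intro u _ v _ huv
      refine Finset.disjoint_left.mpr ?_
      intro y hy hy'
      exact huv ((Finset.mem_filter.mp hy).2 ▸ (Finset.mem_filter.mp hy').2 ▸ rfl)
    have hsumN : ∑ v ∈ V, (X.filter fun y => y a = v).card ≤ n := by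
      rw [← Finset.card_biUnion hdisj]
      exact Finset.card_le_card
        (Finset.biUnion_subset.mpr fun v _ => Finset.filter_subset _ _)
    have hsum : ∑ v ∈ V, ((X.filter fun y => y a = v).card : ℝ) ≤ (n : ℝ) := by
      exact_mod_cast hsumN
    have hlow : (V.card : ℝ) * (r₀ * n) ≤ ∑ v ∈ V, ((X.filter fun y => y a = v).card : ℝ) := by
      have : ∀ v ∈ V, r₀ * n ≤ ((X.filter fun y => y a = v).card : ℝ) := by
        intro v hv
        obtain ⟨x, hx, rfl⟩ := Finset.mem_image.mp hv
        exact (stepB x hx a).le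
      calc (V.card : ℝ) * (r₀ * n) = ∑ _v ∈ V, r₀ * n := by
            rw [Finset.sum_const, nsmul_eq_mul]
        _ ≤ _ := Finset.sum_le_sum this
    have hsum' : (V.card : ℝ) * (r₀ * n) ≤ n := hlow.trans hsum
    -- r₀ * n = 2 p⁻¹ * p^dim ; V.card ≤ n/(r₀ n) = 1/r₀ = p/2
    have hrn : r₀ * n > 0 := by positivity
    rw [← le_div_iff₀ hrn] at hsum'
    refine hsum'.trans (le_of_eq ?_)
    rw [hr₀']
    field_simp
  -- B is contained in the product of its coordinate images
  have hBsub : B ⊆ Fintype.piFinset fun a => B.image fun x => x a := by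
    intro x hx
    rw [Fintype.mem_piFinset]
    exact fun a => Finset.mem_image_of_mem _ hx
  have hBcard : (B.card : ℝ) ≤ (n : ℝ) / 2 ^ dim := by
    have h1 : (B.card : ℝ) ≤ ∏ a, ((B.image fun x => x a).card : ℝ) := by
      have h := Finset.card_le_card hBsub
      rw [Fintype.card_piFinset] at h
      exact_mod_cast h
    have h2 : ∏ a, ((B.image fun x => x a).card : ℝ) ≤ ∏ _a : Fin dim, (p/2) :=
      Finset.prod_le_prod (fun a _ => by positivity) (fun a _ => stepD a)
    rw [Finset.prod_const, Finset.card_univ, Fintype.card_fin] at h2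
    have h3 : (p/2)^dim = (n:ℝ)/2^dim := by rw [div_pow, hpdim]
    linarith [h1.trans h2]
  have hDcard : (n : ℝ) - (n:ℝ)/2^dim ≤ (D.card : ℝ) := by
    have hcd : B.card = n - D.card := Finset.card_sdiff_of_subset hDsub
    have hdn : D.card ≤ n := Finset.card_le_card hDsub
    have : (B.card : ℝ) = (n : ℝ) - D.card := by
      rw [hcd]; push_cast [hdn]; ring
    linarith
  have goal1 : (1 - ((2 : ℝ) ^ dim)⁻¹) * n ≤ (D.card : ℝ) := by
    have : (1 - ((2 : ℝ) ^ dim)⁻¹) * n = (n:ℝ) - (n:ℝ)/2^dim := by ring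
    linarith
  refine ⟨goal1, ?_⟩
  -- second goal
  set F : ℝ → ℝ := fun r =>
    ((DIS X (hypBall X (intervalClass dim) h₀ r)).card : ℝ) / (r * n) with hF
  have hFle : ∀ r : ℝ, 0 < r → F r ≤ (n : ℝ) := by
    intro r hr
    rcases le_or_gt (1 / (n:ℝ)) r with hcase | hcase
    · have hd : ((DIS X (hypBall X (intervalClass dim) h₀ r)).card : ℝ) ≤ n := by
        exact_mod_cast Finset.card_le_card (Finset.filter_subset _ _)
      rw [hF, div_le_iff₀ (by positivity)]
      have h1 : (1:ℝ) ≤ r * n := by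
        rw [div_le_iff₀ hn0] at hcase; linarith
      nlinarith [hd, hn0]
    · have hkey : ∀ h' ∈ hypBall X (intervalClass dim) h₀ r, ∀ x ∈ X, h' x = false := by
        rintro h' ⟨_, hdle⟩ x hx
        rw [hypDist, div_le_iff₀ hn0] at hdle
        have hrn1 : r * (n:ℝ) < 1 := by
          rw [lt_div_iff₀ hn0] at hcase; linarith
        have hlt : ((X.filter fun y => h₀ y ≠ h' y).card : ℝ) < 1 := by
          calc ((X.filter fun y => h₀ y ≠ h' y).card : ℝ) ≤ r * X.card := hdle
            _ = r * n := by rw [hn]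
            _ < 1 := hrn1
        have h0 : (X.filter fun y => h₀ y ≠ h' y).card = 0 :=
          Nat.lt_one_iff.mp (by exact_mod_cast hlt)
        have hx' : x ∉ (X.filter fun y => h₀ y ≠ h' y) := by
          rw [Finset.card_eq_zero.mp h0]; exact Finset.notMem_empty x
        by_contra hne
        exact hx' (Finset.mem_filter.mpr ⟨hx, by simp [hh₀, hne]⟩)
      have hempty : DIS X (hypBall X (intervalClass dim) h₀ r) = ∅ := by
        rw [DIS, Finset.filter_eq_empty_iff]
        rintro x hx ⟨h₁, hb1, h₂, hb2, hne⟩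
        exact hne ((hkey h₁ hb1 x hx).trans (hkey h₂ hb2 x hx).symm)
      rw [hF]
      simp only [hempty, Finset.card_empty, Nat.cast_zero, zero_div]
      exact hn0.le
  have hbdd : BddAbove (Set.range fun r : ℝ => ⨆ _ : 0 < r, F r) := by
    refine ⟨(n:ℝ), ?_⟩
    rintro _ ⟨r, rfl⟩
    show (⨆ _ : 0 < r, F r) ≤ (n : ℝ)
    by_cases hr : 0 < r
    · rw [ciSup_pos hr]; exact hFle r hr
    · haveI : IsEmpty (0 < r) := ⟨hr⟩
      rw [Real.iSup_of_isEmpty]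
      exact hn0.le
  have hstep : F r₀ ≤ ⨆ (r : ℝ) (_ : 0 < r), F r := by
    have h := le_ciSup hbdd r₀
    rwa [ciSup_pos hr₀pos] at h
  refine le_trans ?_ hstep
  rw [hF, le_div_iff₀ (by positivity)]
  have heq : ((2:ℝ)^dim - 1)/2^(dim+1) * p * (r₀ * n) = (1 - ((2:ℝ)^dim)⁻¹) * n := by
    rw [hr₀']
    have h2 : (2:ℝ)^dim ≠ 0 := by positivity
    field_simp
    ring
  rw [heq]
  exact goal1

end
end

section
/- Let n ≥ 1 and dim ≥ 2 be integers, and let X = {X_i = (i, i, …, i) ∈ ℝ^dim : i = 1, …, n} be the diagonal dataset of n points. Let H be the hypothesis class on X consisting of the all-zero classifier h₀ together with, for each c ∈ {1, …, n}, the classifier h_c(x) = (c ≤ x₁ ∧ x₂ < c + 1) (each h_c is realized by a height-2 decision tree whose two internal nodes query distinct dimensions). Then each h_c lies in B_H(h₀, 1/n), DIS_X(B_H(h₀, 1/n)) = X, and hence the disagreement coefficient of h₀ satisfies θ_{h₀} ≥ n. -/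
open scoped Classical

noncomputable section

/-- The diagonal dataset `X_i = (i, i, …, i)` for `i = 1, …, n`. -/
def diagX (n dim : ℕ) : Finset (Fin dim → ℝ) :=
  (Finset.Icc 1 n).image fun i => fun _ => (i : ℝ)

/-- The classifier `h_c(x) = (c ≤ x₁ ∧ x₂ < c + 1)`, realized by a height-2 decision
tree whose two internal nodes query distinct dimensions. -/
def hC (dim : ℕ) (hdim : 2 ≤ dim) (c : ℕ) : (Fin dim → ℝ) → Bool :=
  fun x => decide ((c : ℝ) ≤ x ⟨0, by omega⟩ ∧ x ⟨1, by omega⟩ < (c : ℝ) + 1)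

/-- The hypothesis class: the all-zero classifier together with `h_c` for
`c ∈ {1, …, n}`. -/
def Hdiag (n dim : ℕ) (hdim : 2 ≤ dim) : Set ((Fin dim → ℝ) → Bool) :=
  insert (fun _ => false) {h | ∃ c ∈ Finset.Icc 1 n, h = hC dim hdim c}

/-!
Every `h_c` disagrees with `h₀` exactly at the diagonal point `X_c`, so all of them lie at
distance `1/n` from `h₀`. Hence the ball of radius `1/n` already disagrees on all of `X`, giving
the ratio `n / ((1/n) · n) = n`; and since no hypothesis other than `h₀` is closer than `1/n`,
every ratio is at most `n`: the supremum defining `θ_{h₀}` is bounded (a real `⨆` of an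
unbounded family would be `0`), hence at least `n`.
-/

section Disagreement

variable {α : Type*} (X : Finset α) (H : Set (α → Bool)) (h : α → Bool)

def disagreementCoeff : ℝ :=
  ⨆ (r : ℝ) (_ : 0 < r), ((DIS X (hypBall X H h r)).card : ℝ) / (r * X.card)

@[simp]
lemma hypDist_self : hypDist X h h = 0 := by
  simp [hypDist]

variable {X H h}

lemma self_mem_hypBall (hH : h ∈ H) {r : ℝ} (hr : 0 ≤ r) : h ∈ hypBall X H h r :=
  ⟨hH, by rwa [hypDist_self]⟩

lemma DIS_eq_empty_of_subsingleton {V : Set (α → Bool)} (hV : V.Subsingleton) :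
    DIS X V = ∅ :=
  Finset.filter_false_of_mem fun _ _ ⟨_, h₁, _, h₂, hne⟩ => hne (by rw [hV h₁ h₂])

lemma hypBall_subsingleton_of_separated {ε r : ℝ}
    (hsep : ∀ h' ∈ H, h' = h ∨ ε ≤ hypDist X h h') (hr : r < ε) :
    (hypBall X H h r).Subsingleton := by
  have hball : ∀ h' ∈ hypBall X H h r, h' = h := fun h' ⟨hH, hd⟩ =>
    (hsep h' hH).resolve_right fun hε => by linarith
  exact fun h₁ hm₁ h₂ hm₂ => (hball h₁ hm₁).trans (hball h₂ hm₂).symm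

lemma card_DIS_hypBall_div_le_of_separated {ε r : ℝ}
    (hsep : ∀ h' ∈ H, h' = h ∨ ε ≤ hypDist X h h') (hε : 0 < ε) (hr : 0 < r) :
    ((DIS X (hypBall X H h r)).card : ℝ) / (r * X.card) ≤ 1 / ε := by
  rcases lt_or_ge r ε with hrε | hεr
  · rw [DIS_eq_empty_of_subsingleton (hypBall_subsingleton_of_separated hsep hrε)]
    simp [hε.le]
  · refine div_le_of_le_mul₀ (by positivity) (by positivity) ?_
    calc ((DIS X (hypBall X H h r)).card : ℝ)
        ≤ X.card := by exact_mod_cast Finset.card_filter_le _ _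
      _ ≤ r / ε * X.card := le_mul_of_one_le_left (by positivity) ((one_le_div hε).2 hεr)
      _ = 1 / ε * (r * X.card) := by ring

lemma le_iSup_pos_of_le {f : ℝ → ℝ} {B : ℝ} (hB : ∀ r, 0 < r → f r ≤ B) (hB₀ : 0 ≤ B)
    {r₀ : ℝ} (hr₀ : 0 < r₀) : f r₀ ≤ ⨆ (r : ℝ) (_ : 0 < r), f r := by
  have hbdd : BddAbove (Set.range fun r => ⨆ _ : 0 < r, f r) := by
    refine ⟨B, Set.forall_mem_range.2 fun r => ?_⟩
    by_cases hr : 0 < r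
    · simpa [ciSup_pos hr] using hB r hr
    · simpa [hr] using hB₀
  exact le_ciSup_of_le hbdd r₀ (by rw [ciSup_pos hr₀])

lemma card_DIS_hypBall_div_le_disagreementCoeff {ε r : ℝ}
    (hsep : ∀ h' ∈ H, h' = h ∨ ε ≤ hypDist X h h') (hε : 0 < ε) (hr : 0 < r) :
    ((DIS X (hypBall X H h r)).card : ℝ) / (r * X.card) ≤ disagreementCoeff X H h :=
  le_iSup_pos_of_le (fun _ => card_DIS_hypBall_div_le_of_separated hsep hε)
    (by positivity) hr

end Disagreement

section Diagonal

variable {n dim : ℕ}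

/-- `diagX` elaborates with `Finset.Icc 1 n` coerced to a `Finset ℝ`; this is the intended form. -/
lemma diagX_eq_image :
    diagX n dim = (Finset.Icc 1 n).image fun (i : ℕ) (_ : Fin dim) => (i : ℝ) := by
  ext x
  simp [diagX]

lemma card_diagX (hdim : 0 < dim) : (diagX n dim).card = n := by
  rw [diagX_eq_image, Finset.card_image_of_injective _ fun i j hij => by
    simpa using congrFun hij ⟨0, hdim⟩]
  simp

lemma hC_apply_diag (hdim : 2 ≤ dim) (c i : ℕ) :
    hC dim hdim c (fun _ => (i : ℝ)) = decide (i = c) := by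
  rw [hC, decide_eq_decide, ← Nat.cast_add_one, Nat.cast_le, Nat.cast_lt]
  omega

lemma filter_ne_hC_diagX (hdim : 2 ≤ dim) {c : ℕ} (hc : c ∈ Finset.Icc 1 n) :
    (diagX n dim).filter (fun x => false ≠ hC dim hdim c x) = {fun _ => (c : ℝ)} := by
  ext x
  simp only [diagX_eq_image, Finset.mem_filter, Finset.mem_image, Finset.mem_singleton]
  constructor
  · rintro ⟨⟨i, -, rfl⟩, hne⟩
    simp_all [hC_apply_diag]
  · rintro rfl
    exact ⟨⟨c, hc, rfl⟩, by simp [hC_apply_diag]⟩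

lemma hypDist_hC (hdim : 2 ≤ dim) {c : ℕ} (hc : c ∈ Finset.Icc 1 n) :
    hypDist (diagX n dim) (fun _ => false) (hC dim hdim c) = 1 / n := by
  rw [hypDist, filter_ne_hC_diagX hdim hc, card_diagX (by omega)]
  simp

lemma Hdiag_separated (hdim : 2 ≤ dim) :
    ∀ h' ∈ Hdiag n dim hdim,
      h' = (fun _ => false) ∨ 1 / (n : ℝ) ≤ hypDist (diagX n dim) (fun _ => false) h' := by
  rintro h' (rfl | ⟨c, hc, rfl⟩)
  · exact Or.inl rfl
  · exact Or.inr (hypDist_hC hdim hc).ge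

lemma hC_mem_hypBall (hdim : 2 ≤ dim) {c : ℕ} (hc : c ∈ Finset.Icc 1 n) :
    hC dim hdim c ∈ hypBall (diagX n dim) (Hdiag n dim hdim) (fun _ => false) (1 / (n : ℝ)) :=
  ⟨Or.inr ⟨c, hc, rfl⟩, (hypDist_hC hdim hc).le⟩

lemma DIS_hypBall_diagX (hdim : 2 ≤ dim) :
    DIS (diagX n dim) (hypBall (diagX n dim) (Hdiag n dim hdim) (fun _ => false) (1 / (n : ℝ)))
      = diagX n dim := by
  refine Finset.filter_true_of_mem fun x hx => ?_
  obtain ⟨i, hi, rfl⟩ := Finset.mem_image.1 (diagX_eq_image ▸ hx)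
  exact ⟨_, self_mem_hypBall (Set.mem_insert _ _) (by positivity), _, hC_mem_hypBall hdim hi,
    by simp [hC_apply_diag]⟩

end Diagonal

theorem stmt14_general (n dim : ℕ) (hdim : 2 ≤ dim) :
    (∀ c ∈ Finset.Icc 1 n,
      hC dim hdim c ∈
        hypBall (diagX n dim) (Hdiag n dim hdim) (fun _ => false) (1 / (n : ℝ))) ∧
    DIS (diagX n dim)
        (hypBall (diagX n dim) (Hdiag n dim hdim) (fun _ => false) (1 / (n : ℝ)))
      = diagX n dim ∧
    (n : ℝ) ≤ ⨆ (r : ℝ) (_ : 0 < r),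
        ((DIS (diagX n dim)
            (hypBall (diagX n dim) (Hdiag n dim hdim) (fun _ => false) r)).card : ℝ)
          / (r * (diagX n dim).card) := by
  refine ⟨fun c => hC_mem_hypBall hdim, DIS_hypBall_diagX hdim, ?_⟩
  rcases n.eq_zero_or_pos with rfl | hn
  · simp [diagX]
  have hn' : (0 : ℝ) < n := by exact_mod_cast hn
  have hratio := card_DIS_hypBall_div_le_disagreementCoeff (Hdiag_separated hdim)
    (one_div_pos.2 hn') (one_div_pos.2 hn')
  rw [DIS_hypBall_diagX hdim, card_diagX (by omega)] at hratio
  calc (n : ℝ) = n / (1 / n * n) := by field_simp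
    _ ≤ _ := hratio

/-- On the diagonal dataset, each `h_c` lies in `B_H(h₀, 1/n)`, the disagreement
region of `B_H(h₀, 1/n)` is all of `X`, and hence the disagreement coefficient of
the all-zero classifier is at least `n`. -/
theorem stmt14 (n dim : ℕ) (hn : 1 ≤ n) (hdim : 2 ≤ dim) :
    (∀ c ∈ Finset.Icc 1 n,
      hC dim hdim c ∈
        hypBall (diagX n dim) (Hdiag n dim hdim) (fun _ => false) (1 / (n : ℝ))) ∧
    DIS (diagX n dim)
        (hypBall (diagX n dim) (Hdiag n dim hdim) (fun _ => false) (1 / (n : ℝ)))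
      = diagX n dim ∧
    (n : ℝ) ≤ ⨆ (r : ℝ) (_ : 0 < r),
        ((DIS (diagX n dim)
            (hypBall (diagX n dim) (Hdiag n dim hdim) (fun _ => false) r)).card : ℝ)
          / (r * (diagX n dim).card) :=
  stmt14_general n dim hdim

end
end

section
/- Let d ≥ 1, dim ≥ 1, w ≥ 2 be integers, let w₁, …, w_{dim} be positive integers with each w_a ≤ w, and let X = {(x₁, …, x_{dim}) : x_a ∈ ℕ, 1 ≤ x_a ≤ w_a for all a} be the grid of n = ∏_a w_a points. Fix a subset d' ⊆ {1, …, dim} with |d'| ≤ d, and let ℒ_{d'} be the class of all line-tree (corner-box) classifiers with dimension set d': such a classifier is given by a label l ∈ Bool, a direction map f : d' → {prefix, suffix}, and integer thresholds t_a for a ∈ d', and assigns label l to x exactly when for every a ∈ d' one has x_a ≤ t_a (if f(a) = prefix) or x_a ≥ t_a (if f(a) = suffix), and the opposite label otherwise. Let h₀ be the classifier assigning 0 to every point of X. Then for every r > 0: |DIS_X(B_{ℒ_{d'}}(h₀, r))| ≤ 2^d · (d + (1 + ln w)^d) · n · r. In particular, the disagreement coefficient of h₀ within ℒ_{d'} is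 at most 2^d(d + (1 + ln w)^d), which is O((3 ln w)^d) for d ≥ 2 and w ≥ 8. -/
open scoped Classical

noncomputable section

/-- The grid `{(x₁, …, x_dim) : 1 ≤ x_a ≤ w_a}` of `∏ w_a` points. -/
def gridX (dim : ℕ) (w : Fin dim → ℕ) : Finset (Fin dim → ℕ) :=
  Finset.Icc (fun _ => 1) w

/-- The class of line-tree (corner-box) classifiers with dimension set `d'`: given a
label `l`, a direction map `f` (`true` = prefix, `false` = suffix) and integer
thresholds `t`, the classifier assigns `l` to `x` exactly when for every `a ∈ d'`
one has `x_a ≤ t_a` (prefix) or `x_a ≥ t_a` (suffix), and `!l` otherwise. -/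
def lineTreeClass (dim : ℕ) (d' : Finset (Fin dim)) : Set ((Fin dim → ℕ) → Bool) :=
  {h | ∃ (l : Bool) (f : Fin dim → Bool) (t : Fin dim → ℤ),
    h = fun x =>
      if ∀ a ∈ d', (if f a then ((x a : ℤ) ≤ t a) else (t a ≤ (x a : ℤ)))
      then l else !l}

/-! ### Auxiliary lemmas -/

/-- Number of grid points in coordinate-interval on one side of `v` inside `[1, W]`. -/
def sideCount (b : Bool) (W v : ℕ) : ℕ := if b then v else W + 1 - v

lemma one_le_sideCount {b : Bool} {W v : ℕ} (h1 : 1 ≤ v) (h2 : v ≤ W) : 1 ≤ sideCount b W v := by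
  cases b <;> simp [sideCount] <;> omega

lemma gridX_eq_piFinset (dim : ℕ) (wv : Fin dim → ℕ) :
    gridX dim wv = Fintype.piFinset (fun a => Finset.Icc 1 (wv a)) := by
  ext x
  simp [gridX, Finset.mem_Icc, Fintype.mem_piFinset, Pi.le_def, forall_and]

lemma mem_gridX {dim : ℕ} {wv : Fin dim → ℕ} {x : Fin dim → ℕ} :
    x ∈ gridX dim wv ↔ ∀ a, 1 ≤ x a ∧ x a ≤ wv a := by
  simp [gridX_eq_piFinset, Fintype.mem_piFinset, Finset.mem_Icc]

lemma gridX_card (dim : ℕ) (wv : Fin dim → ℕ) :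
    (gridX dim wv).card = ∏ a, wv a := by
  rw [gridX, Pi.card_Icc]
  simp [Nat.card_Icc]

lemma master {dim : ℕ} (wv : Fin dim → ℕ) (p : (Fin dim → ℕ) → Prop) [DecidablePred p]
    (c : Fin dim → ℕ → ℝ) (C : ℝ) (hC : 0 ≤ C) (hc : ∀ a v, 0 ≤ c a v)
    (hp : ∀ x ∈ gridX dim wv, p x → 1 ≤ C * ∏ a, c a (x a)) :
    (((gridX dim wv).filter p).card : ℝ) ≤ C * ∏ a, ∑ v ∈ Finset.Icc 1 (wv a), c a v := by
  have h1 : (((gridX dim wv).filter p).card : ℝ) = ∑ x ∈ (gridX dim wv).filter p, 1 := by simp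
  rw [h1]
  calc ∑ x ∈ (gridX dim wv).filter p, (1:ℝ)
      ≤ ∑ x ∈ (gridX dim wv).filter p, C * ∏ a, c a (x a) := by
        apply Finset.sum_le_sum; intro x hx
        exact hp x (Finset.mem_of_mem_filter x hx) ((Finset.mem_filter.mp hx).2)
    _ ≤ ∑ x ∈ gridX dim wv, C * ∏ a, c a (x a) := by
        apply Finset.sum_le_sum_of_subset_of_nonneg (Finset.filter_subset _ _)
        intro x _ _
        exact mul_nonneg hC (Finset.prod_nonneg fun a _ => hc a (x a))
    _ = C * ∑ x ∈ gridX dim wv, ∏ a, c a (x a) := by rw [Finset.mul_sum]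
    _ = C * ∏ a, ∑ v ∈ Finset.Icc 1 (wv a), c a v := by
        rw [gridX_eq_piFinset, ← Finset.prod_univ_sum]

lemma card_filter_grid {dim : ℕ} (wv : Fin dim → ℕ) (p : (Fin dim → ℕ) → Prop)
    [DecidablePred p] (q : Fin dim → ℕ → Prop) [∀ a, DecidablePred (q a)]
    (hpq : ∀ x, p x ↔ ∀ a, q a (x a)) :
    ((gridX dim wv).filter p).card
      = ∏ a, ((Finset.Icc 1 (wv a)).filter (q a)).card := by
  rw [← Fintype.card_piFinset]
  congr 1
  ext x
  simp only [gridX_eq_piFinset, Finset.mem_filter, Fintype.mem_piFinset, hpq, forall_and]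

lemma sum_inv_sideCount_le {W w : ℕ} (b : Bool) (hW1 : 1 ≤ W) (hWw : W ≤ w) :
    ∑ v ∈ Finset.Icc 1 W, ((sideCount b W v : ℝ))⁻¹ ≤ 1 + Real.log w := by
  have hid : ∑ v ∈ Finset.Icc 1 W, ((sideCount b W v : ℝ))⁻¹
      = ∑ v ∈ Finset.Icc 1 W, ((v:ℝ))⁻¹ := by
    cases b with
    | true => simp [sideCount]
    | false =>
        apply Finset.sum_nbij' (fun v => W + 1 - v) (fun v => W + 1 - v)
        · intro a ha; simp only [Finset.mem_Icc] at *; omega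
        · intro a ha; simp only [Finset.mem_Icc] at *; omega
        · intro a ha; simp only [Finset.mem_Icc] at *; omega
        · intro a ha; simp only [Finset.mem_Icc] at *; omega
        · intro a ha
          simp [sideCount]
  rw [hid]
  have h2 : ∑ v ∈ Finset.Icc 1 W, ((v:ℝ))⁻¹ = ((harmonic W : ℚ) : ℝ) := by
    rw [harmonic_eq_sum_Icc]; push_cast; rfl
  rw [h2]
  calc ((harmonic W : ℚ) : ℝ) ≤ 1 + Real.log W := harmonic_le_one_add_log W
    _ ≤ 1 + Real.log w := by
        have : Real.log W ≤ Real.log w :=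
          Real.log_le_log (by exact_mod_cast hW1) (by exact_mod_cast hWw)
        linarith

lemma card_filter_sideCount_le {W : ℕ} {c : ℝ} (hc : 0 ≤ c) (b : Bool) :
    (((Finset.Icc 1 W).filter (fun v => (sideCount b W v : ℝ) ≤ c)).card : ℝ) ≤ c := by
  have hsub : ((Finset.Icc 1 W).filter (fun v => (sideCount b W v : ℝ) ≤ c)).card
      ≤ (Finset.Icc 1 (Nat.floor c)).card := by
    apply Finset.card_le_card_of_injOn (fun v => sideCount b W v)
    · intro v hv
      simp only [Finset.mem_coe, Finset.mem_filter, Finset.mem_Icc] at hv ⊢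
      obtain ⟨⟨h1, h2⟩, h3⟩ := hv
      refine ⟨?_, Nat.le_floor h3⟩
      cases b <;> simp [sideCount] <;> omega
    · intro v1 h1 v2 h2 he
      simp only [Finset.coe_filter, Set.mem_setOf_eq, Finset.mem_Icc] at h1 h2
      cases b <;> simp [sideCount] at he <;> omega
  calc (((Finset.Icc 1 W).filter (fun v => (sideCount b W v : ℝ) ≤ c)).card : ℝ)
      ≤ ((Finset.Icc 1 (Nat.floor c)).card : ℝ) := by exact_mod_cast hsub
    _ = (Nat.floor c : ℝ) := by simp [Nat.card_Icc]
    _ ≤ c := Nat.floor_le hc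

lemma prod_ite_split {M : Type*} [CommMonoid M] {ι : Type*} [Fintype ι] [DecidableEq ι]
    (s : Finset ι) (A B : ι → M) :
    ∏ a, (if a ∈ s then A a else B a)
      = (∏ a ∈ s, A a) * ∏ a ∈ Finset.univ \ s, B a := by
  rw [← Finset.prod_sdiff (Finset.subset_univ s), mul_comm]
  congr 1
  · exact Finset.prod_congr rfl (fun a ha => by simp [ha])
  · apply Finset.prod_congr rfl
    intro a ha
    simp only [Finset.mem_sdiff] at ha
    simp [ha.2]

lemma box_card {dim : ℕ} (wv : Fin dim → ℕ) (d' : Finset (Fin dim)) (f : Fin dim → Bool)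
    (x : Fin dim → ℕ) (hx : ∀ a, 1 ≤ x a ∧ x a ≤ wv a) :
    ((gridX dim wv).filter
        (fun y => ∀ a, a ∈ d' → (if f a then y a ≤ x a else x a ≤ y a))).card
      = ∏ a, (if a ∈ d' then sideCount (f a) (wv a) (x a) else wv a) := by
  rw [card_filter_grid wv (fun y => ∀ a ∈ d', (if f a then y a ≤ x a else x a ≤ y a))
    (fun a v => a ∈ d' → (if f a then v ≤ x a else x a ≤ v)) (fun y => Iff.rfl)]
  apply Finset.prod_congr rfl
  intro a _
  have hxa := hx a
  by_cases ha : a ∈ d'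
  · rcases Bool.eq_false_or_eq_true (f a) with hfa | hfa
    · have he : (Finset.Icc 1 (wv a)).filter
            (fun v => a ∈ d' → if f a then v ≤ x a else x a ≤ v)
          = Finset.Icc 1 (x a) := by
        ext v
        simp only [Finset.mem_filter, Finset.mem_Icc, ha, hfa, true_implies, if_true]
        omega
      rw [he, Nat.card_Icc]
      simp [ha, hfa, sideCount]
    · have he : (Finset.Icc 1 (wv a)).filter
            (fun v => a ∈ d' → if f a then v ≤ x a else x a ≤ v)
          = Finset.Icc (x a) (wv a) := by
        ext v
        simp only [Finset.mem_filter, Finset.mem_Icc, ha, hfa, true_implies,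
          Bool.false_eq_true, if_false]
        omega
      rw [he, Nat.card_Icc]
      simp [ha, hfa, sideCount]
  · have he : (Finset.Icc 1 (wv a)).filter
        (fun v => a ∈ d' → if f a then v ≤ x a else x a ≤ v)
        = Finset.Icc 1 (wv a) := by
      ext v
      simp [ha]
    rw [he, Nat.card_Icc]
    simp [ha]

/-! ### Main theorem -/

/-- For the all-zero classifier `h₀` on the grid and any dimension set `d'` with
`|d'| ≤ d`, the disagreement region of `B_{ℒ_{d'}}(h₀, r)` has size at most
`2^d·(d + (1 + ln w)^d)·n·r`; in particular the disagreement coefficient of `h₀`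
within `ℒ_{d'}` is at most `2^d·(d + (1 + ln w)^d)`. -/
theorem stmt15 (d dim w : ℕ) (hd : 1 ≤ d) (hdim : 1 ≤ dim) (hw : 2 ≤ w)
    (wv : Fin dim → ℕ) (hwv : ∀ a, 1 ≤ wv a ∧ wv a ≤ w)
    (d' : Finset (Fin dim)) (hd' : d'.card ≤ d) :
    (∀ r : ℝ, 0 < r →
      ((DIS (gridX dim wv)
          (hypBall (gridX dim wv) (lineTreeClass dim d') (fun _ => false) r)).card : ℝ)
        ≤ 2 ^ d * ((d : ℝ) + (1 + Real.log w) ^ d) * (gridX dim wv).card * r) ∧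
    (⨆ (r : ℝ) (_ : 0 < r),
        ((DIS (gridX dim wv)
            (hypBall (gridX dim wv) (lineTreeClass dim d') (fun _ => false) r)).card : ℝ)
          / (r * (gridX dim wv).card))
      ≤ 2 ^ d * ((d : ℝ) + (1 + Real.log w) ^ d) := by
  have hwv1 : ∀ a, 1 ≤ wv a := fun a => (hwv a).1
  have hcard : (gridX dim wv).card = ∏ a, wv a := gridX_card dim wv
  have hnpos : 0 < ((gridX dim wv).card : ℝ) := by
    rw [hcard]
    push_cast
    exact Finset.prod_pos (fun a _ => by exact_mod_cast hwv1 a)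
  have hH1 : (1:ℝ) ≤ 1 + Real.log w := by
    have : (0:ℝ) ≤ Real.log w := Real.log_nonneg (by exact_mod_cast Nat.one_le_of_lt hw)
    linarith
  have hC0 : (0:ℝ) ≤ 2 ^ d * ((d : ℝ) + (1 + Real.log w) ^ d) := by
    have h1 : (0:ℝ) ≤ (1 + Real.log w) ^ d := pow_nonneg (by linarith) d
    have h2 : (0:ℝ) ≤ (d:ℝ) := Nat.cast_nonneg d
    positivity
  have key : ∀ r : ℝ, 0 < r →
      ((DIS (gridX dim wv)
          (hypBall (gridX dim wv) (lineTreeClass dim d') (fun _ => false) r)).card : ℝ)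
        ≤ 2 ^ d * ((d : ℝ) + (1 + Real.log w) ^ d) * (gridX dim wv).card * r := by
    intro r hr
    have hwv2 : ∀ a, wv a ≤ w := fun a => (hwv a).2
    have hPQ : (∏ a ∈ d', (wv a : ℝ)) * (∏ a ∈ Finset.univ \ d', (wv a : ℝ))
        = ((gridX dim wv).card : ℝ) := by
      rw [hcard]
      push_cast
      rw [mul_comm, Finset.prod_sdiff (Finset.subset_univ d')]
    have hQpos : 0 < ∏ a ∈ Finset.univ \ d', (wv a : ℝ) :=
      Finset.prod_pos fun a _ => by exact_mod_cast hwv1 a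
    have hPpos : 0 < ∏ a ∈ d', (wv a : ℝ) :=
      Finset.prod_pos fun a _ => by exact_mod_cast hwv1 a
    -- Bound on the union of small boxes, for a fixed direction map `f`.
    have hSb : ∀ f : Fin dim → Bool,
        ((((gridX dim wv)).filter (fun x => (∏ a ∈ d', (sideCount (f a) (wv a) (x a) : ℝ))
            ≤ r * ∏ a ∈ d', (wv a : ℝ))).card : ℝ)
          ≤ r * (1 + Real.log w) ^ d'.card * (gridX dim wv).card := by
      intro f
      have hCpos : 0 < r * ∏ a ∈ d', (wv a : ℝ) := mul_pos hr hPpos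
      have hm := master wv
        (fun x => (∏ a ∈ d', (sideCount (f a) (wv a) (x a) : ℝ)) ≤ r * ∏ a ∈ d', (wv a : ℝ))
        (fun a v => if a ∈ d' then ((sideCount (f a) (wv a) v : ℝ))⁻¹ else 1)
        (r * ∏ a ∈ d', (wv a : ℝ)) hCpos.le
        (fun a v => by by_cases h : a ∈ d' <;> simp [h] <;> positivity)
        (by
          intro x hxg hpx
          have hxb : ∀ a, 1 ≤ x a ∧ x a ≤ wv a := mem_gridX.mp hxg
          have hprodpos : 0 < ∏ a ∈ d', (sideCount (f a) (wv a) (x a) : ℝ) := by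
            apply Finset.prod_pos
            intro a _
            have := one_le_sideCount (b := f a) (hxb a).1 (hxb a).2
            have : (1:ℝ) ≤ (sideCount (f a) (wv a) (x a) : ℝ) := by exact_mod_cast this
            linarith
          rw [prod_ite_split d' (fun a => ((sideCount (f a) (wv a) (x a) : ℝ))⁻¹) (fun _ => 1),
            Finset.prod_const_one, mul_one, Finset.prod_inv_distrib,
            ← div_eq_mul_inv, one_le_div hprodpos]
          exact hpx)
      refine hm.trans ?_
      calc (r * ∏ a ∈ d', (wv a : ℝ)) * ∏ a, ∑ v ∈ Finset.Icc 1 (wv a),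
            (if a ∈ d' then ((sideCount (f a) (wv a) v : ℝ))⁻¹ else 1)
          ≤ (r * ∏ a ∈ d', (wv a : ℝ)) * ∏ a, (if a ∈ d' then (1 + Real.log w) else (wv a : ℝ)) := by
            apply mul_le_mul_of_nonneg_left _ hCpos.le
            apply Finset.prod_le_prod
            · intro a _
              apply Finset.sum_nonneg
              intro v _
              by_cases h : a ∈ d' <;> simp [h] <;> positivity
            · intro a _
              by_cases h : a ∈ d'
              · simp only [h, if_true]
                exact sum_inv_sideCount_le (f a) (hwv1 a) (hwv2 a)
              · simp only [h, if_false]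
                rw [Finset.sum_const, Nat.card_Icc]
                simp
        _ = r * (1 + Real.log w) ^ d'.card * (gridX dim wv).card := by
            rw [prod_ite_split d' (fun _ => (1 + Real.log w)) (fun a => (wv a : ℝ)),
              Finset.prod_const, ← hPQ]
            ring
    -- Bound on each single small half-space.
    have hTb : ∀ (a0 : Fin dim) (b : Bool),
        (((gridX dim wv).filter
            (fun x => (sideCount b (wv a0) (x a0) : ℝ) ≤ r * wv a0)).card : ℝ)
          ≤ r * (gridX dim wv).card := by
      intro a0 b
      have hrw0 : (0:ℝ) ≤ r * wv a0 := mul_nonneg hr.le (Nat.cast_nonneg _)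
      have hm := master wv (fun x => (sideCount b (wv a0) (x a0) : ℝ) ≤ r * wv a0)
        (fun a v => if a = a0 then
          (if (sideCount b (wv a0) v : ℝ) ≤ r * wv a0 then (1:ℝ) else 0) else 1)
        1 zero_le_one
        (fun a v => by
          by_cases h1 : a = a0 <;>
            by_cases h2 : (sideCount b (wv a0) v : ℝ) ≤ r * wv a0 <;>
              simp [h1, h2])
        (by
          intro x _ hpx
          have he : (∏ a, (if a = a0 then
              (if (sideCount b (wv a0) (x a) : ℝ) ≤ r * wv a0 then (1:ℝ) else 0) else 1)) = 1 := by
            apply Finset.prod_eq_one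
            intro a _
            by_cases h1 : a = a0
            · subst h1; simp [hpx]
            · simp [h1]
          rw [he, mul_one])
      refine hm.trans ?_
      rw [one_mul]
      have hsplit : ∀ a : Fin dim, (∑ v ∈ Finset.Icc 1 (wv a),
          (if a = a0 then
            (if (sideCount b (wv a0) v : ℝ) ≤ r * wv a0 then (1:ℝ) else 0) else 1))
          = if a = a0 then
              (((Finset.Icc 1 (wv a0)).filter
                (fun v => (sideCount b (wv a0) v : ℝ) ≤ r * wv a0)).card : ℝ)
            else (wv a : ℝ) := by
        intro a
        by_cases h1 : a = a0
        · subst h1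
          simp only [if_pos rfl]
          exact Finset.sum_boole _ _
        · simp [h1, Nat.card_Icc]
      rw [Finset.prod_congr rfl (fun a _ => hsplit a)]
      rw [← Finset.mul_prod_erase Finset.univ _ (Finset.mem_univ a0)]
      rw [if_pos rfl]
      have herase : (∏ a ∈ Finset.univ.erase a0, (if a = a0 then
            (((Finset.Icc 1 (wv a0)).filter
              (fun v => (sideCount b (wv a0) v : ℝ) ≤ r * wv a0)).card : ℝ)
          else (wv a : ℝ)))
          = ∏ a ∈ Finset.univ.erase a0, (wv a : ℝ) := by
        apply Finset.prod_congr rfl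
        intro a ha
        rw [if_neg (Finset.mem_erase.mp ha).1]
      rw [herase]
      have herasenn : (0:ℝ) ≤ ∏ a ∈ Finset.univ.erase a0, (wv a : ℝ) :=
        Finset.prod_nonneg fun a _ => Nat.cast_nonneg _
      calc (((Finset.Icc 1 (wv a0)).filter
              (fun v => (sideCount b (wv a0) v : ℝ) ≤ r * wv a0)).card : ℝ)
            * ∏ a ∈ Finset.univ.erase a0, (wv a : ℝ)
          ≤ (r * wv a0) * ∏ a ∈ Finset.univ.erase a0, (wv a : ℝ) :=
            mul_le_mul_of_nonneg_right (card_filter_sideCount_le hrw0 b) herasenn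
        _ = r * ((wv a0 : ℝ) * ∏ a ∈ Finset.univ.erase a0, (wv a : ℝ)) := by ring
        _ = r * ∏ a, (wv a : ℝ) := by
            rw [Finset.mul_prod_erase Finset.univ (fun a => ((wv a : ℕ) : ℝ))
              (Finset.mem_univ a0)]
        _ = r * (gridX dim wv).card := by
            rw [hcard]
            push_cast
            ring
    -- The disagreement region is covered by the small boxes and half-spaces.
    have hsub : DIS (gridX dim wv)
          (hypBall (gridX dim wv) (lineTreeClass dim d') (fun _ => false) r) ⊆
        ((Fintype.piFinset (fun a =>
            if a ∈ d' then ({false, true} : Finset Bool) else {true})).biUnion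
          (fun f => (gridX dim wv).filter (fun x =>
            (∏ a ∈ d', (sideCount (f a) (wv a) (x a) : ℝ)) ≤ r * ∏ a ∈ d', (wv a : ℝ))))
        ∪ d'.biUnion (fun a0 =>
            ((gridX dim wv).filter
              (fun x => (sideCount false (wv a0) (x a0) : ℝ) ≤ r * wv a0))
            ∪ ((gridX dim wv).filter
              (fun x => (sideCount true (wv a0) (x a0) : ℝ) ≤ r * wv a0))) := by
      intro x hx
      rw [DIS, Finset.mem_filter] at hx
      obtain ⟨hxX, h1, h1V, h2, h2V, hne⟩ := hx
      have hxb : ∀ a, 1 ≤ x a ∧ x a ≤ wv a := mem_gridX.mp hxX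
      obtain ⟨h, hV, hxt⟩ :
          ∃ h ∈ hypBall (gridX dim wv) (lineTreeClass dim d') (fun _ => false) r,
            h x = true := by
        rcases Bool.eq_false_or_eq_true (h1 x) with hb | hb
        · exact ⟨h1, h1V, hb⟩
        · refine ⟨h2, h2V, ?_⟩
          rcases Bool.eq_false_or_eq_true (h2 x) with hb2 | hb2
          · exact hb2
          · rw [hb, hb2] at hne; exact absurd rfl hne
      obtain ⟨hclass, hdist⟩ := hV
      obtain ⟨l, f, t, rfl⟩ := hclass
      rw [hypDist, div_le_iff₀ hnpos] at hdist
      rcases Bool.eq_false_or_eq_true l with hl | hl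
      · -- l = true : small box case
        subst hl
        have hcx : ∀ a ∈ d', if f a then ((x a : ℤ) ≤ t a) else (t a ≤ (x a : ℤ)) := by
          by_contra hno
          simp only [if_neg hno] at hxt
          simp at hxt
        have hcnt2 : (((gridX dim wv).filter
              (fun y => ∀ a ∈ d', if f a then ((y a : ℤ) ≤ t a) else (t a ≤ (y a : ℤ)))).card : ℝ)
            ≤ r * (gridX dim wv).card := by
          refine le_trans (le_of_eq ?_) hdist
          norm_cast
          congr 1
          ext y
          by_cases hc : (∀ a ∈ d', if f a then ((y a : ℤ) ≤ t a) else (t a ≤ (y a : ℤ)))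
          · simp [Finset.mem_filter, hc]
          · simp [Finset.mem_filter, hc]
        have hsub2 : (gridX dim wv).filter
              (fun y => ∀ a, a ∈ d' → (if f a then y a ≤ x a else x a ≤ y a))
            ⊆ (gridX dim wv).filter
              (fun y => ∀ a ∈ d', if f a then ((y a : ℤ) ≤ t a) else (t a ≤ (y a : ℤ))) := by
          intro y hy
          rw [Finset.mem_filter] at hy ⊢
          refine ⟨hy.1, ?_⟩
          intro a ha
          have h3 := hy.2 a ha
          have h4 := hcx a ha
          rcases Bool.eq_false_or_eq_true (f a) with hfa | hfa
          · rw [hfa] at h3 h4 ⊢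
            simp only [if_true] at *
            exact le_trans (by exact_mod_cast h3) h4
          · rw [hfa] at h3 h4 ⊢
            simp only [Bool.false_eq_true, if_false] at *
            exact le_trans h4 (by exact_mod_cast h3)
        have hstep : ((∏ a, (if a ∈ d' then sideCount (f a) (wv a) (x a) else wv a) : ℕ) : ℝ)
            ≤ r * (gridX dim wv).card := by
          rw [← box_card wv d' f x hxb]
          exact le_trans (by exact_mod_cast Finset.card_le_card hsub2) hcnt2
        have e : ((∏ a, (if a ∈ d' then sideCount (f a) (wv a) (x a) else wv a) : ℕ) : ℝ)
            = (∏ a ∈ d', (sideCount (f a) (wv a) (x a) : ℝ))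
              * ∏ a ∈ Finset.univ \ d', (wv a : ℝ) := by
          rw [Nat.cast_prod]
          rw [show (fun a => ((if a ∈ d' then sideCount (f a) (wv a) (x a) else wv a : ℕ) : ℝ))
              = fun a => if a ∈ d' then (sideCount (f a) (wv a) (x a) : ℝ) else (wv a : ℝ) from
            funext fun a => by by_cases h : a ∈ d' <;> simp [h]]
          exact prod_ite_split d' _ _
        have h5 : (∏ a ∈ d', (sideCount (f a) (wv a) (x a) : ℝ))
              * (∏ a ∈ Finset.univ \ d', (wv a : ℝ))
            ≤ (r * ∏ a ∈ d', (wv a : ℝ)) * (∏ a ∈ Finset.univ \ d', (wv a : ℝ)) := by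
          rw [← e]
          refine hstep.trans (le_of_eq ?_)
          rw [← hPQ]
          ring
        have h6 := le_of_mul_le_mul_right h5 hQpos
        apply Finset.mem_union_left
        rw [Finset.mem_biUnion]
        refine ⟨fun a => if a ∈ d' then f a else true, ?_, ?_⟩
        · rw [Fintype.mem_piFinset]
          intro a
          by_cases h : a ∈ d'
          · simp only [h, if_true]
            cases f a <;> simp
          · simp [h]
        · rw [Finset.mem_filter]
          refine ⟨hxX, ?_⟩
          refine le_trans (le_of_eq (Finset.prod_congr rfl fun a ha => by simp [ha])) h6
      · -- l = false : small complement case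
        subst hl
        have hncx : ¬ (∀ a ∈ d', if f a then ((x a : ℤ) ≤ t a) else (t a ≤ (x a : ℤ))) := by
          intro hc
          simp only [if_pos hc] at hxt
          simp at hxt
        push_neg at hncx
        obtain ⟨a0, ha0, hviol⟩ := hncx
        have hcnt2 : (((gridX dim wv).filter
              (fun y => ¬ (∀ a ∈ d', if f a then ((y a : ℤ) ≤ t a) else (t a ≤ (y a : ℤ))))).card : ℝ)
            ≤ r * (gridX dim wv).card := by
          refine le_trans (le_of_eq ?_) hdist
          norm_cast
          congr 1
          ext y
          by_cases hc : (∀ a ∈ d', if f a then ((y a : ℤ) ≤ t a) else (t a ≤ (y a : ℤ)))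
          · simp [Finset.mem_filter, hc]
          · simp [Finset.mem_filter, hc]
        have hPQ0 : (wv a0 : ℝ) * ∏ a ∈ Finset.univ \ {a0}, (wv a : ℝ)
            = ((gridX dim wv).card : ℝ) := by
          rw [hcard]
          push_cast
          rw [mul_comm, ← Finset.prod_singleton (f := fun a => ((wv a : ℕ) : ℝ)) (a := a0),
            Finset.prod_sdiff (Finset.subset_univ {a0})]
        have hQ0pos : 0 < ∏ a ∈ Finset.univ \ {a0}, (wv a : ℝ) :=
          Finset.prod_pos fun a _ => by exact_mod_cast hwv1 a
        rcases Bool.eq_false_or_eq_true (f a0) with hfa | hfa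
        · -- f a0 = true : prefix violated, suffix at a0 is small
          simp only [hfa, if_true] at hviol
          try push_neg at hviol
          have hsub2 : (gridX dim wv).filter
                (fun y => ∀ a, a ∈ ({a0} : Finset (Fin dim)) →
                  (if (fun _ => false : Fin dim → Bool) a then y a ≤ x a else x a ≤ y a))
              ⊆ (gridX dim wv).filter
                (fun y => ¬ (∀ a ∈ d', if f a then ((y a : ℤ) ≤ t a) else (t a ≤ (y a : ℤ)))) := by
            intro y hy
            rw [Finset.mem_filter] at hy ⊢
            refine ⟨hy.1, ?_⟩
            intro hc
            have h3 := hy.2 a0 (Finset.mem_singleton_self a0)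
            simp only [Bool.false_eq_true, if_false] at h3
            have h4 := hc a0 ha0
            simp only [hfa, if_true] at h4
            have h5 : (x a0 : ℤ) ≤ (y a0 : ℤ) := by exact_mod_cast h3
            omega
          have hstep : ((∏ a, (if a ∈ ({a0} : Finset (Fin dim)) then
                sideCount ((fun _ => false : Fin dim → Bool) a) (wv a) (x a) else wv a) : ℕ) : ℝ)
              ≤ r * (gridX dim wv).card := by
            rw [← box_card wv {a0} (fun _ => false) x hxb]
            exact le_trans (by exact_mod_cast Finset.card_le_card hsub2) hcnt2
          have e : ((∏ a, (if a ∈ ({a0} : Finset (Fin dim)) then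
                sideCount ((fun _ => false : Fin dim → Bool) a) (wv a) (x a) else wv a) : ℕ) : ℝ)
              = (sideCount false (wv a0) (x a0) : ℝ) * ∏ a ∈ Finset.univ \ {a0}, (wv a : ℝ) := by
            rw [Nat.cast_prod]
            rw [show (fun a => ((if a ∈ ({a0} : Finset (Fin dim)) then
                  sideCount ((fun _ => false : Fin dim → Bool) a) (wv a) (x a) else wv a : ℕ) : ℝ))
                = fun a => if a ∈ ({a0} : Finset (Fin dim)) then
                    (sideCount false (wv a) (x a) : ℝ) else (wv a : ℝ) from
              funext fun a => by by_cases h : a ∈ ({a0} : Finset (Fin dim)) <;> simp [h]]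
            rw [prod_ite_split ({a0} : Finset (Fin dim)) _ _, Finset.prod_singleton]
          have h5 : (sideCount false (wv a0) (x a0) : ℝ) * ∏ a ∈ Finset.univ \ {a0}, (wv a : ℝ)
              ≤ (r * wv a0) * ∏ a ∈ Finset.univ \ {a0}, (wv a : ℝ) := by
            rw [← e]
            refine hstep.trans (le_of_eq ?_)
            rw [← hPQ0]
            ring
          have h6 := le_of_mul_le_mul_right h5 hQ0pos
          apply Finset.mem_union_right
          rw [Finset.mem_biUnion]
          exact ⟨a0, ha0, Finset.mem_union_left _ (Finset.mem_filter.mpr ⟨hxX, h6⟩)⟩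
        · -- f a0 = false : suffix violated, prefix at a0 is small
          simp only [hfa, Bool.false_eq_true, if_false] at hviol
          try push_neg at hviol
          have hsub2 : (gridX dim wv).filter
                (fun y => ∀ a, a ∈ ({a0} : Finset (Fin dim)) →
                  (if (fun _ => true : Fin dim → Bool) a then y a ≤ x a else x a ≤ y a))
              ⊆ (gridX dim wv).filter
                (fun y => ¬ (∀ a ∈ d', if f a then ((y a : ℤ) ≤ t a) else (t a ≤ (y a : ℤ)))) := by
            intro y hy
            rw [Finset.mem_filter] at hy ⊢
            refine ⟨hy.1, ?_⟩
            intro hc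
            have h3 := hy.2 a0 (Finset.mem_singleton_self a0)
            simp only [if_true] at h3
            have h4 := hc a0 ha0
            simp only [hfa, Bool.false_eq_true, if_false] at h4
            have h5 : (y a0 : ℤ) ≤ (x a0 : ℤ) := by exact_mod_cast h3
            omega
          have hstep : ((∏ a, (if a ∈ ({a0} : Finset (Fin dim)) then
                sideCount ((fun _ => true : Fin dim → Bool) a) (wv a) (x a) else wv a) : ℕ) : ℝ)
              ≤ r * (gridX dim wv).card := by
            rw [← box_card wv {a0} (fun _ => true) x hxb]
            exact le_trans (by exact_mod_cast Finset.card_le_card hsub2) hcnt2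
          have e : ((∏ a, (if a ∈ ({a0} : Finset (Fin dim)) then
                sideCount ((fun _ => true : Fin dim → Bool) a) (wv a) (x a) else wv a) : ℕ) : ℝ)
              = (sideCount true (wv a0) (x a0) : ℝ) * ∏ a ∈ Finset.univ \ {a0}, (wv a : ℝ) := by
            rw [Nat.cast_prod]
            rw [show (fun a => ((if a ∈ ({a0} : Finset (Fin dim)) then
                  sideCount ((fun _ => true : Fin dim → Bool) a) (wv a) (x a) else wv a : ℕ) : ℝ))
                = fun a => if a ∈ ({a0} : Finset (Fin dim)) then
                    (sideCount true (wv a) (x a) : ℝ) else (wv a : ℝ) from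
              funext fun a => by by_cases h : a ∈ ({a0} : Finset (Fin dim)) <;> simp [h]]
            rw [prod_ite_split ({a0} : Finset (Fin dim)) _ _, Finset.prod_singleton]
          have h5 : (sideCount true (wv a0) (x a0) : ℝ) * ∏ a ∈ Finset.univ \ {a0}, (wv a : ℝ)
              ≤ (r * wv a0) * ∏ a ∈ Finset.univ \ {a0}, (wv a : ℝ) := by
            rw [← e]
            refine hstep.trans (le_of_eq ?_)
            rw [← hPQ0]
            ring
          have h6 := le_of_mul_le_mul_right h5 hQ0pos
          apply Finset.mem_union_right
          rw [Finset.mem_biUnion]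
          exact ⟨a0, ha0, Finset.mem_union_right _ (Finset.mem_filter.mpr ⟨hxX, h6⟩)⟩
    -- Put everything together.
    have hFcard : (Fintype.piFinset (fun a : Fin dim =>
        if a ∈ d' then ({false, true} : Finset Bool) else {true})).card = 2 ^ d'.card := by
      rw [Fintype.card_piFinset]
      rw [Finset.prod_congr rfl (fun a _ =>
        show ((if a ∈ d' then ({false, true} : Finset Bool) else {true}).card)
            = if a ∈ d' then 2 else 1 from by by_cases h : a ∈ d' <;> simp [h])]
      rw [prod_ite_split d' (fun _ => 2) (fun _ => 1), Finset.prod_const, Finset.prod_const_one]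
      simp
    have e1 : (2:ℝ) ^ d'.card ≤ 2 ^ d := pow_le_pow_right₀ one_le_two hd'
    have e2 : (1 + Real.log w) ^ d'.card ≤ (1 + Real.log w) ^ d := pow_le_pow_right₀ hH1 hd'
    have e3 : ((d'.card : ℕ) : ℝ) ≤ (d : ℝ) := Nat.cast_le.mpr hd'
    have e4 : (2:ℝ) ≤ 2 ^ d := by
      calc (2:ℝ) = 2 ^ 1 := by norm_num
        _ ≤ 2 ^ d := pow_le_pow_right₀ one_le_two hd
    have hnr : (0:ℝ) ≤ ((gridX dim wv).card : ℝ) * r := mul_nonneg hnpos.le hr.le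
    have f1 : (2:ℝ) ^ d'.card * (1 + Real.log w) ^ d'.card
        ≤ 2 ^ d * (1 + Real.log w) ^ d :=
      mul_le_mul e1 e2 (pow_nonneg (by linarith) _) (by positivity)
    have f2 : ((d'.card : ℕ) : ℝ) * 2 ≤ (d : ℝ) * 2 ^ d :=
      mul_le_mul e3 e4 (by norm_num) (Nat.cast_nonneg d)
    have f1' := mul_le_mul_of_nonneg_right f1 hnr
    have f2' := mul_le_mul_of_nonneg_right f2 hnr
    calc ((DIS (gridX dim wv)
          (hypBall (gridX dim wv) (lineTreeClass dim d') (fun _ => false) r)).card : ℝ)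
        ≤ ((((Fintype.piFinset (fun a =>
            if a ∈ d' then ({false, true} : Finset Bool) else {true})).biUnion
          (fun f => (gridX dim wv).filter (fun x =>
            (∏ a ∈ d', (sideCount (f a) (wv a) (x a) : ℝ)) ≤ r * ∏ a ∈ d', (wv a : ℝ))))
        ∪ d'.biUnion (fun a0 =>
            ((gridX dim wv).filter
              (fun x => (sideCount false (wv a0) (x a0) : ℝ) ≤ r * wv a0))
            ∪ ((gridX dim wv).filter
              (fun x => (sideCount true (wv a0) (x a0) : ℝ) ≤ r * wv a0)))).card : ℝ) :=
          Nat.cast_le.mpr (Finset.card_le_card hsub)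
      _ ≤ (((Fintype.piFinset (fun a =>
            if a ∈ d' then ({false, true} : Finset Bool) else {true})).biUnion
          (fun f => (gridX dim wv).filter (fun x =>
            (∏ a ∈ d', (sideCount (f a) (wv a) (x a) : ℝ)) ≤ r * ∏ a ∈ d', (wv a : ℝ)))).card : ℝ)
        + ((d'.biUnion (fun a0 =>
            ((gridX dim wv).filter
              (fun x => (sideCount false (wv a0) (x a0) : ℝ) ≤ r * wv a0))
            ∪ ((gridX dim wv).filter
              (fun x => (sideCount true (wv a0) (x a0) : ℝ) ≤ r * wv a0)))).card : ℝ) := by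
          exact_mod_cast Finset.card_union_le _ _
      _ ≤ (∑ f ∈ Fintype.piFinset (fun a =>
            if a ∈ d' then ({false, true} : Finset Bool) else {true}),
            (((gridX dim wv).filter (fun x =>
              (∏ a ∈ d', (sideCount (f a) (wv a) (x a) : ℝ))
                ≤ r * ∏ a ∈ d', (wv a : ℝ))).card : ℝ))
        + ∑ a0 ∈ d', ((((gridX dim wv).filter
              (fun x => (sideCount false (wv a0) (x a0) : ℝ) ≤ r * wv a0))
            ∪ ((gridX dim wv).filter
              (fun x => (sideCount true (wv a0) (x a0) : ℝ) ≤ r * wv a0))).card : ℝ) := by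
          apply add_le_add <;> exact_mod_cast Finset.card_biUnion_le
      _ ≤ (∑ _f ∈ Fintype.piFinset (fun a =>
            if a ∈ d' then ({false, true} : Finset Bool) else {true}),
            (r * (1 + Real.log w) ^ d'.card * (gridX dim wv).card))
        + ∑ _a0 ∈ d', (2 * (r * (gridX dim wv).card)) := by
          apply add_le_add
          · exact Finset.sum_le_sum fun f _ => hSb f
          · apply Finset.sum_le_sum
            intro a0 _
            calc ((((gridX dim wv).filter
                  (fun x => (sideCount false (wv a0) (x a0) : ℝ) ≤ r * wv a0))
                ∪ ((gridX dim wv).filter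
                  (fun x => (sideCount true (wv a0) (x a0) : ℝ) ≤ r * wv a0))).card : ℝ)
                ≤ (((gridX dim wv).filter
                    (fun x => (sideCount false (wv a0) (x a0) : ℝ) ≤ r * wv a0)).card : ℝ)
                  + (((gridX dim wv).filter
                    (fun x => (sideCount true (wv a0) (x a0) : ℝ) ≤ r * wv a0)).card : ℝ) := by
                  exact_mod_cast Finset.card_union_le _ _
              _ ≤ r * (gridX dim wv).card + r * (gridX dim wv).card :=
                  add_le_add (hTb a0 false) (hTb a0 true)
              _ = 2 * (r * (gridX dim wv).card) := by ring
      _ = (2:ℝ) ^ d'.card * (r * (1 + Real.log w) ^ d'.card * (gridX dim wv).card)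
          + ((d'.card : ℕ) : ℝ) * (2 * (r * (gridX dim wv).card)) := by
          rw [Finset.sum_const, Finset.sum_const, nsmul_eq_mul, nsmul_eq_mul, hFcard]
          push_cast
          ring
      _ ≤ 2 ^ d * ((d : ℝ) + (1 + Real.log w) ^ d) * (gridX dim wv).card * r := by
          nlinarith [f1', f2']
  refine ⟨key, ?_⟩
  apply Real.iSup_le _ hC0
  intro r
  apply Real.iSup_le _ hC0
  intro hr
  rw [div_le_iff₀ (by positivity)]
  calc ((DIS (gridX dim wv)
          (hypBall (gridX dim wv) (lineTreeClass dim d') (fun _ => false) r)).card : ℝ)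
      ≤ 2 ^ d * ((d : ℝ) + (1 + Real.log w) ^ d) * (gridX dim wv).card * r := key r hr
    _ = 2 ^ d * ((d : ℝ) + (1 + Real.log w) ^ d) * (r * (gridX dim wv).card) := by ring

end
end

section
/- Let d ≥ 2 and dim ≥ d be integers. For every integer w ≥ 8, let X = {1, …, w}^dim (so n = w^dim) and let H_d be the set of all functions X → Bool realized by decision trees of height at most d having the distinct-dimensions property. Then there exists a constant C > 0 depending only on d and dim such that for every w ≥ 8, every h ∈ H_d, and every r > 0: |DIS_X(B_{H_d}(h, r))| ≤ C · n · r · (ln n)^d. In particular, the disagreement coefficient of every h ∈ H_d satisfies θ_h ≤ C (ln n)^d. -/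
open scoped Classical

noncomputable section

/-- A decision tree over `ℝ^dim`: either a leaf carrying a Boolean label, or an
internal node carrying a coordinate and a real threshold together with two
subtrees. -/
inductive DTree (dim : ℕ) : Type
  | leaf (b : Bool) : DTree dim
  | node (a : Fin dim) (t : ℝ) (l r : DTree dim) : DTree dim

namespace DTree

/-- Evaluation of a decision tree: `x` goes to the first subtree if `x_a < t`
and to the second otherwise. -/
def eval {dim : ℕ} : DTree dim → (Fin dim → ℝ) → Bool
  | .leaf b, _ => b
  | .node a t l r, x => if x a < t then l.eval x else r.eval x

/-- The height of a decision tree: the maximum number of internal nodes on a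
root-to-leaf path. -/
def height {dim : ℕ} : DTree dim → ℕ
  | .leaf _ => 0
  | .node _ _ l r => max l.height r.height + 1

/-- Distinct-dimensions property relative to a set of already-used coordinates:
along every root-to-leaf path the queried coordinates are pairwise distinct. -/
def distinctDims {dim : ℕ} : DTree dim → Finset (Fin dim) → Prop
  | .leaf _, _ => True
  | .node a _ l r, used =>
      a ∉ used ∧ l.distinctDims (insert a used) ∧ r.distinctDims (insert a used)

end DTree

/-- The class of functions realized by decision trees of height at most `d` having
the distinct-dimensions property. -/
def treeClass (dim d : ℕ) : Set ((Fin dim → ℝ) → Bool) :=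
  {h | ∃ T : DTree dim, T.height ≤ d ∧ T.distinctDims ∅ ∧ h = T.eval}

/-- The grid `{1, …, w}^dim` viewed as a finite set of points of `ℝ^dim`. -/
def gridXR (dim w : ℕ) : Finset (Fin dim → ℝ) :=
  ((Finset.Icc (fun _ => 1) (fun _ => w) : Finset (Fin dim → ℕ))).image
    fun x => fun a => (x a : ℝ)

namespace Stmt17Aux

open Finset

variable {dim : ℕ}

def grid1 (w : ℕ) : Finset ℕ := Finset.Icc 1 w

def gridN (dim w : ℕ) : Finset (Fin dim → ℕ) := Fintype.piFinset (fun _ => grid1 w)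

def ι (x : Fin dim → ℕ) : Fin dim → ℝ := fun a => (x a : ℝ)

/-- per-coordinate constraint set of the leaf cell of `x` in `T` -/
def cIval : DTree dim → (Fin dim → ℝ) → Fin dim → Set ℝ
  | .leaf _, _, _ => Set.univ
  | .node a' t l r, x, a =>
      if x a' < t then (if a = a' then Set.Iio t else Set.univ) ∩ cIval l x a
      else (if a = a' then Set.Ici t else Set.univ) ∩ cIval r x a

def pathCoords : DTree dim → (Fin dim → ℝ) → Finset (Fin dim)
  | .leaf _, _ => ∅
  | .node a' t l r, x =>
      insert a' (if x a' < t then pathCoords l x else pathCoords r x)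

def tsize : DTree dim → ℕ
  | .leaf _ => 0
  | .node _ _ l r => tsize l + tsize r + 1

def sfun (w v : ℕ) : ℕ := min v (w + 1 - v)

def tdist (w : ℕ) (t : ℝ) (v : ℕ) : ℕ :=
  if (v : ℝ) < t then (min (w : ℤ) (⌈t⌉ - 1) - v + 1).toNat
  else ((v : ℤ) - max 1 ⌈t⌉ + 1).toNat

def kside (w : ℕ) (t : ℝ) (v : ℕ) : ℕ :=
  if (v : ℝ) < t then (min (w : ℤ) (⌈t⌉ - 1)).toNat
  else ((w : ℤ) - max 1 ⌈t⌉ + 1).toNat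

def fval (w : ℕ) (C' : Finset (Fin dim)) (φ : Fin dim → ℕ → ℕ) :
    DTree dim → (Fin dim → ℕ) → Fin dim → ℕ
  | .leaf _, x, a => if a ∈ C' then φ a (x a) else w
  | .node a' t l r, x, a =>
      if a = a' then
        (if a ∈ C' then
          min (if (x a' : ℝ) < t then fval w C' φ l x a else fval w C' φ r x a)
              (tdist w t (x a'))
         else kside w t (x a'))
      else (if (x a' : ℝ) < t then fval w C' φ l x a else fval w C' φ r x a)

lemma mem_cIval_self (T : DTree dim) (x : Fin dim → ℝ) (a : Fin dim) :
    x a ∈ cIval T x a := by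
  induction T generalizing a with
  | leaf b => simp [cIval]
  | node a' t l r ihl ihr =>
    by_cases hx : x a' < t
    · simp only [cIval, if_pos hx]
      refine ⟨?_, ihl a⟩
      by_cases h : a = a'
      · subst h; simpa using hx
      · simp [h]
    · simp only [cIval, if_neg hx]
      refine ⟨?_, ihr a⟩
      by_cases h : a = a'
      · subst h; simpa using not_lt.mp hx
      · simp [h]

lemma eval_eq_of_mem_cIval {T : DTree dim} {x y : Fin dim → ℝ}
    (h : ∀ a, y a ∈ cIval T x a) : T.eval y = T.eval x := by
  induction T with
  | leaf b => rfl
  | node a' t l r ihl ihr =>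
    by_cases hx : x a' < t
    · have h' := h a'
      simp only [cIval, if_pos hx, if_pos rfl] at h'
      have hy : y a' < t := h'.1
      simp only [DTree.eval, if_pos hx, if_pos hy]
      refine ihl fun a => ?_
      have := h a
      simp only [cIval, if_pos hx] at this
      exact this.2
    · have h' := h a'
      simp only [cIval, if_neg hx, if_pos rfl] at h'
      have hy : ¬ y a' < t := not_lt.mpr h'.1
      simp only [DTree.eval, if_neg hx, if_neg hy]
      refine ihr fun a => ?_
      have := h a
      simp only [cIval, if_neg hx] at this
      exact this.2

lemma cIval_of_mem_used {T : DTree dim} {u : Finset (Fin dim)}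
    (hdd : T.distinctDims u) {a : Fin dim} (ha : a ∈ u) (x : Fin dim → ℝ) :
    cIval T x a = Set.univ := by
  induction T generalizing u with
  | leaf b => simp [cIval]
  | node a' t l r ihl ihr =>
    obtain ⟨ha', hl, hr⟩ := hdd
    have hne : a ≠ a' := fun h => ha' (h ▸ ha)
    by_cases hx : x a' < t
    · simp [cIval, if_pos hx, if_neg hne, ihl hl (Finset.mem_insert_of_mem ha)]
    · simp [cIval, if_neg hx, if_neg hne, ihr hr (Finset.mem_insert_of_mem ha)]

lemma cIval_shape {T : DTree dim} {u : Finset (Fin dim)}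
    (hdd : T.distinctDims u) (x : Fin dim → ℝ) (a : Fin dim) :
    cIval T x a = Set.univ ∨ (∃ t, cIval T x a = Set.Iio t ∧ x a < t) ∨
      (∃ t, cIval T x a = Set.Ici t ∧ t ≤ x a) := by
  induction T generalizing u with
  | leaf b => left; simp [cIval]
  | node a' t l r ihl ihr =>
    obtain ⟨ha', hl, hr⟩ := hdd
    by_cases hx : x a' < t
    · by_cases h : a = a'
      · subst h
        right; left
        refine ⟨t, ?_, hx⟩
        simp [cIval, if_pos hx, cIval_of_mem_used hl (Finset.mem_insert_self a u) x]
      · have := ihl hl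
        simpa [cIval, if_pos hx, if_neg h, Set.univ_inter] using this
    · by_cases h : a = a'
      · subst h
        right; right
        refine ⟨t, ?_, not_lt.mp hx⟩
        simp [cIval, if_neg hx, cIval_of_mem_used hr (Finset.mem_insert_self a u) x]
      · have := ihr hr
        simpa [cIval, if_neg hx, if_neg h, Set.univ_inter] using this

lemma cIval_of_not_path {T : DTree dim} {x : Fin dim → ℝ} {a : Fin dim}
    (ha : a ∉ pathCoords T x) : cIval T x a = Set.univ := by
  induction T with
  | leaf b => simp [cIval]
  | node a' t l r ihl ihr =>
    simp only [pathCoords, Finset.mem_insert, not_or] at ha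
    obtain ⟨hne, ha2⟩ := ha
    by_cases hx : x a' < t
    · rw [if_pos hx] at ha2
      simp [cIval, if_pos hx, if_neg hne, ihl ha2]
    · rw [if_neg hx] at ha2
      simp [cIval, if_neg hx, if_neg hne, ihr ha2]

lemma card_pathCoords_le (T : DTree dim) (x : Fin dim → ℝ) :
    (pathCoords T x).card ≤ T.height := by
  induction T with
  | leaf b => simp [pathCoords, DTree.height]
  | node a' t l r ihl ihr =>
    simp only [pathCoords, DTree.height]
    refine (Finset.card_insert_le _ _).trans ?_
    by_cases hx : x a' < t
    · rw [if_pos hx]; exact Nat.succ_le_succ (ihl.trans (le_max_left _ _))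
    · rw [if_neg hx]; exact Nat.succ_le_succ (ihr.trans (le_max_right _ _))

lemma fval_congr {w : ℕ} {C' : Finset (Fin dim)} {φ₁ φ₂ : Fin dim → ℕ → ℕ}
    (T : DTree dim) (x : Fin dim → ℕ) (a : Fin dim) (h : φ₁ a = φ₂ a) :
    fval w C' φ₁ T x a = fval w C' φ₂ T x a := by
  induction T with
  | leaf b => simp [fval, h]
  | node a' t l r ihl ihr => simp [fval, h, ihl, ihr]

lemma fval_of_mem_used {w : ℕ} {C' : Finset (Fin dim)} {φ : Fin dim → ℕ → ℕ}
    {T : DTree dim} {u : Finset (Fin dim)} (hdd : T.distinctDims u)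
    {a : Fin dim} (ha : a ∈ u) (x : Fin dim → ℕ) :
    fval w C' φ T x a = if a ∈ C' then φ a (x a) else w := by
  induction T generalizing u with
  | leaf b => simp [fval]
  | node a' t l r ihl ihr =>
    obtain ⟨ha', hl, hr⟩ := hdd
    have hne : a ≠ a' := fun h => ha' (h ▸ ha)
    by_cases hx : (x a' : ℝ) < t
    · simp [fval, if_neg hne, if_pos hx, ihl hl (Finset.mem_insert_of_mem ha)]
    · simp [fval, if_neg hne, if_neg hx, ihr hr (Finset.mem_insert_of_mem ha)]

lemma tsize_le (T : DTree dim) : tsize T ≤ 2 ^ (T.height + 1) - 1 := by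
  induction T with
  | leaf b => simp [tsize]
  | node a' t l r ihl ihr =>
    simp only [tsize, DTree.height]
    have h1 : tsize l ≤ 2 ^ (max l.height r.height + 1) - 1 :=
      ihl.trans (by gcongr <;> simp [Nat.one_le_two_pow] <;> omega)
    have h2 : tsize r ≤ 2 ^ (max l.height r.height + 1) - 1 :=
      ihr.trans (by gcongr <;> simp [Nat.one_le_two_pow] <;> omega)
    have : (2:ℕ) ^ (max l.height r.height + 1) ≥ 1 := Nat.one_le_two_pow
    have hpow : (2:ℕ) ^ (max l.height r.height + 1 + 1) = 2 * 2 ^ (max l.height r.height + 1) := by ring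
    omega

end Stmt17Aux
namespace Stmt17Aux
open Finset
variable {dim : ℕ}

lemma card_grid1 (w : ℕ) : (grid1 w).card = w := by simp [grid1]

lemma mem_grid1 {w v : ℕ} : v ∈ grid1 w ↔ 1 ≤ v ∧ v ≤ w := Finset.mem_Icc

lemma gridIcc_eq (dim w : ℕ) :
    (Finset.Icc (fun _ => 1) (fun _ => w) : Finset (Fin dim → ℕ)) = gridN dim w := by
  ext x
  simp [gridN, Fintype.mem_piFinset, Finset.mem_Icc, grid1, Pi.le_def, forall_and]

lemma ι_injective : Function.Injective (ι (dim := dim)) := by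
  intro x y h
  funext a
  exact Nat.cast_injective (congrFun h a)

lemma gridXR_eq (dim w : ℕ) : gridXR dim w = (gridN dim w).image ι := by
  rw [gridXR, gridIcc_eq]
  rfl

lemma card_gridXR (dim w : ℕ) : (gridXR dim w).card = w ^ dim := by
  rw [gridXR_eq, Finset.card_image_of_injective _ ι_injective, gridN,
    Fintype.card_piFinset]
  simp [card_grid1]

lemma filter_transfer (dim w : ℕ) (Q : (Fin dim → ℝ) → Prop) [DecidablePred Q]
    [DecidablePred (fun x : Fin dim → ℕ => Q (ι x))] :
    ((gridXR dim w).filter Q).card = ((gridN dim w).filter (fun x => Q (ι x))).card := by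
  have himg : (gridXR dim w).filter Q
      = ((gridN dim w).filter (fun x => Q (ι x))).image ι := by
    ext yR
    simp only [gridXR_eq, Finset.mem_filter, Finset.mem_image]
    constructor
    · rintro ⟨⟨x, hx, rfl⟩, hQ⟩
      exact ⟨x, ⟨hx, hQ⟩, rfl⟩
    · rintro ⟨x, ⟨hx, hQ⟩, rfl⟩
      exact ⟨⟨x, hx, rfl⟩, hQ⟩
  rw [himg, Finset.card_image_of_injective _ ι_injective]

lemma harmonic_le (w : ℕ) : (∑ z ∈ Finset.Icc 1 w, (1:ℝ)/z) ≤ 1 + Real.log w := by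
  induction w with
  | zero => simp
  | succ n ih =>
    rw [Finset.sum_Icc_succ_top (by omega : 1 ≤ n + 1)]
    rcases Nat.eq_zero_or_pos n with h0 | hpos
    · subst h0; simp
    · have hn : (0:ℝ) < n := by exact_mod_cast hpos
      have hn1 : (0:ℝ) < (n:ℝ) + 1 := by positivity
      have hx : (0:ℝ) < (n:ℝ)/((n:ℝ)+1) := by positivity
      have hlog := Real.log_le_sub_one_of_pos hx
      rw [Real.log_div (ne_of_gt hn) (ne_of_gt hn1)] at hlog
      have h2 : (n:ℝ)/((n:ℝ)+1) - 1 = -(1/((n:ℝ)+1)) := by field_simp; ring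
      push_cast
      push_cast at ih
      linarith

lemma hyp_count {w : ℕ} (hw : 1 ≤ w)
    (S : Finset (Fin dim)) (β : Fin dim → Finset ℕ) (φ : Fin dim → ℕ → ℕ) (m : ℝ)
    (hm : 0 ≤ m)
    (hφ : ∀ a ∈ S, ∀ v ∈ β a, 1 ≤ φ a v ∧ φ a v ≤ w)
    (hfib : ∀ a ∈ S, ∀ z : ℕ, ((β a).filter (fun v => φ a v = z)).card ≤ 3) :
    (((Fintype.piFinset β).filter
        (fun x => (∏ a ∈ S, (φ a (x a) : ℝ)) ≤ m)).card : ℝ)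
      ≤ 3 ^ S.card * (1 + Real.log w) ^ S.card * m * ∏ a ∈ Sᶜ, ((β a).card : ℝ) := by
  have hL0 : (0:ℝ) ≤ Real.log w := Real.log_nonneg (by exact_mod_cast hw)
  induction S using Finset.induction generalizing β m with
  | empty =>
    simp only [Finset.prod_empty, Finset.card_empty, pow_zero, one_mul, Finset.compl_empty]
    by_cases h1 : (1:ℝ) ≤ m
    · calc (((Fintype.piFinset β).filter _).card : ℝ)
          ≤ ((Fintype.piFinset β).card : ℝ) := by
            exact_mod_cast Finset.card_filter_le _ _
        _ = ∏ a ∈ Finset.univ, ((β a).card : ℝ) := by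
            rw [Fintype.card_piFinset]; push_cast; rfl
        _ ≤ m * ∏ a ∈ Finset.univ, ((β a).card : ℝ) := by
            apply le_mul_of_one_le_left _ h1
            positivity
    · simp only [h1, Finset.filter_false]
      simp only [Finset.card_empty, Nat.cast_zero]
      positivity
  | @insert b S hbS ih =>
    -- partition according to the value of x b
    have hmaps : ∀ x ∈ (Fintype.piFinset β).filter
        (fun x => (∏ a ∈ insert b S, (φ a (x a) : ℝ)) ≤ m), x b ∈ β b := by
      intro x hx
      exact Fintype.mem_piFinset.mp (Finset.mem_filter.mp hx).1 b
    rw [Finset.card_eq_sum_card_fiberwise hmaps]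
    -- identify each fiber
    have hfiber : ∀ v ∈ β b,
        (((Fintype.piFinset β).filter
            (fun x => (∏ a ∈ insert b S, (φ a (x a) : ℝ)) ≤ m)).filter
          (fun x => x b = v)).card
        = ((Fintype.piFinset (Function.update β b {v})).filter
            (fun x => (∏ a ∈ S, (φ a (x a) : ℝ)) ≤ m / (φ b v))).card := by
      intro v hv
      have hφv : (1:ℝ) ≤ (φ b v : ℝ) := by
        exact_mod_cast (hφ b (Finset.mem_insert_self b S) v hv).1
      have hφvpos : (0:ℝ) < (φ b v : ℝ) := lt_of_lt_of_le one_pos hφv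
      congr 1
      ext x
      simp only [Finset.mem_filter, Fintype.mem_piFinset, Function.update_apply]
      constructor
      · rintro ⟨⟨hx, hP⟩, hxb⟩
        refine ⟨fun a => ?_, ?_⟩
        · by_cases hab : a = b
          · subst hab; simp [hxb]
          · simp [hab, hx a]
        · rw [Finset.prod_insert hbS, hxb] at hP
          rw [le_div_iff₀ hφvpos]
          linarith [hP]
      · rintro ⟨hx, hP⟩
        have hxb : x b = v := by
          have := hx b
          simpa using this
        refine ⟨⟨fun a => ?_, ?_⟩, hxb⟩
        · by_cases hab : a = b
          · subst hab; rw [hxb]; exact hv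
          · have := hx a; simpa [hab] using this
        · rw [Finset.prod_insert hbS, hxb, mul_comm]
          rw [le_div_iff₀ hφvpos] at hP
          exact hP
    -- bound each fiber with ih
    have hbound : ∀ v ∈ β b,
        (((Fintype.piFinset (Function.update β b {v})).filter
            (fun x => (∏ a ∈ S, (φ a (x a) : ℝ)) ≤ m / (φ b v))).card : ℝ)
        ≤ 3 ^ S.card * (1 + Real.log w) ^ S.card * (m / (φ b v))
            * ∏ a ∈ Sᶜ.erase b, ((β a).card : ℝ) := by
      intro v hv
      have hφv : 1 ≤ φ b v := (hφ b (Finset.mem_insert_self b S) v hv).1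
      have hφvpos : (0:ℝ) < (φ b v : ℝ) := by exact_mod_cast hφv
      have h1 := ih (Function.update β b {v}) (m / φ b v) (by positivity)
        (fun a ha v' hv' => by
          have hab : a ≠ b := fun h => hbS (h ▸ ha)
          rw [Function.update_apply, if_neg hab] at hv'
          exact hφ a (Finset.mem_insert_of_mem ha) v' hv')
        (fun a ha z => by
          have hab : a ≠ b := fun h => hbS (h ▸ ha)
          rw [Function.update_apply, if_neg hab]
          exact hfib a (Finset.mem_insert_of_mem ha) z)
      refine h1.trans (le_of_eq ?_)
      have hbc : b ∈ Sᶜ := Finset.mem_compl.mpr hbS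
      rw [← Finset.mul_prod_erase _ _ hbc]
      have : ((Function.update β b {v} b).card : ℝ) = 1 := by
        rw [Function.update_self]; simp
      rw [this, one_mul]
      congr 1
      apply Finset.prod_congr rfl
      intro a ha
      have hab : a ≠ b := Finset.ne_of_mem_erase ha
      rw [Function.update_apply, if_neg hab]
    -- harmonic sum
    have hharm : (∑ v ∈ β b, 1 / (φ b v : ℝ)) ≤ 3 * (1 + Real.log w) := by
      have hmaps2 : ∀ v ∈ β b, φ b v ∈ Finset.Icc 1 w := by
        intro v hv
        have := hφ b (Finset.mem_insert_self b S) v hv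
        exact Finset.mem_Icc.mpr this
      rw [← Finset.sum_fiberwise_of_maps_to hmaps2 (fun v => 1 / (φ b v : ℝ))]
      calc ∑ z ∈ Finset.Icc 1 w, ∑ v ∈ (β b).filter (fun v => φ b v = z), 1 / (φ b v : ℝ)
          ≤ ∑ z ∈ Finset.Icc 1 w, 3 * (1 / (z : ℝ)) := by
            apply Finset.sum_le_sum
            intro z hz
            have hz1 : 1 ≤ z := (Finset.mem_Icc.mp hz).1
            have hzpos : (0:ℝ) < z := by exact_mod_cast hz1
            have heq : ∑ v ∈ (β b).filter (fun v => φ b v = z), 1 / (φ b v : ℝ)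
                = (((β b).filter (fun v => φ b v = z)).card : ℝ) * (1 / z) := by
              rw [Finset.sum_congr rfl (fun v hv => by
                rw [(Finset.mem_filter.mp hv).2]), Finset.sum_const, nsmul_eq_mul]
            rw [heq]
            apply mul_le_mul_of_nonneg_right _ (by positivity)
            exact_mod_cast hfib b (Finset.mem_insert_self b S) z
        _ = 3 * ∑ z ∈ Finset.Icc 1 w, 1 / (z : ℝ) := by rw [Finset.mul_sum]
        _ ≤ 3 * (1 + Real.log w) := by
            apply mul_le_mul_of_nonneg_left _ (by norm_num)
            simpa [one_div] using harmonic_le w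
    -- combine
    push_cast
    have hprodnn : (0:ℝ) ≤ ∏ a ∈ Sᶜ.erase b, ((β a).card : ℝ) :=
      Finset.prod_nonneg fun a _ => by positivity
    calc (∑ v ∈ β b, ((((Fintype.piFinset β).filter
            (fun x => (∏ a ∈ insert b S, (φ a (x a) : ℝ)) ≤ m)).filter
          (fun x => x b = v)).card : ℝ))
        ≤ ∑ v ∈ β b, 3 ^ S.card * (1 + Real.log w) ^ S.card * (m / (φ b v))
            * ∏ a ∈ Sᶜ.erase b, ((β a).card : ℝ) := by
          apply Finset.sum_le_sum
          intro v hv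
          rw [hfiber v hv]
          exact hbound v hv
      _ = (3 ^ S.card * (1 + Real.log w) ^ S.card * m
            * ∏ a ∈ Sᶜ.erase b, ((β a).card : ℝ)) * (∑ v ∈ β b, 1 / (φ b v : ℝ)) := by
          rw [Finset.mul_sum]
          apply Finset.sum_congr rfl
          intro v hv
          ring
      _ ≤ (3 ^ S.card * (1 + Real.log w) ^ S.card * m
            * ∏ a ∈ Sᶜ.erase b, ((β a).card : ℝ)) * (3 * (1 + Real.log w)) := by
          apply mul_le_mul_of_nonneg_left hharm
          have h3 : (0:ℝ) ≤ 3 ^ S.card * (1 + Real.log w) ^ S.card := by positivity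
          exact mul_nonneg (mul_nonneg h3 hm) hprodnn
      _ = 3 ^ (insert b S).card * (1 + Real.log w) ^ (insert b S).card * m
            * ∏ a ∈ (insert b S)ᶜ, ((β a).card : ℝ) := by
          rw [Finset.card_insert_of_notMem hbS, Finset.compl_insert]
          ring

end Stmt17Aux
namespace Stmt17Aux
open Finset
variable {dim : ℕ}

lemma pcl {w : ℕ} {C' : Finset (Fin dim)} {T : DTree dim} {u : Finset (Fin dim)}
    (hdd : T.distinctDims u) (x : Fin dim → ℕ) (hx : ∀ b, x b ∈ grid1 w)
    (a : Fin dim) (J : Set ℝ)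
    (hJ : J = Set.univ ∨ (∃ t', J = Set.Iio t' ∧ (x a : ℝ) < t') ∨
          (∃ t', J = Set.Ici t' ∧ t' ≤ (x a : ℝ)))
    (hJC : a ∉ C' → J = Set.univ) :
    fval w C' (fun _ v => sfun w v) T x a
      ≤ ((grid1 w).filter (fun v : ℕ => (v:ℝ) ∈ cIval T (ι x) a ∩ J)).card := by
  have hxa := mem_grid1.mp (hx a)
  induction T generalizing u with
  | leaf b =>
    simp only [cIval, Set.univ_inter, fval]
    by_cases hC : a ∈ C'
    · rw [if_pos hC]
      have hsx : sfun w (x a) ≤ x a := min_le_left _ _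
      have hsw : sfun w (x a) ≤ w + 1 - x a := min_le_right _ _
      rcases hJ with hJu | ⟨t', hJ', hlt⟩ | ⟨t', hJ', hge⟩
      · subst hJu
        refine le_trans (b := (Finset.Icc 1 w).card) ?_ (Finset.card_le_card ?_)
        · rw [Nat.card_Icc]; omega
        · intro v hv
          have hm := Finset.mem_Icc.mp hv
          simp only [Finset.mem_filter]
          exact ⟨mem_grid1.mpr ⟨hm.1, hm.2⟩, Set.mem_univ _⟩
      · subst hJ'
        refine le_trans (b := (Finset.Icc 1 (x a)).card) ?_ (Finset.card_le_card ?_)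
        · rw [Nat.card_Icc]; omega
        · intro v hv
          have hm := Finset.mem_Icc.mp hv
          simp only [Finset.mem_filter]
          refine ⟨mem_grid1.mpr ⟨hm.1, le_trans hm.2 hxa.2⟩, ?_⟩
          have hvx : (v:ℝ) ≤ (x a : ℝ) := by exact_mod_cast hm.2
          exact lt_of_le_of_lt hvx hlt
      · subst hJ'
        refine le_trans (b := (Finset.Icc (x a) w).card) ?_ (Finset.card_le_card ?_)
        · rw [Nat.card_Icc]; omega
        · intro v hv
          have hm := Finset.mem_Icc.mp hv
          simp only [Finset.mem_filter]
          refine ⟨mem_grid1.mpr ⟨le_trans hxa.1 hm.1, hm.2⟩, ?_⟩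
          have hvx : (x a : ℝ) ≤ (v:ℝ) := by exact_mod_cast hm.1
          exact le_trans hge hvx
    · rw [if_neg hC, hJC hC]
      refine le_trans (b := (Finset.Icc 1 w).card) ?_ (Finset.card_le_card ?_)
      · rw [Nat.card_Icc]; omega
      · intro v hv
        have hm := Finset.mem_Icc.mp hv
        simp only [Finset.mem_filter]
        exact ⟨mem_grid1.mpr ⟨hm.1, hm.2⟩, Set.mem_univ _⟩
  | node a' t l r ihl ihr =>
    obtain ⟨ha', hl, hr⟩ := hdd
    have hxa' := mem_grid1.mp (hx a')
    by_cases hxt : (x a' : ℝ) < t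
    · by_cases hne : a = a'
      · subst hne
        have hcu : cIval l (ι x) a = Set.univ :=
          cIval_of_mem_used hl (Finset.mem_insert_self a u) (ι x)
        have hset : cIval (DTree.node a t l r) (ι x) a = Set.Iio t := by
          show (if (x a : ℝ) < t then _ else _) = _
          rw [if_pos hxt, if_pos rfl, hcu, Set.inter_univ]
        rw [hset]
        have hceil : (x a : ℤ) < ⌈t⌉ := Int.lt_ceil.mpr (by exact_mod_cast hxt)
        have hmemt : ∀ v : ℕ, 1 ≤ v → v ≤ (min (w:ℤ) (⌈t⌉-1)).toNat → (v:ℝ) < t := by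
          intro v hv1 hv2
          have hvM : (v : ℤ) < ⌈t⌉ := by omega
          exact_mod_cast Int.lt_ceil.mp hvM
        have hMw : (min (w:ℤ) (⌈t⌉-1)).toNat ≤ w := by omega
        by_cases hC : a ∈ C'
        · have hfv : fval w C' (fun _ v => sfun w v) (DTree.node a t l r) x a
              = min (sfun w (x a)) ((min (w:ℤ) (⌈t⌉-1) - (x a) + 1).toNat) := by
            simp [fval, tdist, fval_of_mem_used hl (Finset.mem_insert_self a u), hC, hxt]
          rw [hfv]
          have hsx : sfun w (x a) ≤ x a := min_le_left _ _
          rcases hJ with hJu | ⟨t', hJ', hlt⟩ | ⟨t', hJ', hge⟩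
          · subst hJu
            refine le_trans (b := (Finset.Icc (x a) ((min (w:ℤ) (⌈t⌉-1)).toNat)).card)
              ?_ (Finset.card_le_card ?_)
            · rw [Nat.card_Icc]; omega
            · intro v hv
              have hm := Finset.mem_Icc.mp hv
              simp only [Finset.mem_filter]
              exact ⟨mem_grid1.mpr
                ⟨le_trans hxa.1 hm.1, le_trans hm.2 hMw⟩,
                hmemt v (le_trans hxa.1 hm.1) hm.2, Set.mem_univ _⟩
          · subst hJ'
            refine le_trans (b := (Finset.Icc 1 (x a)).card) ?_ (Finset.card_le_card ?_)
            · rw [Nat.card_Icc]; omega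
            · intro v hv
              have hm := Finset.mem_Icc.mp hv
              have hvx : (v:ℝ) ≤ (x a : ℝ) := by exact_mod_cast hm.2
              simp only [Finset.mem_filter]
              exact ⟨mem_grid1.mpr ⟨hm.1, le_trans hm.2 hxa.2⟩,
                lt_of_le_of_lt hvx hxt, lt_of_le_of_lt hvx hlt⟩
          · subst hJ'
            refine le_trans (b := (Finset.Icc (x a) ((min (w:ℤ) (⌈t⌉-1)).toNat)).card)
              ?_ (Finset.card_le_card ?_)
            · rw [Nat.card_Icc]; omega
            · intro v hv
              have hm := Finset.mem_Icc.mp hv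
              have hvx : (x a : ℝ) ≤ (v:ℝ) := by exact_mod_cast hm.1
              simp only [Finset.mem_filter]
              exact ⟨mem_grid1.mpr
                ⟨le_trans hxa.1 hm.1, le_trans hm.2 hMw⟩,
                hmemt v (le_trans hxa.1 hm.1) hm.2, le_trans hge hvx⟩
        · have hfv : fval w C' (fun _ v => sfun w v) (DTree.node a t l r) x a
              = (min (w:ℤ) (⌈t⌉-1)).toNat := by
            simp [fval, kside, hC, hxt]
          rw [hfv, hJC hC]
          refine le_trans (b := (Finset.Icc 1 ((min (w:ℤ) (⌈t⌉-1)).toNat)).card)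
            ?_ (Finset.card_le_card ?_)
          · rw [Nat.card_Icc]; omega
          · intro v hv
            have hm := Finset.mem_Icc.mp hv
            simp only [Finset.mem_filter]
            exact ⟨mem_grid1.mpr ⟨hm.1, le_trans hm.2 hMw⟩,
              hmemt v hm.1 hm.2, Set.mem_univ _⟩
      · have hset : cIval (DTree.node a' t l r) (ι x) a = cIval l (ι x) a := by
          show (if (x a' : ℝ) < t then _ else _) = _
          rw [if_pos hxt, if_neg hne, Set.univ_inter]
        have hfv : fval w C' (fun _ v => sfun w v) (DTree.node a' t l r) x a
            = fval w C' (fun _ v => sfun w v) l x a := by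
          simp [fval, hne, hxt]
        rw [hset, hfv]
        exact ihl hl
    · by_cases hne : a = a'
      · subst hne
        have hcu : cIval r (ι x) a = Set.univ :=
          cIval_of_mem_used hr (Finset.mem_insert_self a u) (ι x)
        have hset : cIval (DTree.node a t l r) (ι x) a = Set.Ici t := by
          show (if (x a : ℝ) < t then _ else _) = _
          rw [if_neg hxt, if_pos rfl, hcu, Set.inter_univ]
        rw [hset]
        have htx : t ≤ (x a : ℝ) := not_lt.mp hxt
        have hceil : ⌈t⌉ ≤ (x a : ℤ) := Int.ceil_le.mpr (by exact_mod_cast htx)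
        have hmemt : ∀ v : ℕ, (max 1 ⌈t⌉).toNat ≤ v → t ≤ (v:ℝ) := by
          intro v hv
          have hvM : ⌈t⌉ ≤ (v : ℤ) := by omega
          exact_mod_cast Int.ceil_le.mp hvM
        have hMx : (max 1 ⌈t⌉).toNat ≤ x a := by omega
        have hM1 : 1 ≤ (max 1 ⌈t⌉).toNat := by omega
        by_cases hC : a ∈ C'
        · have hfv : fval w C' (fun _ v => sfun w v) (DTree.node a t l r) x a
              = min (sfun w (x a)) (((x a : ℤ) - max 1 ⌈t⌉ + 1).toNat) := by
            simp [fval, tdist, fval_of_mem_used hr (Finset.mem_insert_self a u), hC, hxt]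
          rw [hfv]
          have hsw : sfun w (x a) ≤ w + 1 - x a := min_le_right _ _
          rcases hJ with hJu | ⟨t', hJ', hlt⟩ | ⟨t', hJ', hge⟩
          · subst hJu
            refine le_trans (b := (Finset.Icc ((max 1 ⌈t⌉).toNat) (x a)).card)
              ?_ (Finset.card_le_card ?_)
            · rw [Nat.card_Icc]; omega
            · intro v hv
              have hm := Finset.mem_Icc.mp hv
              simp only [Finset.mem_filter]
              exact ⟨mem_grid1.mpr
                ⟨le_trans hM1 hm.1, le_trans hm.2 hxa.2⟩,
                hmemt v hm.1, Set.mem_univ _⟩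
          · subst hJ'
            refine le_trans (b := (Finset.Icc ((max 1 ⌈t⌉).toNat) (x a)).card)
              ?_ (Finset.card_le_card ?_)
            · rw [Nat.card_Icc]; omega
            · intro v hv
              have hm := Finset.mem_Icc.mp hv
              have hvx : (v:ℝ) ≤ (x a : ℝ) := by exact_mod_cast hm.2
              simp only [Finset.mem_filter]
              exact ⟨mem_grid1.mpr
                ⟨le_trans hM1 hm.1, le_trans hm.2 hxa.2⟩,
                hmemt v hm.1, lt_of_le_of_lt hvx hlt⟩
          · subst hJ'
            refine le_trans (b := (Finset.Icc (x a) w).card) ?_ (Finset.card_le_card ?_)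
            · rw [Nat.card_Icc]; omega
            · intro v hv
              have hm := Finset.mem_Icc.mp hv
              have hvx : (x a : ℝ) ≤ (v:ℝ) := by exact_mod_cast hm.1
              simp only [Finset.mem_filter]
              exact ⟨mem_grid1.mpr ⟨le_trans hxa.1 hm.1, hm.2⟩,
                le_trans htx hvx, le_trans hge hvx⟩
        · have hfv : fval w C' (fun _ v => sfun w v) (DTree.node a t l r) x a
              = ((w:ℤ) - max 1 ⌈t⌉ + 1).toNat := by
            simp [fval, kside, hC, hxt]
          rw [hfv, hJC hC]
          refine le_trans (b := (Finset.Icc ((max 1 ⌈t⌉).toNat) w).card)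
            ?_ (Finset.card_le_card ?_)
          · rw [Nat.card_Icc]; omega
          · intro v hv
            have hm := Finset.mem_Icc.mp hv
            simp only [Finset.mem_filter]
            exact ⟨mem_grid1.mpr ⟨le_trans hM1 hm.1, hm.2⟩,
              hmemt v hm.1, Set.mem_univ _⟩
      · have hset : cIval (DTree.node a' t l r) (ι x) a = cIval r (ι x) a := by
          show (if (x a' : ℝ) < t then _ else _) = _
          rw [if_neg hxt, if_neg hne, Set.univ_inter]
        have hfv : fval w C' (fun _ v => sfun w v) (DTree.node a' t l r) x a
            = fval w C' (fun _ v => sfun w v) r x a := by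
          simp [fval, hne, hxt]
        rw [hset, hfv]
        exact ihr hr

end Stmt17Aux
namespace Stmt17Aux
open Finset
variable {dim : ℕ}

lemma filterL_eq (w : ℕ) (t : ℝ) :
    ((grid1 w).filter (fun v : ℕ => (v:ℝ) < t))
      = Finset.Icc 1 ((min (w:ℤ) (⌈t⌉-1)).toNat) := by
  ext v
  simp only [Finset.mem_filter, mem_grid1, Finset.mem_Icc]
  constructor
  · rintro ⟨⟨h1, h2⟩, h3⟩
    have hv : (v:ℤ) < ⌈t⌉ := Int.lt_ceil.mpr (by exact_mod_cast h3)
    omega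
  · rintro ⟨h1, h2⟩
    have hv : (v:ℤ) < ⌈t⌉ := by omega
    exact ⟨⟨h1, by omega⟩, by exact_mod_cast Int.lt_ceil.mp hv⟩

lemma filterR_eq (w : ℕ) (t : ℝ) :
    ((grid1 w).filter (fun v : ℕ => ¬ (v:ℝ) < t))
      = Finset.Icc ((max 1 ⌈t⌉).toNat) w := by
  ext v
  simp only [Finset.mem_filter, mem_grid1, Finset.mem_Icc, not_lt]
  constructor
  · rintro ⟨⟨h1, h2⟩, h3⟩
    have hv : ⌈t⌉ ≤ (v:ℤ) := Int.ceil_le.mpr (by exact_mod_cast h3)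
    omega
  · rintro ⟨h1, h2⟩
    have hv : ⌈t⌉ ≤ (v:ℤ) := by omega
    exact ⟨⟨by omega, h2⟩, by exact_mod_cast Int.ceil_le.mp hv⟩

lemma filterL_card (w : ℕ) (t : ℝ) :
    ((grid1 w).filter (fun v : ℕ => (v:ℝ) < t)).card = (min (w:ℤ) (⌈t⌉-1)).toNat := by
  rw [filterL_eq, Nat.card_Icc]
  omega

lemma filterR_card (w : ℕ) (t : ℝ) :
    ((grid1 w).filter (fun v : ℕ => ¬ (v:ℝ) < t)).card
      = ((w:ℤ) - max 1 ⌈t⌉ + 1).toNat := by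
  rw [filterR_eq, Nat.card_Icc]
  omega

lemma piFinset_split {w : ℕ} {β : Fin dim → Finset ℕ} {a' : Fin dim} (t : ℝ)
    (hfull : β a' = grid1 w) (P : (Fin dim → ℕ) → Prop) [DecidablePred P] :
    ((Fintype.piFinset β).filter P).card
      = ((Fintype.piFinset (Function.update β a'
            ((grid1 w).filter (fun v : ℕ => (v:ℝ) < t)))).filter P).card
        + ((Fintype.piFinset (Function.update β a'
            ((grid1 w).filter (fun v : ℕ => ¬ (v:ℝ) < t)))).filter P).card := by
  rw [← Finset.card_union_of_disjoint ?hd]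
  case hd =>
    rw [Finset.disjoint_left]
    intro y hy1 hy2
    have h1 := (Finset.mem_filter.mp hy1).1
    have h2 := (Finset.mem_filter.mp hy2).1
    have h1' := Fintype.mem_piFinset.mp h1 a'
    have h2' := Fintype.mem_piFinset.mp h2 a'
    rw [Function.update_self] at h1' h2'
    exact (Finset.mem_filter.mp h2').2 (Finset.mem_filter.mp h1').2
  congr 1
  ext y
  simp only [Finset.mem_union, Finset.mem_filter, Fintype.mem_piFinset]
  constructor
  · rintro ⟨hy, hP⟩
    by_cases hyt : (y a' : ℝ) < t
    · left
      refine ⟨fun a => ?_, hP⟩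
      rw [Function.update_apply]
      split_ifs with h
      · subst h
        rw [Finset.mem_filter]
        exact ⟨hfull ▸ hy a, hyt⟩
      · exact hy a
    · right
      refine ⟨fun a => ?_, hP⟩
      rw [Function.update_apply]
      split_ifs with h
      · subst h
        rw [Finset.mem_filter]
        exact ⟨hfull ▸ hy a, hyt⟩
      · exact hy a
  · rintro (⟨hy, hP⟩ | ⟨hy, hP⟩) <;>
    · refine ⟨fun a => ?_, hP⟩
      have := hy a
      rw [Function.update_apply] at this
      split_ifs at this with h
      · subst h
        rw [Finset.mem_filter] at this
        exact hfull ▸ this.1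
      · exact this

end Stmt17Aux
namespace Stmt17Aux
open Finset
variable {dim : ℕ}

lemma count_lemma {w : ℕ} (hw : 1 ≤ w) (C' : Finset (Fin dim)) (T : DTree dim) :
    ∀ (u : Finset (Fin dim)) (φ : Fin dim → ℕ → ℕ) (β : Fin dim → Finset ℕ) (m : ℝ),
    T.distinctDims u →
    (∀ a, a ∉ u → β a = grid1 w) →
    (∀ a, β a ⊆ grid1 w) →
    (∀ a ∈ C', ∀ v ∈ β a, 1 ≤ φ a v ∧ φ a v ≤ w) →
    (∀ a ∈ C', ∀ z : ℕ, ((β a).filter (fun v => φ a v = z)).card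
        ≤ if a ∈ u then 3 else 2) →
    0 ≤ m →
    (((Fintype.piFinset β).filter
        (fun x => (∏ a, (fval w C' φ T x a : ℝ)) ≤ m)).card : ℝ)
      ≤ 2 ^ tsize T * 3 ^ C'.card * (1 + Real.log w) ^ C'.card * m
          * ∏ a ∈ C'ᶜ, (((β a).card : ℝ) / w) := by
  have hwR : (0:ℝ) < (w:ℝ) := by exact_mod_cast hw
  induction T with
  | leaf b =>
    intro u φ β m hdd hfull hsubg hφ hfib hm
    have hsplit : ∀ x : Fin dim → ℕ,
        (∏ a, (fval w C' φ (DTree.leaf b) x a : ℝ))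
          = (∏ a ∈ C', (φ a (x a) : ℝ)) * (w:ℝ) ^ (C'ᶜ.card) := by
      intro x
      rw [← Finset.prod_filter_mul_prod_filter_not Finset.univ (· ∈ C')]
      congr 1
      · rw [show Finset.univ.filter (· ∈ C') = C' from by ext a; simp]
        exact Finset.prod_congr rfl (fun a ha => by simp [fval, ha])
      · rw [show Finset.univ.filter (· ∉ C') = C'ᶜ from by ext a; simp]
        have hval : ∀ a ∈ C'ᶜ, ((fval w C' φ (DTree.leaf b) x a : ℝ)) = (w:ℝ) :=
          fun a ha => by simp [fval, Finset.mem_compl.mp ha]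
        rw [Finset.prod_congr rfl hval, Finset.prod_const]
    have hpow : (0:ℝ) < (w:ℝ) ^ C'ᶜ.card := by positivity
    have hcongr : (Fintype.piFinset β).filter
        (fun x => (∏ a, (fval w C' φ (DTree.leaf b) x a : ℝ)) ≤ m)
        = (Fintype.piFinset β).filter
          (fun x => (∏ a ∈ C', (φ a (x a) : ℝ)) ≤ m / (w:ℝ) ^ C'ᶜ.card) := by
      apply Finset.filter_congr
      intro x _
      rw [hsplit x, ← le_div_iff₀ hpow]
    rw [hcongr]
    refine (hyp_count hw C' β φ (m / (w:ℝ) ^ C'ᶜ.card) (by positivity) hφ ?_).trans ?_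
    · intro a ha z
      exact (hfib a ha z).trans (by split_ifs <;> norm_num)
    · have hprodd : ∏ a ∈ C'ᶜ, (((β a).card : ℝ) / w)
          = (∏ a ∈ C'ᶜ, ((β a).card:ℝ)) / (w:ℝ) ^ C'ᶜ.card := by
        rw [Finset.prod_div_distrib, Finset.prod_const]
      rw [hprodd]
      apply le_of_eq
      simp only [tsize, pow_zero, one_mul]
      rw [div_eq_mul_inv, div_eq_mul_inv]
      ring
  | node a' t l r ihl ihr =>
    intro u φ β m hdd hfull hsubg hφ hfib hm
    obtain ⟨ha', hl, hr⟩ := hdd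
    rw [piFinset_split t (hfull a' ha')]
    push_cast
    set βL := Function.update β a' ((grid1 w).filter (fun v : ℕ => (v:ℝ) < t)) with hβLd
    set βR := Function.update β a' ((grid1 w).filter (fun v : ℕ => ¬ (v:ℝ) < t)) with hβRd
    have hβLa : βL a' = (grid1 w).filter (fun v : ℕ => (v:ℝ) < t) := by
      rw [hβLd]; exact Function.update_self _ _ _
    have hβRa : βR a' = (grid1 w).filter (fun v : ℕ => ¬ (v:ℝ) < t) := by
      rw [hβRd]; exact Function.update_self _ _ _
    have hprod0 : (0:ℝ) ≤ ∏ a ∈ C'ᶜ, (((β a).card : ℝ) / w) :=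
      Finset.prod_nonneg (fun a _ => by positivity)
    have hK0 : (0:ℝ) ≤ 3 ^ C'.card * (1 + Real.log w) ^ C'.card * m
        * ∏ a ∈ C'ᶜ, (((β a).card : ℝ) / w) := by
      have h1 : (0:ℝ) ≤ (1 + Real.log w) ^ C'.card := by
        have := Real.log_nonneg (by exact_mod_cast hw : (1:ℝ) ≤ (w:ℝ))
        positivity
      have h2 : (0:ℝ) ≤ (3:ℝ) ^ C'.card := by positivity
      exact mul_nonneg (mul_nonneg (mul_nonneg h2 h1) hm) hprod0
    have hL : (((Fintype.piFinset βL).filter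
        (fun x => (∏ a, (fval w C' φ (DTree.node a' t l r) x a : ℝ)) ≤ m)).card : ℝ)
        ≤ 2 ^ tsize l * (3 ^ C'.card * (1 + Real.log w) ^ C'.card * m
          * ∏ a ∈ C'ᶜ, (((β a).card : ℝ) / w)) := by
      by_cases hC : a' ∈ C'
      · -- update φ at a'
        set φL : Fin dim → ℕ → ℕ := Function.update φ a'
          (fun v => min (φ a' v) ((min (w:ℤ) (⌈t⌉-1) - v + 1).toNat)) with hφLd
        have hφLa : φL a' = fun v => min (φ a' v) ((min (w:ℤ) (⌈t⌉-1) - v + 1).toNat) := by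
          rw [hφLd]; exact Function.update_self _ _ _
        have hfv : ∀ x ∈ Fintype.piFinset βL, ∀ a : Fin dim,
            fval w C' φ (DTree.node a' t l r) x a = fval w C' φL l x a := by
          intro x hx a
          have hxmem := Fintype.mem_piFinset.mp hx a'
          rw [hβLa, Finset.mem_filter] at hxmem
          have hxt : (x a' : ℝ) < t := hxmem.2
          by_cases haa : a = a'
          · subst haa
            have h1 : fval w C' φ (DTree.node a t l r) x a
                = min (φ a (x a)) ((min (w:ℤ) (⌈t⌉-1) - (x a) + 1).toNat) := by
              simp [fval, tdist, hxt, hC, fval_of_mem_used hl (Finset.mem_insert_self a u)]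
            have h2 : fval w C' φL l x a = φL a (x a) := by
              rw [fval_of_mem_used hl (Finset.mem_insert_self a u), if_pos hC]
            rw [h1, h2, hφLa]
          · have h1 : fval w C' φ (DTree.node a' t l r) x a = fval w C' φ l x a := by
              simp [fval, haa, hxt]
            have h2 : fval w C' φL l x a = fval w C' φ l x a :=
              fval_congr l x a (by rw [hφLd]; exact Function.update_of_ne haa _ _)
            rw [h1, h2]
        have hcongr : (Fintype.piFinset βL).filter
            (fun x => (∏ a, (fval w C' φ (DTree.node a' t l r) x a : ℝ)) ≤ m)
            = (Fintype.piFinset βL).filter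
              (fun x => (∏ a, (fval w C' φL l x a : ℝ)) ≤ m) := by
          apply Finset.filter_congr
          intro x hx
          rw [Finset.prod_congr rfl (fun a _ => by rw [hfv x hx a])]
        rw [hcongr]
        refine (ihl (insert a' u) φL βL m hl ?_ ?_ ?_ ?_ hm).trans ?_
        · intro a ha
          have h1 : a ≠ a' := fun h => ha (h ▸ Finset.mem_insert_self a' u)
          rw [hβLd, Function.update_of_ne h1]
          exact hfull a (fun h => ha (Finset.mem_insert_of_mem h))
        · intro a
          by_cases h1 : a = a'
          · subst h1; rw [hβLa]; exact Finset.filter_subset _ _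
          · rw [hβLd, Function.update_of_ne h1]; exact hsubg a
        · intro a ha v hv
          by_cases h1 : a = a'
          · subst h1
            rw [hβLa, Finset.mem_filter, mem_grid1] at hv
            rw [hφLa]
            have hφv := hφ a ha v (by rw [hfull a ha']; exact mem_grid1.mpr hv.1)
            have hceil : (v:ℤ) < ⌈t⌉ := Int.lt_ceil.mpr (by exact_mod_cast hv.2)
            have hg : 1 ≤ ((min (w:ℤ) (⌈t⌉-1) - (v:ℤ) + 1).toNat) := by omega
            have h2φ := hφv.2
            refine ⟨?_, ?_⟩
            · show 1 ≤ min (φ a v) ((min (w:ℤ) (⌈t⌉-1) - (v:ℤ) + 1).toNat)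
              omega
            · show min (φ a v) ((min (w:ℤ) (⌈t⌉-1) - (v:ℤ) + 1).toNat) ≤ w
              omega
          · rw [hβLd, Function.update_of_ne h1] at hv
            rw [hφLd, Function.update_of_ne h1]
            exact hφ a ha v hv
        · intro a ha z
          by_cases h1 : a = a'
          · subst h1
            rw [if_pos (Finset.mem_insert_self a u), hβLa, hφLa]
            have hsubU : ((grid1 w).filter (fun v : ℕ => (v:ℝ) < t)).filter
                  (fun v => min (φ a v) ((min (w:ℤ) (⌈t⌉-1) - v + 1).toNat) = z)
                ⊆ ((β a).filter (fun v => φ a v = z))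
                  ∪ ((grid1 w).filter (fun v : ℕ => (v:ℝ) < t)).filter
                      (fun v : ℕ => ((min (w:ℤ) (⌈t⌉-1) - (v:ℤ) + 1).toNat) = z) := by
              intro v hv
              rw [Finset.mem_filter] at hv
              rcases min_cases (φ a v) ((min (w:ℤ) (⌈t⌉-1) - v + 1).toNat) with
                ⟨he, _⟩ | ⟨he, _⟩
              · apply Finset.mem_union_left
                rw [Finset.mem_filter]
                refine ⟨?_, by rw [← he]; exact hv.2⟩
                rw [hfull a ha']
                exact (Finset.mem_filter.mp hv.1).1
              · apply Finset.mem_union_right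
                rw [Finset.mem_filter]
                exact ⟨hv.1, by rw [← he]; exact hv.2⟩
            refine le_trans (Finset.card_le_card hsubU) ?_
            refine le_trans (Finset.card_union_le _ _) ?_
            have hc1 : ((β a).filter (fun v => φ a v = z)).card ≤ 2 := by
              have h2 := hfib a hC z
              rw [if_neg ha'] at h2
              exact h2
            have hc2 : (((grid1 w).filter (fun v : ℕ => (v:ℝ) < t)).filter
                (fun v : ℕ => ((min (w:ℤ) (⌈t⌉-1) - (v:ℤ) + 1).toNat) = z)).card ≤ 1 := by
              rw [Finset.card_le_one]
              intro v1 hv1 v2 hv2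
              simp only [Finset.mem_filter, mem_grid1] at hv1 hv2
              have h1 : (v1:ℤ) < ⌈t⌉ := Int.lt_ceil.mpr (by exact_mod_cast hv1.1.2)
              have h2 : (v2:ℤ) < ⌈t⌉ := Int.lt_ceil.mpr (by exact_mod_cast hv2.1.2)
              have e1 := hv1.2
              have e2 := hv2.2
              omega
            omega
          · rw [hβLd, Function.update_of_ne h1, hφLd, Function.update_of_ne h1]
            have h2 := hfib a ha z
            by_cases h3 : a ∈ u
            · rw [if_pos h3] at h2
              rw [if_pos (Finset.mem_insert_of_mem h3)]
              exact h2
            · rw [if_neg h3] at h2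
              rw [if_neg (by simp [Finset.mem_insert, h1, h3])]
              exact h2
        · apply le_of_eq
          have hPP : ∏ a ∈ C'ᶜ, (((βL a).card:ℝ)/w) = ∏ a ∈ C'ᶜ, (((β a).card:ℝ)/w) := by
            apply Finset.prod_congr rfl
            intro a ha
            have h1 : a ≠ a' := fun h => (Finset.mem_compl.mp ha) (h ▸ hC)
            rw [hβLd, Function.update_of_ne h1]
          rw [hPP]
          ring
      · -- a' ∉ C'
        by_cases hk : (min (w:ℤ) (⌈t⌉-1)).toNat = 0
        · have hcard0 : (Fintype.piFinset βL).card = 0 := by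
            rw [Fintype.card_piFinset]
            apply Finset.prod_eq_zero (Finset.mem_univ a')
            rw [hβLa, filterL_card, hk]
          have hf0 : ((Fintype.piFinset βL).filter
              (fun x => (∏ a, (fval w C' φ (DTree.node a' t l r) x a : ℝ)) ≤ m)).card = 0 := by
            have hle := Finset.card_filter_le (Fintype.piFinset βL)
              (fun x => (∏ a, (fval w C' φ (DTree.node a' t l r) x a : ℝ)) ≤ m)
            omega
          rw [hf0]
          push_cast
          exact mul_nonneg (by positivity) hK0
        · have hk1 : 1 ≤ (min (w:ℤ) (⌈t⌉-1)).toNat := Nat.one_le_iff_ne_zero.mpr hk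
          have hkLpos : (0:ℝ) < (((min (w:ℤ) (⌈t⌉-1)).toNat : ℕ) : ℝ) := by
            exact_mod_cast hk1
          have hfv : ∀ x ∈ Fintype.piFinset βL,
              (∏ a, (fval w C' φ (DTree.node a' t l r) x a : ℝ))
                = (((min (w:ℤ) (⌈t⌉-1)).toNat : ℝ)/w) * ∏ a, (fval w C' φ l x a : ℝ) := by
            intro x hx
            have hxmem := Fintype.mem_piFinset.mp hx a'
            rw [hβLa, Finset.mem_filter] at hxmem
            have hxt : (x a' : ℝ) < t := hxmem.2
            have h1 : fval w C' φ (DTree.node a' t l r) x a' = (min (w:ℤ) (⌈t⌉-1)).toNat := by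
              simp [fval, kside, hC, hxt]
            have h2 : fval w C' φ l x a' = w := by
              rw [fval_of_mem_used hl (Finset.mem_insert_self a' u), if_neg hC]
            have h3 : ∀ a, a ≠ a' →
                fval w C' φ (DTree.node a' t l r) x a = fval w C' φ l x a := by
              intro a ha
              simp [fval, ha, hxt]
            have e1 : (∏ a, (fval w C' φ (DTree.node a' t l r) x a : ℝ))
                = (∏ a ∈ Finset.univ.erase a', (fval w C' φ l x a : ℝ))
                    * ((min (w:ℤ) (⌈t⌉-1)).toNat : ℝ) := by
              rw [← Finset.prod_erase_mul Finset.univ _ (Finset.mem_univ a'), h1]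
              congr 1
              exact Finset.prod_congr rfl
                (fun a ha => by rw [h3 a (Finset.ne_of_mem_erase ha)])
            have e2 : (∏ a, (fval w C' φ l x a : ℝ))
                = (∏ a ∈ Finset.univ.erase a', (fval w C' φ l x a : ℝ)) * (w:ℝ) := by
              rw [← Finset.prod_erase_mul Finset.univ _ (Finset.mem_univ a'), h2]
            rw [e1, e2]
            field_simp
          have hcongr : (Fintype.piFinset βL).filter
              (fun x => (∏ a, (fval w C' φ (DTree.node a' t l r) x a : ℝ)) ≤ m)
              = (Fintype.piFinset βL).filter
                (fun x => (∏ a, (fval w C' φ l x a : ℝ))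
                  ≤ m * w / ((min (w:ℤ) (⌈t⌉-1)).toNat : ℝ)) := by
            apply Finset.filter_congr
            intro x hx
            rw [hfv x hx, ← div_div_eq_mul_div,
              le_div_iff₀ (div_pos hkLpos hwR), mul_comm]
          rw [hcongr]
          have hm' : 0 ≤ m * w / ((min (w:ℤ) (⌈t⌉-1)).toNat : ℝ) := by positivity
          refine (ihl (insert a' u) φ βL (m * w / ((min (w:ℤ) (⌈t⌉-1)).toNat : ℝ))
            hl ?_ ?_ ?_ ?_ hm').trans ?_
          · intro a ha
            have h1 : a ≠ a' := fun h => ha (h ▸ Finset.mem_insert_self a' u)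
            rw [hβLd, Function.update_of_ne h1]
            exact hfull a (fun h => ha (Finset.mem_insert_of_mem h))
          · intro a
            by_cases h1 : a = a'
            · subst h1; rw [hβLa]; exact Finset.filter_subset _ _
            · rw [hβLd, Function.update_of_ne h1]; exact hsubg a
          · intro a ha v hv
            have h1 : a ≠ a' := fun h => hC (h ▸ ha)
            rw [hβLd, Function.update_of_ne h1] at hv
            exact hφ a ha v hv
          · intro a ha z
            have h1 : a ≠ a' := fun h => hC (h ▸ ha)
            rw [hβLd, Function.update_of_ne h1]
            have h2 := hfib a ha z
            by_cases h3 : a ∈ u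
            · rw [if_pos h3] at h2
              rw [if_pos (Finset.mem_insert_of_mem h3)]
              exact h2
            · rw [if_neg h3] at h2
              rw [if_neg (by simp [Finset.mem_insert, h1, h3])]
              exact h2
          · apply le_of_eq
            have ha'c : a' ∈ C'ᶜ := Finset.mem_compl.mpr hC
            have hsplitP : ∏ a ∈ C'ᶜ, (((βL a).card:ℝ)/w)
                = (((min (w:ℤ) (⌈t⌉-1)).toNat : ℝ)/w)
                    * ∏ a ∈ C'ᶜ.erase a', (((β a).card:ℝ)/w) := by
              rw [← Finset.mul_prod_erase _ _ ha'c, hβLa, filterL_card]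
              congr 1
              apply Finset.prod_congr rfl
              intro a ha
              rw [hβLd, Function.update_of_ne (Finset.ne_of_mem_erase ha)]
            have hsplitQ : ∏ a ∈ C'ᶜ, (((β a).card:ℝ)/w)
                = ((w:ℝ)/w) * ∏ a ∈ C'ᶜ.erase a', (((β a).card:ℝ)/w) := by
              rw [← Finset.mul_prod_erase _ _ ha'c, hfull a' ha', card_grid1]
            rw [hsplitP, hsplitQ]
            generalize (((min (w:ℤ) (⌈t⌉-1)).toNat : ℕ) : ℝ) = K at hkLpos ⊢
            generalize (∏ a ∈ C'ᶜ.erase a', (((β a).card:ℝ)/w)) = P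
            generalize Real.log w = L
            field_simp
    have hR : (((Fintype.piFinset βR).filter
        (fun x => (∏ a, (fval w C' φ (DTree.node a' t l r) x a : ℝ)) ≤ m)).card : ℝ)
        ≤ 2 ^ tsize r * (3 ^ C'.card * (1 + Real.log w) ^ C'.card * m
          * ∏ a ∈ C'ᶜ, (((β a).card : ℝ) / w)) := by
      by_cases hC : a' ∈ C'
      · set φR : Fin dim → ℕ → ℕ := Function.update φ a'
          (fun v => min (φ a' v) (((v:ℤ) - max 1 ⌈t⌉ + 1).toNat)) with hφRd
        have hφRa : φR a' = fun v => min (φ a' v) (((v:ℤ) - max 1 ⌈t⌉ + 1).toNat) := by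
          rw [hφRd]; exact Function.update_self _ _ _
        have hfv : ∀ x ∈ Fintype.piFinset βR, ∀ a : Fin dim,
            fval w C' φ (DTree.node a' t l r) x a = fval w C' φR r x a := by
          intro x hx a
          have hxmem := Fintype.mem_piFinset.mp hx a'
          rw [hβRa, Finset.mem_filter] at hxmem
          have hxt : ¬ (x a' : ℝ) < t := hxmem.2
          by_cases haa : a = a'
          · subst haa
            have h1 : fval w C' φ (DTree.node a t l r) x a
                = min (φ a (x a)) (((x a : ℤ) - max 1 ⌈t⌉ + 1).toNat) := by
              simp [fval, tdist, hxt, hC, fval_of_mem_used hr (Finset.mem_insert_self a u)]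
            have h2 : fval w C' φR r x a = φR a (x a) := by
              rw [fval_of_mem_used hr (Finset.mem_insert_self a u), if_pos hC]
            rw [h1, h2, hφRa]
          · have h1 : fval w C' φ (DTree.node a' t l r) x a = fval w C' φ r x a := by
              simp [fval, haa, hxt]
            have h2 : fval w C' φR r x a = fval w C' φ r x a :=
              fval_congr r x a (by rw [hφRd]; exact Function.update_of_ne haa _ _)
            rw [h1, h2]
        have hcongr : (Fintype.piFinset βR).filter
            (fun x => (∏ a, (fval w C' φ (DTree.node a' t l r) x a : ℝ)) ≤ m)
            = (Fintype.piFinset βR).filter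
              (fun x => (∏ a, (fval w C' φR r x a : ℝ)) ≤ m) := by
          apply Finset.filter_congr
          intro x hx
          rw [Finset.prod_congr rfl (fun a _ => by rw [hfv x hx a])]
        rw [hcongr]
        refine (ihr (insert a' u) φR βR m hr ?_ ?_ ?_ ?_ hm).trans ?_
        · intro a ha
          have h1 : a ≠ a' := fun h => ha (h ▸ Finset.mem_insert_self a' u)
          rw [hβRd, Function.update_of_ne h1]
          exact hfull a (fun h => ha (Finset.mem_insert_of_mem h))
        · intro a
          by_cases h1 : a = a'
          · subst h1; rw [hβRa]; exact Finset.filter_subset _ _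
          · rw [hβRd, Function.update_of_ne h1]; exact hsubg a
        · intro a ha v hv
          by_cases h1 : a = a'
          · subst h1
            rw [hβRa, Finset.mem_filter, mem_grid1] at hv
            rw [hφRa]
            have hφv := hφ a ha v (by rw [hfull a ha']; exact mem_grid1.mpr hv.1)
            have hceil : ⌈t⌉ ≤ (v:ℤ) := Int.ceil_le.mpr (by exact_mod_cast not_lt.mp hv.2)
            have hg : 1 ≤ (((v:ℤ) - max 1 ⌈t⌉ + 1).toNat) := by omega
            have h2φ := hφv.2
            refine ⟨?_, ?_⟩
            · show 1 ≤ min (φ a v) (((v:ℤ) - max 1 ⌈t⌉ + 1).toNat)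
              omega
            · show min (φ a v) (((v:ℤ) - max 1 ⌈t⌉ + 1).toNat) ≤ w
              omega
          · rw [hβRd, Function.update_of_ne h1] at hv
            rw [hφRd, Function.update_of_ne h1]
            exact hφ a ha v hv
        · intro a ha z
          by_cases h1 : a = a'
          · subst h1
            rw [if_pos (Finset.mem_insert_self a u), hβRa, hφRa]
            have hsubU : ((grid1 w).filter (fun v : ℕ => ¬ (v:ℝ) < t)).filter
                  (fun v => min (φ a v) (((v:ℤ) - max 1 ⌈t⌉ + 1).toNat) = z)
                ⊆ ((β a).filter (fun v => φ a v = z))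
                  ∪ ((grid1 w).filter (fun v : ℕ => ¬ (v:ℝ) < t)).filter
                      (fun v : ℕ => (((v:ℤ) - max 1 ⌈t⌉ + 1).toNat) = z) := by
              intro v hv
              rw [Finset.mem_filter] at hv
              rcases min_cases (φ a v) (((v:ℤ) - max 1 ⌈t⌉ + 1).toNat) with
                ⟨he, _⟩ | ⟨he, _⟩
              · apply Finset.mem_union_left
                rw [Finset.mem_filter]
                refine ⟨?_, by rw [← he]; exact hv.2⟩
                rw [hfull a ha']
                exact (Finset.mem_filter.mp hv.1).1
              · apply Finset.mem_union_right
                rw [Finset.mem_filter]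
                exact ⟨hv.1, by rw [← he]; exact hv.2⟩
            refine le_trans (Finset.card_le_card hsubU) ?_
            refine le_trans (Finset.card_union_le _ _) ?_
            have hc1 : ((β a).filter (fun v => φ a v = z)).card ≤ 2 := by
              have h2 := hfib a hC z
              rw [if_neg ha'] at h2
              exact h2
            have hc2 : (((grid1 w).filter (fun v : ℕ => ¬ (v:ℝ) < t)).filter
                (fun v : ℕ => (((v:ℤ) - max 1 ⌈t⌉ + 1).toNat) = z)).card ≤ 1 := by
              rw [Finset.card_le_one]
              intro v1 hv1 v2 hv2
              simp only [Finset.mem_filter, mem_grid1] at hv1 hv2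
              have h1 : ⌈t⌉ ≤ (v1:ℤ) := Int.ceil_le.mpr (by exact_mod_cast not_lt.mp hv1.1.2)
              have h2 : ⌈t⌉ ≤ (v2:ℤ) := Int.ceil_le.mpr (by exact_mod_cast not_lt.mp hv2.1.2)
              have e1 := hv1.2
              have e2 := hv2.2
              omega
            omega
          · rw [hβRd, Function.update_of_ne h1, hφRd, Function.update_of_ne h1]
            have h2 := hfib a ha z
            by_cases h3 : a ∈ u
            · rw [if_pos h3] at h2
              rw [if_pos (Finset.mem_insert_of_mem h3)]
              exact h2
            · rw [if_neg h3] at h2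
              rw [if_neg (by simp [Finset.mem_insert, h1, h3])]
              exact h2
        · apply le_of_eq
          have hPP : ∏ a ∈ C'ᶜ, (((βR a).card:ℝ)/w) = ∏ a ∈ C'ᶜ, (((β a).card:ℝ)/w) := by
            apply Finset.prod_congr rfl
            intro a ha
            have h1 : a ≠ a' := fun h => (Finset.mem_compl.mp ha) (h ▸ hC)
            rw [hβRd, Function.update_of_ne h1]
          rw [hPP]
          ring
      · by_cases hk : ((w:ℤ) - max 1 ⌈t⌉ + 1).toNat = 0
        · have hcard0 : (Fintype.piFinset βR).card = 0 := by
            rw [Fintype.card_piFinset]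
            apply Finset.prod_eq_zero (Finset.mem_univ a')
            rw [hβRa, filterR_card, hk]
          have hf0 : ((Fintype.piFinset βR).filter
              (fun x => (∏ a, (fval w C' φ (DTree.node a' t l r) x a : ℝ)) ≤ m)).card = 0 := by
            have hle := Finset.card_filter_le (Fintype.piFinset βR)
              (fun x => (∏ a, (fval w C' φ (DTree.node a' t l r) x a : ℝ)) ≤ m)
            omega
          rw [hf0]
          push_cast
          exact mul_nonneg (by positivity) hK0
        · have hk1 : 1 ≤ ((w:ℤ) - max 1 ⌈t⌉ + 1).toNat := Nat.one_le_iff_ne_zero.mpr hk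
          have hkRpos : (0:ℝ) < ((((w:ℤ) - max 1 ⌈t⌉ + 1).toNat : ℕ) : ℝ) := by
            exact_mod_cast hk1
          have hfv : ∀ x ∈ Fintype.piFinset βR,
              (∏ a, (fval w C' φ (DTree.node a' t l r) x a : ℝ))
                = ((((w:ℤ) - max 1 ⌈t⌉ + 1).toNat : ℝ)/w) * ∏ a, (fval w C' φ r x a : ℝ) := by
            intro x hx
            have hxmem := Fintype.mem_piFinset.mp hx a'
            rw [hβRa, Finset.mem_filter] at hxmem
            have hxt : ¬ (x a' : ℝ) < t := hxmem.2
            have h1 : fval w C' φ (DTree.node a' t l r) x a'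
                = ((w:ℤ) - max 1 ⌈t⌉ + 1).toNat := by
              simp [fval, kside, hC, hxt]
            have h2 : fval w C' φ r x a' = w := by
              rw [fval_of_mem_used hr (Finset.mem_insert_self a' u), if_neg hC]
            have h3 : ∀ a, a ≠ a' →
                fval w C' φ (DTree.node a' t l r) x a = fval w C' φ r x a := by
              intro a ha
              simp [fval, ha, hxt]
            have e1 : (∏ a, (fval w C' φ (DTree.node a' t l r) x a : ℝ))
                = (∏ a ∈ Finset.univ.erase a', (fval w C' φ r x a : ℝ))
                    * (((w:ℤ) - max 1 ⌈t⌉ + 1).toNat : ℝ) := by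
              rw [← Finset.prod_erase_mul Finset.univ _ (Finset.mem_univ a'), h1]
              congr 1
              exact Finset.prod_congr rfl
                (fun a ha => by rw [h3 a (Finset.ne_of_mem_erase ha)])
            have e2 : (∏ a, (fval w C' φ r x a : ℝ))
                = (∏ a ∈ Finset.univ.erase a', (fval w C' φ r x a : ℝ)) * (w:ℝ) := by
              rw [← Finset.prod_erase_mul Finset.univ _ (Finset.mem_univ a'), h2]
            rw [e1, e2]
            field_simp
          have hcongr : (Fintype.piFinset βR).filter
              (fun x => (∏ a, (fval w C' φ (DTree.node a' t l r) x a : ℝ)) ≤ m)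
              = (Fintype.piFinset βR).filter
                (fun x => (∏ a, (fval w C' φ r x a : ℝ))
                  ≤ m * w / (((w:ℤ) - max 1 ⌈t⌉ + 1).toNat : ℝ)) := by
            apply Finset.filter_congr
            intro x hx
            rw [hfv x hx, ← div_div_eq_mul_div,
              le_div_iff₀ (div_pos hkRpos hwR), mul_comm]
          rw [hcongr]
          have hm' : 0 ≤ m * w / (((w:ℤ) - max 1 ⌈t⌉ + 1).toNat : ℝ) := by positivity
          refine (ihr (insert a' u) φ βR (m * w / (((w:ℤ) - max 1 ⌈t⌉ + 1).toNat : ℝ))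
            hr ?_ ?_ ?_ ?_ hm').trans ?_
          · intro a ha
            have h1 : a ≠ a' := fun h => ha (h ▸ Finset.mem_insert_self a' u)
            rw [hβRd, Function.update_of_ne h1]
            exact hfull a (fun h => ha (Finset.mem_insert_of_mem h))
          · intro a
            by_cases h1 : a = a'
            · subst h1; rw [hβRa]; exact Finset.filter_subset _ _
            · rw [hβRd, Function.update_of_ne h1]; exact hsubg a
          · intro a ha v hv
            have h1 : a ≠ a' := fun h => hC (h ▸ ha)
            rw [hβRd, Function.update_of_ne h1] at hv
            exact hφ a ha v hv
          · intro a ha z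
            have h1 : a ≠ a' := fun h => hC (h ▸ ha)
            rw [hβRd, Function.update_of_ne h1]
            have h2 := hfib a ha z
            by_cases h3 : a ∈ u
            · rw [if_pos h3] at h2
              rw [if_pos (Finset.mem_insert_of_mem h3)]
              exact h2
            · rw [if_neg h3] at h2
              rw [if_neg (by simp [Finset.mem_insert, h1, h3])]
              exact h2
          · apply le_of_eq
            have ha'c : a' ∈ C'ᶜ := Finset.mem_compl.mpr hC
            have hsplitP : ∏ a ∈ C'ᶜ, (((βR a).card:ℝ)/w)
                = ((((w:ℤ) - max 1 ⌈t⌉ + 1).toNat : ℝ)/w)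
                    * ∏ a ∈ C'ᶜ.erase a', (((β a).card:ℝ)/w) := by
              rw [← Finset.mul_prod_erase _ _ ha'c, hβRa, filterR_card]
              congr 1
              apply Finset.prod_congr rfl
              intro a ha
              rw [hβRd, Function.update_of_ne (Finset.ne_of_mem_erase ha)]
            have hsplitQ : ∏ a ∈ C'ᶜ, (((β a).card:ℝ)/w)
                = ((w:ℝ)/w) * ∏ a ∈ C'ᶜ.erase a', (((β a).card:ℝ)/w) := by
              rw [← Finset.mul_prod_erase _ _ ha'c, hfull a' ha', card_grid1]
            rw [hsplitP, hsplitQ]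
            generalize ((((w:ℤ) - max 1 ⌈t⌉ + 1).toNat : ℕ) : ℝ) = K at hkRpos ⊢
            generalize (∏ a ∈ C'ᶜ.erase a', (((β a).card:ℝ)/w)) = P
            generalize Real.log w = L
            field_simp
    refine (add_le_add hL hR).trans ?_
    have hpowsum : (2:ℝ) ^ tsize l + 2 ^ tsize r ≤ 2 ^ (tsize l + tsize r + 1) := by
      have e1 : (2:ℝ) ^ tsize l ≤ 2 ^ (tsize l + tsize r) :=
        pow_le_pow_right₀ one_le_two (Nat.le_add_right _ _)
      have e2 : (2:ℝ) ^ tsize r ≤ 2 ^ (tsize l + tsize r) :=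
        pow_le_pow_right₀ one_le_two (Nat.le_add_left _ _)
      have e3 : (2:ℝ) ^ (tsize l + tsize r + 1) = 2 * 2 ^ (tsize l + tsize r) := by
        rw [pow_succ]; ring
      linarith
    calc 2 ^ tsize l * (3 ^ C'.card * (1 + Real.log w) ^ C'.card * m
          * ∏ a ∈ C'ᶜ, (((β a).card : ℝ) / w))
        + 2 ^ tsize r * (3 ^ C'.card * (1 + Real.log w) ^ C'.card * m
          * ∏ a ∈ C'ᶜ, (((β a).card : ℝ) / w))
        = ((2:ℝ) ^ tsize l + 2 ^ tsize r) * (3 ^ C'.card * (1 + Real.log w) ^ C'.card * m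
          * ∏ a ∈ C'ᶜ, (((β a).card : ℝ) / w)) := by ring
      _ ≤ 2 ^ (tsize l + tsize r + 1) * (3 ^ C'.card * (1 + Real.log w) ^ C'.card * m
          * ∏ a ∈ C'ᶜ, (((β a).card : ℝ) / w)) :=
        mul_le_mul_of_nonneg_right hpowsum hK0
      _ = 2 ^ tsize (DTree.node a' t l r) * 3 ^ C'.card * (1 + Real.log w) ^ C'.card * m
          * ∏ a ∈ C'ᶜ, (((β a).card : ℝ) / w) := by
        simp only [tsize]
        ring

end Stmt17Aux
namespace Stmt17Aux
open Finset
variable {dim : ℕ}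

lemma sfun_fib (w z : ℕ) : ((grid1 w).filter (fun v => sfun w v = z)).card ≤ 2 := by
  have hsub : ((grid1 w).filter (fun v => sfun w v = z)) ⊆ {z, w + 1 - z} := by
    intro v hv
    rw [Finset.mem_filter, mem_grid1] at hv
    unfold sfun at hv
    simp only [Finset.mem_insert, Finset.mem_singleton]
    omega
  refine (Finset.card_le_card hsub).trans ?_
  exact (Finset.card_insert_le _ _).trans (by simp)

lemma card_pi_filter {w : ℕ} (S : Fin dim → Set ℝ)
    [∀ a, DecidablePred (fun v : ℕ => (v:ℝ) ∈ S a)]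
    [DecidablePred (fun y : Fin dim → ℕ => ∀ a, ((y a : ℝ)) ∈ S a)] :
    ((gridN dim w).filter (fun y => ∀ a, ((y a : ℝ)) ∈ S a)).card
      = ∏ a, ((grid1 w).filter (fun v : ℕ => (v:ℝ) ∈ S a)).card := by
  rw [show (gridN dim w).filter (fun y => ∀ a, ((y a : ℝ)) ∈ S a)
      = Fintype.piFinset (fun a => (grid1 w).filter (fun v : ℕ => (v:ℝ) ∈ S a)) from ?_,
    Fintype.card_piFinset]
  ext y
  simp only [Finset.mem_filter, Fintype.mem_piFinset, gridN]
  exact ⟨fun ⟨h1, h2⟩ a => ⟨h1 a, h2 a⟩, fun h => ⟨fun a => (h a).1, fun a => (h a).2⟩⟩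

end Stmt17Aux


set_option maxHeartbeats 2000000 in
open Stmt17Aux in
/-- For `2 ≤ d ≤ dim` there is a constant `C > 0` (depending only on `d` and `dim`)
such that for every `w ≥ 8`, every tree classifier `h` of height at most `d` with
the distinct-dimensions property, and every `r > 0`, the disagreement region of
`B_{H_d}(h, r)` over the grid `{1, …, w}^dim` has size at most `C·n·r·(ln n)^d`;
in particular the disagreement coefficient of every such `h` is at most
`C·(ln n)^d`. -/
theorem stmt17 (d dim : ℕ) (hd : 2 ≤ d) (hdim : d ≤ dim) :
    ∃ C : ℝ, 0 < C ∧ ∀ w : ℕ, 8 ≤ w →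
      ∀ h ∈ treeClass dim d,
        (∀ r : ℝ, 0 < r →
          ((DIS (gridXR dim w) (hypBall (gridXR dim w) (treeClass dim d) h r)).card : ℝ)
            ≤ C * (gridXR dim w).card * r * (Real.log (gridXR dim w).card) ^ d) ∧
        (⨆ (r : ℝ) (_ : 0 < r),
            ((DIS (gridXR dim w)
                (hypBall (gridXR dim w) (treeClass dim d) h r)).card : ℝ)
              / (r * (gridXR dim w).card))
          ≤ C * (Real.log (gridXR dim w).card) ^ d := by
  refine ⟨2 ^ dim * 2 ^ (2 ^ (d+1)) * 3 ^ d * 2 ^ d, by positivity, ?_⟩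
  intro w hw h hh
  obtain ⟨T, hTh, hTd, hTe⟩ := hh
  have hw1 : 1 ≤ w := by omega
  have hwR : (0:ℝ) < (w:ℝ) := by exact_mod_cast hw1
  have hw8 : (8:ℝ) ≤ (w:ℝ) := by exact_mod_cast hw
  have hn : ((gridXR dim w).card : ℝ) = (w:ℝ) ^ dim := by
    rw [card_gridXR]; push_cast; rfl
  have hdim1 : 1 ≤ dim := le_trans (le_trans (by norm_num) hd) hdim
  have hlogw1 : (1:ℝ) ≤ Real.log w := by
    rw [Real.le_log_iff_exp_le (by linarith)]
    calc Real.exp 1 ≤ 2.7182818286 := le_of_lt Real.exp_one_lt_d9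
      _ ≤ 8 := by norm_num
      _ ≤ (w:ℝ) := hw8
  have hlogw0 : (0:ℝ) ≤ Real.log w := by linarith
  have hlogn : Real.log ((gridXR dim w).card : ℝ) = dim * Real.log w := by
    rw [hn, Real.log_pow]
  have hlogn1 : Real.log w ≤ Real.log ((gridXR dim w).card : ℝ) := by
    rw [hlogn]
    nlinarith [hlogw0, (by exact_mod_cast hdim1 : (1:ℝ) ≤ (dim:ℝ))]
  have hlogn0 : (0:ℝ) ≤ Real.log ((gridXR dim w).card : ℝ) := by linarith
  -- the main counting bound
  have main : ∀ r : ℝ, 0 < r →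
      ((DIS (gridXR dim w) (hypBall (gridXR dim w) (treeClass dim d) h r)).card : ℝ)
        ≤ 2 ^ dim * 2 ^ (2 ^ (d+1)) * 3 ^ d * 2 ^ d * (gridXR dim w).card * r
            * (Real.log (gridXR dim w).card) ^ d := by
    intro r hr
    set V : Set ((Fin dim → ℝ) → Bool) :=
      hypBall (gridXR dim w) (treeClass dim d) h r with hV
    set P : Finset (Finset (Fin dim)) :=
      (Finset.univ : Finset (Fin dim)).powerset.filter (fun s => s.card ≤ d) with hP
    -- transfer to the ℕ grid
    have htrans : (DIS (gridXR dim w) V).card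
        = ((gridN dim w).filter
            (fun x => ∃ h₁ ∈ V, ∃ h₂ ∈ V, h₁ (ι x) ≠ h₂ (ι x))).card := by
      rw [DIS]
      exact filter_transfer dim w _
    -- covering by certificates
    have hcover : (gridN dim w).filter
          (fun x => ∃ h₁ ∈ V, ∃ h₂ ∈ V, h₁ (ι x) ≠ h₂ (ι x))
        ⊆ P.biUnion (fun C' => (gridN dim w).filter
            (fun x => (∏ a, (fval w C' (fun _ v => sfun w v) T x a : ℝ))
              ≤ r * (w:ℝ) ^ dim)) := by
      intro x hx
      rw [Finset.mem_filter] at hx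
      obtain ⟨hxG, h₁, hm₁, h₂, hm₂, hne⟩ := hx
      have hxg : ∀ b, x b ∈ grid1 w := Fintype.mem_piFinset.mp hxG
      -- a hypothesis in the ball disagreeing with h at x
      obtain ⟨h', hm', hne'⟩ : ∃ h' ∈ V, h' (ι x) ≠ h (ι x) := by
        by_cases hc : h₁ (ι x) = h (ι x)
        · exact ⟨h₂, hm₂, by rw [← hc]; exact Ne.symm hne⟩
        · exact ⟨h₁, hm₁, hc⟩
      obtain ⟨⟨T', hT'h, hT'd, hT'e⟩, h'dist⟩ := hm'
      rw [Finset.mem_biUnion]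
      refine ⟨pathCoords T' (ι x), ?_, ?_⟩
      · rw [hP, Finset.mem_filter]
        exact ⟨Finset.mem_powerset.mpr (Finset.subset_univ _),
          le_trans (card_pathCoords_le T' (ι x)) hT'h⟩
      · rw [Finset.mem_filter]
        refine ⟨hxG, ?_⟩
        -- numeric certificate
        have hstep1 : (∏ a, fval w (pathCoords T' (ι x)) (fun _ v => sfun w v) T x a)
            ≤ ∏ a, ((grid1 w).filter
                (fun v : ℕ => (v:ℝ) ∈ cIval T (ι x) a ∩ cIval T' (ι x) a)).card := by
          refine Finset.prod_le_prod' (fun a _ => ?_)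
          refine pcl hTd x hxg a (cIval T' (ι x) a) ?_ ?_
          · exact cIval_shape hT'd (ι x) a
          · intro hnot
            exact cIval_of_not_path hnot
        have hstep3 : (∏ a, ((grid1 w).filter
              (fun v : ℕ => (v:ℝ) ∈ cIval T (ι x) a ∩ cIval T' (ι x) a)).card)
            = ((gridN dim w).filter (fun y => ∀ a,
                ((y a : ℝ)) ∈ cIval T (ι x) a ∩ cIval T' (ι x) a)).card :=
          (card_pi_filter _).symm
        have hsubset : (gridN dim w).filter (fun y => ∀ a,
              ((y a : ℝ)) ∈ cIval T (ι x) a ∩ cIval T' (ι x) a)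
            ⊆ (gridN dim w).filter (fun y => h (ι y) ≠ h' (ι y)) := by
          intro y hy
          rw [Finset.mem_filter] at hy ⊢
          obtain ⟨hyG, hymem⟩ := hy
          refine ⟨hyG, ?_⟩
          have e1 : T.eval (ι y) = T.eval (ι x) :=
            eval_eq_of_mem_cIval (fun a => (hymem a).1)
          have e2 : T'.eval (ι y) = T'.eval (ι x) :=
            eval_eq_of_mem_cIval (fun a => (hymem a).2)
          have e3 : h (ι y) = h (ι x) := by rw [hTe]; exact e1
          have e4 : h' (ι y) = h' (ι x) := by rw [hT'e]; exact e2
          rw [e3, e4]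
          exact Ne.symm hne'
        have hstep5 : ((gridN dim w).filter (fun y => h (ι y) ≠ h' (ι y))).card
            = ((gridXR dim w).filter (fun y => h y ≠ h' y)).card :=
          (filter_transfer dim w (fun y => h y ≠ h' y)).symm
        have hstep6 : (((gridXR dim w).filter (fun y => h y ≠ h' y)).card : ℝ)
            ≤ r * ((gridXR dim w).card : ℝ) := by
          have hpos : (0:ℝ) < ((gridXR dim w).card : ℝ) := by
            rw [hn]; positivity
          have := h'dist
          rw [hypDist, div_le_iff₀ hpos] at this
          linarith [this]
        have hnat : (∏ a, fval w (pathCoords T' (ι x)) (fun _ v => sfun w v) T x a)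
            ≤ ((gridXR dim w).filter (fun y => h y ≠ h' y)).card := by
          rw [← hstep5]
          refine hstep1.trans ?_
          rw [hstep3]
          exact Finset.card_le_card hsubset
        calc (∏ a, (fval w (pathCoords T' (ι x)) (fun _ v => sfun w v) T x a : ℝ))
            = ((∏ a, fval w (pathCoords T' (ι x)) (fun _ v => sfun w v) T x a : ℕ) : ℝ) := by
              push_cast; rfl
          _ ≤ (((gridXR dim w).filter (fun y => h y ≠ h' y)).card : ℝ) := by
              exact_mod_cast hnat
          _ ≤ r * ((gridXR dim w).card : ℝ) := hstep6
          _ = r * (w:ℝ) ^ dim := by rw [hn]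
    -- counting each certificate set
    have hterm : ∀ C' ∈ P, (((gridN dim w).filter
          (fun x => (∏ a, (fval w C' (fun _ v => sfun w v) T x a : ℝ))
            ≤ r * (w:ℝ) ^ dim)).card : ℝ)
        ≤ 2 ^ (2^(d+1)) * 3 ^ d * (1 + Real.log w) ^ d * (r * (w:ℝ)^dim) := by
      intro C' hC'
      rw [hP, Finset.mem_filter] at hC'
      clear hcover htrans
      have hφarg : ∀ a ∈ C', ∀ v ∈ (fun _ : Fin dim => grid1 w) a,
          1 ≤ sfun w v ∧ sfun w v ≤ w := by
        intro a _ v hv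
        have hb := mem_grid1.mp hv
        unfold sfun
        omega
      have hfibarg : ∀ a ∈ C', ∀ z : ℕ, (((fun _ : Fin dim => grid1 w) a).filter
          (fun v => sfun w v = z)).card ≤ if a ∈ (∅ : Finset (Fin dim)) then 3 else 2 := by
        intro a _ z
        rw [if_neg (Finset.notMem_empty a)]
        exact sfun_fib w z
      have hcount := count_lemma hw1 C' T ∅ (fun _ v => sfun w v) (fun _ => grid1 w)
        (r * (w:ℝ)^dim) hTd (fun a _ => rfl) (fun a => le_refl _) hφarg hfibarg
        (by positivity)
      have hprod1 : (∏ a ∈ C'ᶜ, (((grid1 w).card : ℝ) / w)) = 1 := by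
        have heach : ∀ a ∈ C'ᶜ, (((grid1 w).card : ℝ) / w) = 1 := fun a _ => by
          rw [card_grid1]
          exact div_self (ne_of_gt hwR)
        rw [Finset.prod_congr rfl heach, Finset.prod_const_one]
      rw [hprod1, mul_one] at hcount
      refine hcount.trans ?_
      have hts : tsize T ≤ 2 ^ (d+1) :=
        (tsize_le T).trans ((Nat.sub_le _ _).trans
          (Nat.pow_le_pow_right (by norm_num) (by omega)))
      have hb1 : (2:ℝ) ^ tsize T ≤ 2 ^ (2^(d+1)) := pow_le_pow_right₀ one_le_two hts
      have hb2 : (3:ℝ) ^ C'.card ≤ 3 ^ d := pow_le_pow_right₀ (by norm_num) hC'.2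
      have hb3 : (1 + Real.log w) ^ C'.card ≤ (1 + Real.log w) ^ d :=
        pow_le_pow_right₀ (by linarith) hC'.2
      have hm0 : (0:ℝ) ≤ r * (w:ℝ)^dim := by positivity
      calc (2:ℝ) ^ tsize T * 3 ^ C'.card * (1 + Real.log w) ^ C'.card * (r * (w:ℝ)^dim)
          ≤ 2 ^ (2^(d+1)) * 3 ^ d * (1 + Real.log w) ^ d * (r * (w:ℝ)^dim) := by
            gcongr <;> positivity
        _ = _ := rfl
    -- put everything together
    have hcardP : P.card ≤ 2 ^ dim := by
      calc P.card ≤ ((Finset.univ : Finset (Fin dim)).powerset).card :=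
            Finset.card_le_card (by rw [hP]; exact Finset.filter_subset _ _)
        _ = 2 ^ dim := by rw [Finset.card_powerset, Finset.card_univ, Fintype.card_fin]
    have hbiun : ((gridN dim w).filter
          (fun x => ∃ h₁ ∈ V, ∃ h₂ ∈ V, h₁ (ι x) ≠ h₂ (ι x))).card
        ≤ ∑ C' ∈ P, ((gridN dim w).filter
            (fun x => (∏ a, (fval w C' (fun _ v => sfun w v) T x a : ℝ))
              ≤ r * (w:ℝ) ^ dim)).card :=
      (Finset.card_le_card hcover).trans (Finset.card_biUnion_le)
    have hfinal : ((DIS (gridXR dim w) V).card : ℝ)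
        ≤ 2^dim * (2 ^ (2^(d+1)) * 3 ^ d * (1 + Real.log w) ^ d * (r * (w:ℝ)^dim)) := by
      rw [htrans]
      calc (((gridN dim w).filter
            (fun x => ∃ h₁ ∈ V, ∃ h₂ ∈ V, h₁ (ι x) ≠ h₂ (ι x))).card : ℝ)
          ≤ (∑ C' ∈ P, ((gridN dim w).filter
              (fun x => (∏ a, (fval w C' (fun _ v => sfun w v) T x a : ℝ))
                ≤ r * (w:ℝ) ^ dim)).card : ℕ) := by exact_mod_cast hbiun
        _ = ∑ C' ∈ P, (((gridN dim w).filter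
              (fun x => (∏ a, (fval w C' (fun _ v => sfun w v) T x a : ℝ))
                ≤ r * (w:ℝ) ^ dim)).card : ℝ) := by push_cast; rfl
        _ ≤ ∑ C' ∈ P, (2 ^ (2^(d+1)) * 3 ^ d * (1 + Real.log w) ^ d * (r * (w:ℝ)^dim)) :=
            Finset.sum_le_sum hterm
        _ = P.card * (2 ^ (2^(d+1)) * 3 ^ d * (1 + Real.log w) ^ d * (r * (w:ℝ)^dim)) := by
            rw [Finset.sum_const, nsmul_eq_mul]
        _ ≤ 2^dim * (2 ^ (2^(d+1)) * 3 ^ d * (1 + Real.log w) ^ d * (r * (w:ℝ)^dim)) := by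
            have h0 : (0:ℝ) ≤ 2 ^ (2^(d+1)) * 3 ^ d * (1 + Real.log w) ^ d * (r * (w:ℝ)^dim) := by
              positivity
            have h1 : (P.card : ℝ) ≤ (2:ℝ)^dim := by exact_mod_cast hcardP
            exact mul_le_mul_of_nonneg_right h1 h0
    -- convert the log factor
    have hlog2 : (1 + Real.log w) ^ d
        ≤ 2 ^ d * (Real.log ((gridXR dim w).card : ℝ)) ^ d := by
      have h1 : 1 + Real.log w ≤ 2 * Real.log ((gridXR dim w).card : ℝ) := by
        linarith
      calc (1 + Real.log w) ^ d ≤ (2 * Real.log ((gridXR dim w).card : ℝ)) ^ d :=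
            pow_le_pow_left₀ (by linarith) h1 d
        _ = 2 ^ d * (Real.log ((gridXR dim w).card : ℝ)) ^ d := mul_pow _ _ _
    refine hfinal.trans ?_
    calc (2:ℝ)^dim * (2 ^ (2^(d+1)) * 3 ^ d * (1 + Real.log w) ^ d * (r * (w:ℝ)^dim))
        = (2^dim * 2 ^ (2^(d+1)) * 3 ^ d * (r * (w:ℝ)^dim)) * (1 + Real.log w) ^ d := by
          ring
      _ ≤ (2^dim * 2 ^ (2^(d+1)) * 3 ^ d * (r * (w:ℝ)^dim))
            * (2 ^ d * (Real.log ((gridXR dim w).card : ℝ)) ^ d) := by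
          apply mul_le_mul_of_nonneg_left hlog2
          positivity
      _ = 2 ^ dim * 2 ^ (2 ^ (d+1)) * 3 ^ d * 2 ^ d * ((gridXR dim w).card : ℝ) * r
            * (Real.log ((gridXR dim w).card : ℝ)) ^ d := by
          rw [hn]
          ring
  refine ⟨main, ?_⟩
  have hC0 : (0:ℝ) ≤ 2 ^ dim * 2 ^ (2 ^ (d+1)) * 3 ^ d * 2 ^ d
      * (Real.log ((gridXR dim w).card : ℝ)) ^ d := by positivity
  have hnpos : (0:ℝ) < ((gridXR dim w).card : ℝ) := by rw [hn]; positivity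
  refine Real.iSup_le (fun r => Real.iSup_le (fun hr => ?_) hC0) hC0
  rw [div_le_iff₀ (mul_pos hr hnpos)]
  calc ((DIS (gridXR dim w) (hypBall (gridXR dim w) (treeClass dim d) h r)).card : ℝ)
        ≤ 2 ^ dim * 2 ^ (2 ^ (d+1)) * 3 ^ d * 2 ^ d * ((gridXR dim w).card : ℝ) * r
            * (Real.log ((gridXR dim w).card : ℝ)) ^ d := main r hr
      _ = 2 ^ dim * 2 ^ (2 ^ (d+1)) * 3 ^ d * 2 ^ d
            * (Real.log ((gridXR dim w).card : ℝ)) ^ d * (r * ((gridXR dim w).card : ℝ)) := by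
          ring

end
end

section
/- Let d and dim be integers with 2 ≤ d ≤ dim. For each integer w ≥ 2, let X = {1, …, w}^dim (so n = w^dim) and let H_d be the set of all functions X → Bool realized by decision trees of height at most d having the distinct-dimensions property, and let h₀ ∈ H_d be the all-zero classifier. Then there exists a universal constant K > 0 such that for all sufficiently large w, the disagreement coefficient of h₀ within H_d satisfies θ_{h₀} ≥ K · (2^{−dim} / (d^{d−1} · d!)) · (ln n − dim · ln 4)^{d−1}. -/
open scoped Classical

noncomputable section

namespace Stmt18Aux

def chain {dim : ℕ} : List (Fin dim × ℝ) → DTree dim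
  | [] => .leaf true
  | p :: L => .node p.1 p.2 (.leaf false) (chain L)

lemma chain_height {dim : ℕ} (L : List (Fin dim × ℝ)) : (chain L).height ≤ L.length := by
  induction L with
  | nil => simp [chain, DTree.height]
  | cons p L ih => simp only [chain, DTree.height, List.length_cons]; omega

lemma chain_eval {dim : ℕ} (L : List (Fin dim × ℝ)) (x : Fin dim → ℝ) :
    (chain L).eval x = true ↔ ∀ p ∈ L, p.2 ≤ x p.1 := by
  induction L with
  | nil => simp [chain, DTree.eval]
  | cons q L ih =>
      simp only [chain, DTree.eval, List.forall_mem_cons]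
      by_cases h : x q.1 < q.2
      · simp only [if_pos h]
        constructor
        · intro hh; exact absurd hh (by simp)
        · rintro ⟨h1, -⟩; exact absurd h (not_lt.2 h1)
      · simp only [if_neg h, ih]
        exact ⟨fun hh => ⟨not_lt.1 h, hh⟩, fun hh => hh.2⟩

lemma chain_distinct {dim : ℕ} (L : List (Fin dim × ℝ)) (used : Finset (Fin dim))
    (h1 : (L.map Prod.fst).Nodup) (h2 : ∀ q ∈ L, q.1 ∉ used) :
    (chain L).distinctDims used := by
  induction L generalizing used with
  | nil => trivial
  | cons q L ih =>
      simp only [List.map_cons, List.nodup_cons] at h1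
      refine ⟨h2 q List.mem_cons_self, trivial, ih (insert q.1 used) h1.2 ?_⟩
      intro a ha
      simp only [Finset.mem_insert, not_or]
      exact ⟨fun he => h1.1 (he ▸ List.mem_map_of_mem (f := Prod.fst) ha),
        h2 a (List.mem_cons_of_mem _ ha)⟩

lemma prod_split {M : Type*} [CommMonoid M] {dim p : ℕ} (h : p + 1 ≤ dim)
    (g : Fin dim → M) (a : Fin (p + 1) → M) (c : M)
    (h1 : ∀ i : Fin (p + 1), g (Fin.castLE h i) = a i)
    (h2 : ∀ j : Fin dim, p + 1 ≤ (j : ℕ) → g j = c) :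
    ∏ j, g j = (∏ i, a i) * c ^ (dim - (p + 1)) := by
  classical
  set s : Finset (Fin dim) := Finset.univ.map ⟨Fin.castLE h, Fin.castLE_injective h⟩ with hs
  have hmem : ∀ j : Fin dim, j ∈ s ↔ (j : ℕ) < p + 1 := by
    intro j
    simp only [hs, Finset.mem_map, Finset.mem_univ, true_and, Function.Embedding.coeFn_mk]
    constructor
    · rintro ⟨i, rfl⟩; exact i.2
    · intro hj; exact ⟨⟨j, hj⟩, Fin.ext rfl⟩
  rw [← Finset.prod_mul_prod_compl s g]
  congr 1
  · rw [hs, Finset.prod_map]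
    exact Finset.prod_congr rfl fun i _ => h1 i
  · have : ∀ j ∈ sᶜ, g j = c := by
      intro j hj
      simp only [Finset.mem_compl, hmem, not_lt] at hj
      exact h2 j hj
    rw [Finset.prod_congr rfl this, Finset.prod_const, Finset.card_compl,
      Fintype.card_fin]
    congr 1
    rw [hs, Finset.card_map, Finset.card_univ, Fintype.card_fin]

/-- ranges for block coordinates -/
def yR (w p c : ℕ) (e : Fin p → ℕ) {dim : ℕ} (j : Fin dim) : Finset ℕ :=
  if hj : (j : ℕ) < p then
    Finset.Icc (w + 2 - 2 ^ (e ⟨j, hj⟩ + 1)) (w + 1 - 2 ^ (e ⟨j, hj⟩))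
  else if (j : ℕ) < p + 1 then Finset.Icc (w + 1 - 2 ^ c) w
  else Finset.Icc 1 w

lemma block_card {dim p : ℕ} (hpd : p + 1 ≤ dim) (w c : ℕ) (e : Fin p → ℕ)
    (hw : ∀ i, 2 ^ (e i + 1) ≤ w) (hc : 2 ^ c ≤ w) :
    (Fintype.piFinset (yR w p c e (dim := dim))).card
      = 2 ^ ((∑ i, e i) + c) * w ^ (dim - (p + 1)) := by
  rw [Fintype.card_piFinset]
  rw [prod_split hpd _ (Fin.snoc (fun i => 2 ^ (e i)) (2 ^ c)) w ?h1 ?h2]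
  · rw [Fin.prod_univ_castSucc]
    simp only [Fin.snoc_castSucc, Fin.snoc_last]
    rw [Finset.prod_pow_eq_pow_sum, ← pow_add]
  case h1 =>
    intro i
    induction i using Fin.lastCases with
    | last =>
        have h1 : ¬ ((Fin.castLE hpd (Fin.last p) : ℕ) < p) := by simp
        have h2 : ((Fin.castLE hpd (Fin.last p) : ℕ)) < p + 1 := by simp
        rw [yR, dif_neg h1, if_pos h2, Fin.snoc_last, Nat.card_Icc]
        clear h1 h2
        generalize hq : (2:ℕ) ^ c = Q at hc ⊢
        omega
    | cast i =>
        have h1 : ((Fin.castLE hpd i.castSucc : ℕ)) < p := i.2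
        rw [yR, dif_pos h1, Fin.snoc_castSucc, Nat.card_Icc]
        have he : (⟨(Fin.castLE hpd i.castSucc : ℕ), h1⟩ : Fin p) = i := Fin.ext rfl
        rw [he]
        have h2 : 2 ^ (e i + 1) = 2 * 2 ^ (e i) := by rw [pow_succ]; ring
        have h3 := hw i
        omega
  case h2 =>
    intro j hj
    rw [yR, dif_neg (by omega), if_neg (by omega), Nat.card_Icc]
    omega

lemma mem_block {dim p : ℕ} (hpd : p + 1 ≤ dim) {w c : ℕ} {e : Fin p → ℕ}
    (hw : ∀ i, 2 ^ (e i + 1) ≤ w) (hc : 2 ^ c ≤ w) {y : Fin dim → ℕ}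
    (hy : y ∈ Fintype.piFinset (yR w p c e (dim := dim))) :
    (∀ a, 1 ≤ y a ∧ y a ≤ w) ∧
      (∏ i : Fin (p + 1), (w + 1 - y (Fin.castLE hpd i))) ≤ 2 ^ ((∑ i, e i) + p + c) := by
  rw [Fintype.mem_piFinset] at hy
  constructor
  · intro a
    have := hy a
    rw [yR] at this
    by_cases h1 : (a : ℕ) < p
    · rw [dif_pos h1, Finset.mem_Icc] at this
      have h2 : 2 ^ (e ⟨a, h1⟩ + 1) = 2 * 2 ^ (e ⟨a, h1⟩) := by rw [pow_succ]; ring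
      have h3 := hw ⟨a, h1⟩
      have h4 := Nat.one_le_two_pow (n := e ⟨a, h1⟩)
      omega
    · rw [dif_neg h1] at this
      by_cases h2 : (a : ℕ) < p + 1
      · rw [if_pos h2, Finset.mem_Icc] at this
        have h4 := Nat.one_le_two_pow (n := c)
        omega
      · rw [if_neg h2, Finset.mem_Icc] at this
        omega
  · calc (∏ i : Fin (p + 1), (w + 1 - y (Fin.castLE hpd i)))
        ≤ ∏ i : Fin (p + 1), (Fin.snoc (fun i => 2 ^ (e i + 1)) (2 ^ c) : Fin (p+1) → ℕ) i := by
          apply Finset.prod_le_prod'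
          intro i _
          induction i using Fin.lastCases with
          | last =>
              have h1 : ¬ ((Fin.castLE hpd (Fin.last p) : ℕ) < p) := by simp
              have h2 : ((Fin.castLE hpd (Fin.last p) : ℕ)) < p + 1 := by simp
              have := hy (Fin.castLE hpd (Fin.last p))
              rw [yR, dif_neg h1, if_pos h2, Finset.mem_Icc] at this
              rw [Fin.snoc_last]
              omega
          | cast i =>
              have h1 : ((Fin.castLE hpd i.castSucc : ℕ)) < p := i.2
              have := hy (Fin.castLE hpd i.castSucc)
              rw [yR, dif_pos h1] at this
              have he : (⟨(Fin.castLE hpd i.castSucc : ℕ), h1⟩ : Fin p) = i := Fin.ext rfl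
              rw [he, Finset.mem_Icc] at this
              rw [Fin.snoc_castSucc]
              have h2 : 2 ^ (e i + 1) = 2 * 2 ^ (e i) := by rw [pow_succ]; ring
              have h3 := hw i
              omega
      _ = 2 ^ ((∑ i, e i) + p + c) := by
          rw [Fin.prod_univ_castSucc]
          simp only [Fin.snoc_castSucc, Fin.snoc_last]
          rw [Finset.prod_pow_eq_pow_sum, ← pow_add]
          congr 1
          rw [Finset.sum_add_distrib, Finset.sum_const, Finset.card_univ, Fintype.card_fin,
            smul_eq_mul, mul_one]

lemma block_disjoint {dim p : ℕ} (hpd : p + 1 ≤ dim) {w c c' : ℕ} {e e' : Fin p → ℕ}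
    (hw : ∀ i, 2 ^ (e i + 1) ≤ w) (hw' : ∀ i, 2 ^ (e' i + 1) ≤ w) (hne : e ≠ e') :
    Disjoint (Fintype.piFinset (yR w p c e (dim := dim)))
      (Fintype.piFinset (yR w p c' e' (dim := dim))) := by
  rw [Finset.disjoint_left]
  intro y hy hy'
  rw [Fintype.mem_piFinset] at hy hy'
  obtain ⟨i, hi⟩ := Function.ne_iff.1 hne
  have h1 : ((Fin.castLE (le_trans (Nat.le_succ p) hpd) i : Fin dim) : ℕ) < p := i.2
  have hA := hy (Fin.castLE (le_trans (Nat.le_succ p) hpd) i)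
  have hB := hy' (Fin.castLE (le_trans (Nat.le_succ p) hpd) i)
  rw [yR, dif_pos h1, Finset.mem_Icc] at hA hB
  have he : (⟨((Fin.castLE (le_trans (Nat.le_succ p) hpd) i : Fin dim) : ℕ), h1⟩ : Fin p) = i :=
    Fin.ext rfl
  rw [he] at hA hB
  rcases lt_trichotomy (e i) (e' i) with h | h | h
  · have h2 : 2 ^ (e i + 1) ≤ 2 ^ (e' i) := Nat.pow_le_pow_right (by norm_num) h
    have h3 := hw i
    have h4 := hw' i
    have h5 : (1:ℕ) ≤ 2 ^ (e' i) := Nat.one_le_two_pow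
    have h6 : 2 ^ (e i + 1) = 2 * 2 ^ (e i) := by rw [pow_succ]; ring
    omega
  · exact hi h
  · have h2 : 2 ^ (e' i + 1) ≤ 2 ^ (e i) := Nat.pow_le_pow_right (by norm_num) h
    have h3 := hw i
    have h4 := hw' i
    have h5 : (1:ℕ) ≤ 2 ^ (e i) := Nat.one_le_two_pow
    have h6 : 2 ^ (e' i + 1) = 2 * 2 ^ (e' i) := by rw [pow_succ]; ring
    omega

lemma tree_mem {dim p : ℕ} (hpd : p + 1 ≤ dim) (w : ℕ) (k : Fin (p+1) → ℕ) :
    ∃ h₂ ∈ treeClass dim (p+1), ∀ x : Fin dim → ℝ,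
      (h₂ x = true ↔ ∀ i : Fin (p+1), ((w + 1 - k i : ℕ) : ℝ) ≤ x (Fin.castLE hpd i)) := by
  refine ⟨(chain (List.ofFn fun i : Fin (p+1) =>
      (Fin.castLE hpd i, ((w + 1 - k i : ℕ) : ℝ)))).eval, ⟨_, ?_, ?_, rfl⟩, ?_⟩
  · exact (chain_height _).trans (by simp)
  · apply chain_distinct
    · rw [List.map_ofFn]
      exact List.nodup_ofFn.2 fun i j hij => Fin.castLE_injective hpd hij
    · intro q _; exact Finset.notMem_empty _
  · intro x
    rw [chain_eval, List.forall_mem_ofFn_iff]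

lemma filter_card_le {dim p : ℕ} (hpd : p + 1 ≤ dim) (w : ℕ) (k : Fin (p+1) → ℕ)
    (hk2 : ∀ i, k i ≤ w)
    (h₂ : (Fin dim → ℝ) → Bool)
    (hiff : ∀ x, (h₂ x = true ↔ ∀ i : Fin (p+1), ((w + 1 - k i : ℕ) : ℝ) ≤ x (Fin.castLE hpd i))) :
    ((gridXR dim w).filter fun x => (fun _ => false) x ≠ h₂ x).card
      ≤ (∏ i, k i) * w ^ (dim - (p+1)) := by
  classical
  have hinj : Function.Injective (fun (y : Fin dim → ℕ) => (fun a => (y a : ℝ))) :=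
    fun y z hyz => funext fun a => Nat.cast_injective (congrFun hyz a)
  rw [gridXR, Finset.filter_image, Finset.card_image_of_injective _ hinj]
  set lo : Fin dim → ℕ := fun j => if hj : (j : ℕ) < p + 1 then w + 1 - k ⟨j, hj⟩ else 1 with hlo
  have hsub : ((Finset.Icc (fun _ => 1) (fun _ => w) : Finset (Fin dim → ℕ)).filter
      fun y => (fun _ => false) (fun a => ((y a : ℕ) : ℝ)) ≠ h₂ (fun a => ((y a : ℕ) : ℝ)))
      ⊆ Finset.Icc lo (fun _ => w) := by
    intro y hy
    rw [Finset.mem_filter] at hy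
    obtain ⟨hyIc, hyne⟩ := hy
    have hev : h₂ (fun a => ((y a : ℕ) : ℝ)) = true := by
      revert hyne; cases h₂ (fun a => ((y a : ℕ) : ℝ)) <;> simp
    have hcond := (hiff _).1 hev
    rw [Finset.mem_Icc] at hyIc ⊢
    refine ⟨fun j => ?_, hyIc.2⟩
    show (if hj : (j : ℕ) < p + 1 then w + 1 - k ⟨(j : ℕ), hj⟩ else 1) ≤ y j
    by_cases hj : (j : ℕ) < p + 1
    · rw [dif_pos hj]
      have h3 := hcond ⟨(j : ℕ), hj⟩
      have h4 : Fin.castLE hpd (⟨(j : ℕ), hj⟩ : Fin (p+1)) = j := Fin.ext rfl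
      rw [h4] at h3
      exact_mod_cast h3
    · rw [dif_neg hj]
      exact hyIc.1 j
  calc ((Finset.Icc (fun _ => 1) (fun _ => w) : Finset (Fin dim → ℕ)).filter
      fun y => (fun _ => false) (fun a => ((y a : ℕ) : ℝ)) ≠ h₂ (fun a => ((y a : ℕ) : ℝ))).card
      ≤ (Finset.Icc lo (fun _ => w)).card := Finset.card_le_card hsub
    _ = (∏ i, k i) * w ^ (dim - (p+1)) := by
        rw [Pi.card_Icc]
        rw [prod_split hpd _ k w ?h1 ?h2]
        case h1 =>
          intro i
          have h4 : ((Fin.castLE hpd i : Fin dim) : ℕ) < p + 1 := i.2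
          have h5 : lo (Fin.castLE hpd i) = w + 1 - k i := by
            show (if hj : ((Fin.castLE hpd i : Fin dim) : ℕ) < p + 1
                then w + 1 - k ⟨((Fin.castLE hpd i : Fin dim) : ℕ), hj⟩ else 1) = w + 1 - k i
            rw [dif_pos h4]
            congr 1
          rw [Nat.card_Icc, h5]
          have := hk2 i
          omega
        case h2 =>
          intro j hj
          have h5 : lo j = 1 := by
            show (if hj : (j:ℕ) < p + 1 then w + 1 - k ⟨(j:ℕ), hj⟩ else 1) = 1
            rw [dif_neg (by omega : ¬ ((j:ℕ) < p + 1))]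
          rw [Nat.card_Icc, h5]
          omega

end Stmt18Aux

open Stmt18Aux in
/-- Lower bound on the disagreement coefficient of the all-zero classifier `h₀`
within the class of height-`≤ d` distinct-dimensions decision trees over the grid
`{1, …, w}^dim`: there is a constant `K > 0` such that for all sufficiently large
`w`, `θ_{h₀} ≥ K · (2^{−dim}/(d^{d−1}·d!)) · (ln n − dim·ln 4)^{d−1}`,
where `n = w^dim` is the dataset size. -/
theorem stmt18 (d dim : ℕ) (hd : 2 ≤ d) (hdim : d ≤ dim) :
    ∃ K : ℝ, 0 < K ∧ ∃ W : ℕ, ∀ w : ℕ, W ≤ w →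
      K * (((2 : ℝ) ^ dim)⁻¹ / ((d : ℝ) ^ (d - 1) * (Nat.factorial d : ℝ))) *
          (Real.log ((gridXR dim w).card : ℝ) - dim * Real.log 4) ^ (d - 1)
        ≤ ⨆ (r : ℝ) (_ : 0 < r),
            ((DIS (gridXR dim w)
                (hypBall (gridXR dim w) (treeClass dim d) (fun _ => false) r)).card : ℝ)
              / (r * (gridXR dim w).card) := by
  obtain ⟨p, rfl⟩ : ∃ p, d = p + 1 := ⟨d - 1, by omega⟩
  have hp : 1 ≤ p := by omega
  simp only [Nat.add_sub_cancel]
  have hfact : (0:ℝ) < (Nat.factorial (p+1) : ℝ) := by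
    exact_mod_cast Nat.factorial_pos _
  set C : ℝ := (((2:ℝ) ^ dim)⁻¹ / (((p+1 : ℕ) : ℝ) ^ p * (Nat.factorial (p+1) : ℝ))) with hCdef
  have hC : 0 < C := div_pos (by positivity) (mul_pos (by positivity) hfact)
  have h2p : (0:ℝ) < ((2*p : ℕ):ℝ) := by
    have : 0 < 2*p := by omega
    exact_mod_cast this
  set K₀ : ℝ := (C * (dim:ℝ)^p * ((2*p : ℕ):ℝ)^p * 2^(p+1))⁻¹ with hK₀def
  have hdimpos : 0 < dim := by omega
  have hdimR : (0:ℝ) < (dim:ℝ) := by exact_mod_cast hdimpos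
  have hK₀ : 0 < K₀ := by
    rw [hK₀def]
    refine inv_pos.2 (mul_pos (mul_pos (mul_pos hC (by positivity)) (by positivity)) (by positivity))
  refine ⟨K₀, hK₀, 2^(4*(p+1)), fun w hw => ?_⟩
  -- basic numerology
  have hw1 : 1 ≤ w := le_trans Nat.one_le_two_pow hw
  have hw0 : 0 < w := hw1
  have hwR : (0:ℝ) < (w:ℝ) := by exact_mod_cast hw0
  set m := Nat.log 2 w with hmdef
  have hm1 : 2^m ≤ w := Nat.pow_log_le_self 2 (by omega)
  have hm2 : w < 2^(m+1) := Nat.lt_pow_succ_log_self (by norm_num) w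
  have hm4 : 4*(p+1) ≤ m := by
    have h := Nat.log_mono_right (b := 2) hw
    rwa [Nat.log_pow (by norm_num)] at h
  set K := m / p with hKdef
  have hq1 : K * p ≤ m := Nat.div_mul_le_self m p
  have hq2 : m ≤ K * p + p := by
    have h5 : m % p < p := Nat.mod_lt _ (by omega)
    have h6 : m % p + p * (m / p) = m := Nat.mod_add_div m p
    conv_lhs => rw [← Nat.div_add_mod m p]
    rw [hKdef, Nat.mul_comm]
    exact Nat.add_le_add_left h5.le _
  have hK1 : 1 ≤ K := by
    rw [hKdef]
    exact (Nat.one_le_div_iff (by omega)).2 (by omega)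
  have hKm : K ≤ m := by rw [hKdef]; exact Nat.div_le_self _ _
  -- the grid
  have hinj : Function.Injective (fun (y : Fin dim → ℕ) => (fun a => (y a : ℝ))) :=
    fun y z hyz => funext fun a => Nat.cast_injective (congrFun hyz a)
  set X := gridXR dim w with hX
  have hcardX : X.card = w ^ dim := by
    rw [hX, gridXR, Finset.card_image_of_injective _ hinj, Pi.card_Icc]
    simp [Nat.card_Icc]
  set A := w ^ (dim - p) with hAdef
  have hApos : 0 < A := by positivity
  set r₀ : ℝ := ((A:ℕ) : ℝ) / ((w : ℝ) ^ dim) with hr₀def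
  have hr₀ : 0 < r₀ := by
    rw [hr₀def]
    have : (0:ℝ) < ((A:ℕ):ℝ) := by exact_mod_cast hApos
    positivity
  set h₀ : (Fin dim → ℝ) → Bool := fun _ => false with hh₀
  set V := hypBall X (treeClass dim (p+1)) h₀ r₀ with hVdef
  have hdistself : hypDist X h₀ h₀ = 0 := by simp [hypDist]
  have hfalseH : h₀ ∈ treeClass dim (p+1) :=
    ⟨DTree.leaf false, by simp [DTree.height], trivial, rfl⟩
  have hfalseV : h₀ ∈ V := ⟨hfalseH, by rw [hdistself]; exact hr₀.le⟩
  -- trees in the ball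
  have htreeV : ∀ k : Fin (p+1) → ℕ, (∀ i, 1 ≤ k i) → (∀ i, k i ≤ w) → (∏ i, k i) ≤ w →
      ∃ h₂ ∈ V, ∀ y : Fin dim → ℕ,
        (∀ i : Fin (p+1), w + 1 - k i ≤ y (Fin.castLE hdim i)) →
        h₂ (fun a => (y a : ℝ)) = true := by
    intro k hk1 hk2 hk3
    obtain ⟨h₂, hmem, hiff⟩ := tree_mem hdim w k
    refine ⟨h₂, ⟨hmem, ?_⟩, ?_⟩
    · -- distance bound
      have hcle := filter_card_le hdim w k hk2 h₂ hiff
      have hcle2 : ((X.filter fun x => h₀ x ≠ h₂ x).card : ℕ) ≤ A := by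
        refine le_trans hcle ?_
        calc (∏ i, k i) * w ^ (dim - (p+1)) ≤ w * w ^ (dim - (p+1)) :=
              Nat.mul_le_mul_right _ hk3
          _ = A := by
              rw [hAdef, ← pow_succ']
              congr 1
              omega
      rw [hypDist, hcardX, hr₀def]
      have hc1 : ((w:ℝ)^dim) = (((w^dim : ℕ)):ℝ) := by push_cast; ring
      rw [hc1]
      gcongr
    · intro y hy
      rw [hiff]
      intro i
      have h3 := hy i
      exact_mod_cast Nat.cast_le.2 h3
  -- blocks
  set E : Finset (Fin p → ℕ) := Fintype.piFinset (fun _ => Finset.range K) with hE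
  have hEcard : E.card = K ^ p := by
    rw [hE, Fintype.card_piFinset]
    simp
  set cE : (Fin p → ℕ) → ℕ := fun e => m - p - ∑ i, e i with hcEdef
  have hEfacts : ∀ e ∈ E, (∀ i, 2 ^ (e i + 1) ≤ w) ∧ 2 ^ (cE e) ≤ w ∧
      ((∑ i, e i) + p + cE e = m) := by
    intro e he
    rw [hE, Fintype.mem_piFinset] at he
    have he' : ∀ i, e i < K := fun i => Finset.mem_range.1 (he i)
    have hsum : (∑ i, e i) + p ≤ K * p := by
      have h1 : ∀ i ∈ Finset.univ, e i + 1 ≤ K := fun i _ => he' i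
      have h2 := Finset.sum_le_sum h1
      simp only [Finset.sum_add_distrib, Finset.sum_const, Finset.card_univ,
        Fintype.card_fin, smul_eq_mul, mul_one] at h2
      calc (∑ i, e i) + p ≤ p * K := h2
        _ = K * p := Nat.mul_comm _ _
    have hsm : (∑ i, e i) + p ≤ m := le_trans hsum hq1
    refine ⟨fun i => ?_, ?_, by show (∑ i, e i) + p + (m - p - ∑ i, e i) = m; omega⟩
    · have h3 : e i + 1 ≤ m := by
        have := he' i
        omega
      exact le_trans (Nat.pow_le_pow_right (by norm_num) h3) hm1
    · have h3 : cE e ≤ m := by show m - p - (∑ i, e i) ≤ m; omega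
      exact le_trans (Nat.pow_le_pow_right (by norm_num) h3) hm1
  -- each block lands in the disagreement region
  have hsubDIS : ∀ e ∈ E,
      (Fintype.piFinset (yR w p (cE e) e (dim := dim))).image
        (fun y => (fun a => ((y a : ℕ) : ℝ))) ⊆ DIS X V := by
    intro e he x hx
    obtain ⟨hwe, hwc, hme⟩ := hEfacts e he
    obtain ⟨y, hy, rfl⟩ := Finset.mem_image.1 hx
    obtain ⟨hrange, hprod⟩ := mem_block hdim hwe hwc hy
    have hyIc : y ∈ (Finset.Icc (fun _ => 1) (fun _ => w) : Finset (Fin dim → ℕ)) := by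
      rw [Finset.mem_Icc]
      exact ⟨fun a => (hrange a).1, fun a => (hrange a).2⟩
    have hxX : (fun a => ((y a : ℕ) : ℝ)) ∈ X := Finset.mem_image_of_mem _ hyIc
    set k : Fin (p+1) → ℕ := fun i => w + 1 - y (Fin.castLE hdim i) with hkdef
    have hk1 : ∀ i, 1 ≤ k i := by
      intro i
      have := (hrange (Fin.castLE hdim i)).2
      show 1 ≤ w + 1 - y (Fin.castLE hdim i)
      omega
    have hk2 : ∀ i, k i ≤ w := by
      intro i
      have := (hrange (Fin.castLE hdim i)).1
      show w + 1 - y (Fin.castLE hdim i) ≤ w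
      omega
    have hk3 : (∏ i, k i) ≤ w := by
      refine le_trans hprod ?_
      rw [hme]
      exact hm1
    obtain ⟨h₂, hh₂V, hev⟩ := htreeV k hk1 hk2 hk3
    have hx2 : h₂ (fun a => ((y a : ℕ) : ℝ)) = true := by
      apply hev
      intro i
      have h3 := (hrange (Fin.castLE hdim i)).2
      show w + 1 - (w + 1 - y (Fin.castLE hdim i)) ≤ y (Fin.castLE hdim i)
      omega
    rw [DIS, Finset.mem_filter]
    refine ⟨hxX, h₀, hfalseV, h₂, hh₂V, ?_⟩
    rw [hx2]
    simp
  -- counting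
  have hDcard : K ^ p * (2 ^ (m - p) * w ^ (dim - (p+1))) ≤ (DIS X V).card := by
    have hUsub : (E.biUnion fun e => Fintype.piFinset (yR w p (cE e) e (dim := dim))).image
        (fun y => (fun a => ((y a : ℕ) : ℝ))) ⊆ DIS X V := by
      rw [Finset.biUnion_image]
      exact Finset.biUnion_subset.2 hsubDIS
    have hUcard : ((E.biUnion fun e => Fintype.piFinset (yR w p (cE e) e (dim := dim))).image
        (fun y => (fun a => ((y a : ℕ) : ℝ)))).card
        = K ^ p * (2 ^ (m - p) * w ^ (dim - (p+1))) := by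
      rw [Finset.card_image_of_injective _ hinj]
      rw [Finset.card_biUnion]
      · have hconst : ∀ e ∈ E, (Fintype.piFinset (yR w p (cE e) e (dim := dim))).card
            = 2 ^ (m - p) * w ^ (dim - (p+1)) := by
          intro e he
          obtain ⟨hwe, hwc, hme⟩ := hEfacts e he
          rw [block_card hdim w (cE e) e hwe hwc]
          congr 2
          omega
        rw [Finset.sum_congr rfl hconst, Finset.sum_const, smul_eq_mul, hEcard]
      · intro e he e' he' hne
        obtain ⟨hwe, -, -⟩ := hEfacts e he
        obtain ⟨hwe', -, -⟩ := hEfacts e' he'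
        exact block_disjoint hdim hwe hwe' hne
    calc K ^ p * (2 ^ (m - p) * w ^ (dim - (p+1))) = _ := hUcard.symm
      _ ≤ (DIS X V).card := Finset.card_le_card hUsub
  -- boundedness of the sup
  have hFle : ∀ r : ℝ, 0 < r →
      ((DIS X (hypBall X (treeClass dim (p+1)) h₀ r)).card : ℝ) / (r * X.card)
        ≤ ((w:ℝ)^dim) := by
    intro r hr
    by_cases hD : DIS X (hypBall X (treeClass dim (p+1)) h₀ r) = ∅
    · rw [hD]
      simp only [Finset.card_empty, Nat.cast_zero, zero_div]
      positivity
    · obtain ⟨x, hx⟩ := Finset.nonempty_of_ne_empty hD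
      rw [DIS, Finset.mem_filter] at hx
      obtain ⟨hxX, h₁, hh₁, h₂, hh₂, hne⟩ := hx
      have hex : ∃ h ∈ hypBall X (treeClass dim (p+1)) h₀ r, h x = true := by
        by_cases hb : h₁ x = true
        · exact ⟨h₁, hh₁, hb⟩
        · refine ⟨h₂, hh₂, ?_⟩
          cases hh : h₂ x
          · rw [Bool.not_eq_true] at hb
            rw [hb, hh] at hne
            exact absurd rfl hne
          · rfl
      obtain ⟨h, ⟨hH, hdist⟩, hxs⟩ := hex
      have hone : 1 ≤ (X.filter fun z => h₀ z ≠ h z).card := by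
        refine Finset.card_pos.2 ⟨x, Finset.mem_filter.2 ⟨hxX, ?_⟩⟩
        rw [hxs, hh₀]
        simp
      have hrge : 1 ≤ r * ((w:ℝ)^dim) := by
        have h7 : hypDist X h₀ h ≤ r := hdist
        rw [hypDist, hcardX] at h7
        have h8 : (1:ℝ) / (((w^dim : ℕ)):ℝ) ≤
            ((X.filter fun z => h₀ z ≠ h z).card : ℝ) / (((w^dim:ℕ)):ℝ) := by
          gcongr
          exact_mod_cast hone
        have h9 := le_trans h8 h7
        rw [div_le_iff₀ (by positivity)] at h9
        calc (1:ℝ) ≤ r * (((w^dim:ℕ)):ℝ) := h9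
          _ = r * (w:ℝ)^dim := by push_cast; ring
      rw [hcardX]
      have hpos : (0:ℝ) < r * (((w^dim:ℕ)):ℝ) := by positivity
      rw [div_le_iff₀ hpos]
      have hDle : ((DIS X (hypBall X (treeClass dim (p+1)) h₀ r)).card : ℝ) ≤ (w:ℝ)^dim := by
        have h10 : (DIS X (hypBall X (treeClass dim (p+1)) h₀ r)).card ≤ X.card :=
          Finset.card_filter_le _ _
        rw [hcardX] at h10
        exact_mod_cast h10
      calc ((DIS X (hypBall X (treeClass dim (p+1)) h₀ r)).card : ℝ)
          ≤ (w:ℝ)^dim := hDle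
        _ = (w:ℝ)^dim * 1 := by ring
        _ ≤ (w:ℝ)^dim * (r * (((w^dim:ℕ)):ℝ)) := by
            apply mul_le_mul_of_nonneg_left _ (by positivity)
            calc (1:ℝ) ≤ r * ((w:ℝ)^dim) := hrge
              _ = r * (((w^dim:ℕ)):ℝ) := by push_cast; ring
  have hFbound : ∀ r : ℝ, (⨆ _ : 0 < r,
      ((DIS X (hypBall X (treeClass dim (p+1)) h₀ r)).card : ℝ) / (r * X.card))
        ≤ ((w:ℝ)^dim) := by
    intro r
    by_cases hr : 0 < r
    · rw [ciSup_pos hr]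
      exact hFle r hr
    · haveI : IsEmpty (0 < r) := ⟨hr⟩
      rw [Real.iSup_of_isEmpty]
      positivity
  refine le_ciSup_of_le ⟨(w:ℝ)^dim, ?_⟩ r₀ ?_
  · rintro v ⟨r, rfl⟩
    exact hFbound r
  · rw [ciSup_pos hr₀]
    -- final arithmetic
    have hlogX : Real.log (X.card : ℝ) = dim * Real.log w := by
      rw [hcardX]
      push_cast
      rw [Real.log_pow]
    have hw4R : (4:ℝ) ≤ (w:ℝ) := by
      have h1 : (4:ℕ) ≤ 2^(4*(p+1)) := by
        calc (4:ℕ) = 2^2 := by norm_num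
          _ ≤ 2^(4*(p+1)) := Nat.pow_le_pow_right (by norm_num) (by omega)
      have : (4:ℕ) ≤ w := le_trans h1 hw
      exact_mod_cast this
    have hlog4w : Real.log 4 ≤ Real.log w := Real.log_le_log (by norm_num) hw4R
    have hlogwle : Real.log w ≤ ((m:ℝ)+1) * Real.log 2 := by
      calc Real.log w ≤ Real.log ((2:ℝ)^(m+1)) :=
            Real.log_le_log hwR (by exact_mod_cast hm2.le)
        _ = ((m:ℝ)+1) * Real.log 2 := by rw [Real.log_pow]; push_cast; ring
    have hlog2lt : Real.log 2 < 0.6931471808 := Real.log_two_lt_d9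
    have hmR : (4:ℝ)*((p:ℝ)+1) ≤ (m:ℝ) := by exact_mod_cast hm4
    have hKR : (m:ℝ) ≤ (K:ℝ)*(p:ℝ) + (p:ℝ) := by exact_mod_cast hq2
    have hmain1 : Real.log w ≤ 2 * ((K:ℝ) * p) := by
      have h1 : ((m:ℝ)+1) * Real.log 2 ≤ ((m:ℝ)+1) * 0.6931471808 := by
        apply mul_le_mul_of_nonneg_left hlog2lt.le
        linarith
      linarith
    have hbase0 : 0 ≤ (dim:ℝ) * Real.log w - (dim:ℝ) * Real.log 4 := by
      have h2 := mul_le_mul_of_nonneg_left hlog4w (le_of_lt hdimR)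
      linarith
    have hpow : ((dim:ℝ) * Real.log w - (dim:ℝ) * Real.log 4) ^ p
        ≤ ((dim:ℝ) * (2 * ((K:ℝ)*p))) ^ p := by
      apply pow_le_pow_left₀ hbase0 _ p
      have h2 : Real.log w - Real.log 4 ≤ 2*((K:ℝ)*p) := by
        have h3 : 0 ≤ Real.log 4 := Real.log_nonneg (by norm_num)
        linarith
      calc (dim:ℝ)*Real.log w - (dim:ℝ)*Real.log 4
          = (dim:ℝ)*(Real.log w - Real.log 4) := by ring
        _ ≤ (dim:ℝ) * (2*((K:ℝ)*p)) := mul_le_mul_of_nonneg_left h2 hdimR.le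
    have hpowsplit : ((dim:ℝ) * (2 * ((K:ℝ)*p))) ^ p
        = (dim:ℝ)^p * ((2*p:ℕ):ℝ)^p * (K:ℝ)^p := by
      have h4 : (dim:ℝ) * (2*((K:ℝ)*p)) = ((dim:ℝ) * ((2*p:ℕ):ℝ)) * (K:ℝ) := by
        push_cast
        ring
      rw [h4, mul_pow, mul_pow]
    have hcoef : K₀ * (C * ((dim:ℝ)^p * ((2*p:ℕ):ℝ)^p)) = ((2:ℝ)^(p+1))⁻¹ := by
      rw [hK₀def]
      have hd0 : ((dim:ℝ))^p ≠ 0 := by positivity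
      have hp0 : (((2*p:ℕ)):ℝ)^p ≠ 0 := by positivity
      have h20 : ((2:ℝ))^(p+1) ≠ 0 := by positivity
      field_simp
    have hstep1 : K₀ * C * (Real.log (X.card:ℝ) - (dim:ℝ) * Real.log 4) ^ p
        ≤ (K:ℝ)^p / 2^(p+1) := by
      rw [hlogX]
      calc K₀ * C * ((dim:ℝ) * Real.log w - (dim:ℝ) * Real.log 4) ^ p
          ≤ K₀ * C * ((dim:ℝ)^p * ((2*p:ℕ):ℝ)^p * (K:ℝ)^p) := by
            rw [← hpowsplit]
            exact mul_le_mul_of_nonneg_left hpow (by positivity)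
        _ = (K₀ * (C * ((dim:ℝ)^p * ((2*p:ℕ):ℝ)^p))) * (K:ℝ)^p := by ring
        _ = ((2:ℝ)^(p+1))⁻¹ * (K:ℝ)^p := by rw [hcoef]
        _ = (K:ℝ)^p / 2^(p+1) := by ring
    have hr₀X : r₀ * (X.card : ℝ) = ((A:ℕ):ℝ) := by
      rw [hr₀def, hcardX]
      push_cast
      field_simp
    have hstep2 : (K:ℝ)^p / 2^(p+1) ≤ ((DIS X V).card : ℝ) / ((A:ℕ):ℝ) := by
      rw [div_le_div_iff₀ (by positivity) (by exact_mod_cast hApos)]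
      have hnat : K^p * A ≤ (DIS X V).card * 2^(p+1) := by
        have h1 : A = w * w^(dim-(p+1)) := by
          rw [hAdef, ← pow_succ']
          congr 1
          omega
        have h2 : (2:ℕ)^(m+1) = 2^(m-p) * 2^(p+1) := by
          rw [← pow_add]
          congr 1
          omega
        calc K^p * A = K^p * (w * w^(dim-(p+1))) := by rw [h1]
          _ ≤ K^p * (2^(m+1) * w^(dim-(p+1))) :=
              Nat.mul_le_mul_left _ (Nat.mul_le_mul_right _ hm2.le)
          _ = (K^p * (2^(m-p) * w^(dim-(p+1)))) * 2^(p+1) := by rw [h2]; ring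
          _ ≤ (DIS X V).card * 2^(p+1) := Nat.mul_le_mul_right _ hDcard
      exact_mod_cast hnat
    refine le_trans hstep1 (le_trans hstep2 ?_)
    rw [← hr₀X]


end
end
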